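/- arXiv:2105.05725 — 6 statements merged into one kernel-verified Lean document; each statement's English description precedes it below -/
import Mathlib

section
/- For perfect matchings, coalitional exchange-stability implies Pareto-optimality: if M is a perfect coalitional exchange-stable matching of a preference profile, then there is no perfect matching M' such that every agent weakly prefers M'(x) to M(x) (or has M'(x)=M(x)) and at least one agent strictly prefers M'(x) to M(x). -/
/-! Let `M'` Pareto-dominate the perfect matching `M` and put `σ = M ∘ M'`, a permutation sending
each agent `v` to the old partner of its new partner, so that `M (σ v) = M' v`. The agents whose
partner changes form a `σ`-invariant set, and on it weak improvement is strict. Hence the `σ`-cycle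
through an agent who strictly improves has length at least two, and along it every agent strictly
prefers the old partner of the next agent: an exchange-blocking coalition. -/

open Function

namespace Function

variable {α : Type*} {f : α → α} {x : α}

theorem iterate_succ_mod_minimalPeriod (n : ℕ) :
    f^[(n + 1) % minimalPeriod f x] x = f (f^[n] x) := by
  rw [iterate_mod_minimalPeriod_eq, iterate_succ_apply']

theorem two_le_minimalPeriod_of_injective [Finite α] (hf : Injective f) (hx : ¬IsFixedPt f x) :
    2 ≤ minimalPeriod f x := by
  have hpos : 0 < minimalPeriod f x :=
    minimalPeriod_pos_of_mem_periodicPts (hf.mem_periodicPts x)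
  have hne : minimalPeriod f x ≠ 1 := mt minimalPeriod_eq_one_iff_isFixedPt.mp hx
  omega

end Function

theorem Function.Involutive.mapsTo_comp_setOf_ne {V : Type*} {M M' : V → V}
    (hM : Involutive M) (hM' : Involutive M') :
    Set.MapsTo (M ∘ M') {v | M' v ≠ M v} {v | M' v ≠ M v} := by
  intro v hv hσv
  have hMσ : M ((M ∘ M') v) = M' v := hM _
  have hfix : (M ∘ M') v = v := hM'.injective (hσv.trans hMσ)
  exact hv (hM.eq_iff.mp hfix)

theorem stmt_7_general {V : Type*} [Fintype V]
    (pref : V → V → V → Prop)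
    (hirr : ∀ i a, ¬ pref i a a)
    (M : V → V)
    (hinv : ∀ v, M (M v) = v)
    (hcoal : ¬ ∃ (r : ℕ) (x : ℕ → V), 2 ≤ r ∧ Set.InjOn x (Set.Iio r) ∧
        ∀ i < r, pref (x i) (M (x ((i + 1) % r))) (M (x i))) :
    ¬ ∃ M' : V → V, (∀ v, M' (M' v) = v) ∧ (∀ v, M' v ≠ v) ∧
        (∀ v, pref v (M' v) (M v) ∨ M' v = M v) ∧ (∃ v, pref v (M' v) (M v)) := by
  rintro ⟨M', hinv', -, hweak, v₀, hv₀⟩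
  have hM : Involutive M := hinv
  have hM' : Involutive M' := hinv'
  have hσ : Injective (M ∘ M') := hM.injective.comp hM'.injective
  have hv₀_changed : M' v₀ ≠ M v₀ := fun h => hirr v₀ _ (h ▸ hv₀)
  have hv₀_moved : ¬IsFixedPt (M ∘ M') v₀ := fun h => hv₀_changed (hM.eq_iff.mp h)
  refine hcoal ⟨minimalPeriod (M ∘ M') v₀, ((M ∘ M')^[·] v₀),
    two_le_minimalPeriod_of_injective hσ hv₀_moved, iterate_injOn_Iio_minimalPeriod,
    fun i _ => ?_⟩
  have hchanged := (hM.mapsTo_comp_setOf_ne hM').iterate i hv₀_changed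
  dsimp only
  rw [iterate_succ_mod_minimalPeriod, comp_apply, hM]
  exact (hweak _).resolve_right hchanged

/-- For perfect matchings, coalitional exchange-stability implies
Pareto-optimality. -/
theorem stmt_7 {V : Type*} [Fintype V]
    (pref : V → V → V → Prop)
    (hirr : ∀ i a, ¬ pref i a a)
    (M : V → V)
    (hinv : ∀ v, M (M v) = v)
    (hperf : ∀ v, M v ≠ v)
    (hcoal : ¬ ∃ (r : ℕ) (x : ℕ → V), 2 ≤ r ∧ Set.InjOn x (Set.Iio r) ∧
        ∀ i < r, pref (x i) (M (x ((i + 1) % r))) (M (x i))) :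
    ¬ ∃ M' : V → V, (∀ v, M' (M' v) = v) ∧ (∀ v, M' v ≠ v) ∧
        (∀ v, pref v (M' v) (M v) ∨ M' v = M v) ∧ (∃ v, pref v (M' v) (M v)) :=
  stmt_7_general pref hirr M hinv hcoal
end

section
/- In the switch gadget, if a perfect matching M contains N^1 = {{α,b^0},{a^6,δ}} ∪ {{a^{z-1},b^z} : 1 ≤ z ≤ 6}, then every exchange-blocking coalition of M that involves some agent from A = {a^0,...,a^6} also involves α, and every exchange-blocking coalition involving some agent from B = {b^0,...,b^6} also involves δ. -/
/-!
In an exchange-blocking coalition every member envies another member, and an agent `x` envies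
`y` only if `x` ranks `M y` above `M x`; so the members of a coalition form a set closed under
"envies some member". Inside `A` the envy relation of `M` is acyclic: `a¹` envies only `α`,
`a³` envies `a¹, a²`, `a⁴` envies `a³, a²`, `a⁶` envies `a⁴`, while `a⁰, a², a⁵` hold their first
choice and envy nobody. Hence a coalition that enters `A` must leave it, and the only way out is
`α`. The gadget is symmetric under `aⁱ ↔ b⁶⁻ⁱ, α ↔ δ, β ↔ γ`, which gives the statement for `B`.
-/

/-- `prefListSG acc pref i l` says that agent `i`'s acceptable agents are exactly
the members of `l` and `i`'s strict preference over them is given by the order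
of `l` (earlier = preferred). -/
def prefListSG {V : Type*} [DecidableEq V] (acc : V → V → Prop) (pref : V → V → V → Prop)
    (i : V) (l : List V) : Prop :=
  (∀ v, acc i v ↔ v ∈ l) ∧
  (∀ p q, pref i p q ↔ p ∈ l ∧ q ∈ l ∧ l.idxOf p < l.idxOf q)

/-- The agents of an exchange-blocking coalition of `M` form such a set. -/
def IsEnvyClosed {V : Type*} (pref : V → V → V → Prop) (M : V → V) (C : Set V) : Prop :=
  ∀ x ∈ C, ∃ y ∈ C, pref x (M y) (M x)

section

variable {V : Type*} {pref : V → V → V → Prop}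

theorem isEnvyClosed_image_Iio {M : V → V} {r : ℕ} {ρ : ℕ → V}
    (hebc : ∀ i < r, pref (ρ i) (M (ρ ((i + 1) % r))) (M (ρ i))) :
    IsEnvyClosed pref M (ρ '' Set.Iio r) := by
  rintro _ ⟨i, hi, rfl⟩
  exact ⟨ρ ((i + 1) % r), ⟨_, Nat.mod_lt _ (Nat.zero_lt_of_lt hi), rfl⟩, hebc i hi⟩

variable [DecidableEq V] {acc : V → V → Prop}

theorem prefListSG.mem_of_pref {i p m : V} {l₁ l₂ : List V}
    (h : prefListSG acc pref i (l₁ ++ m :: l₂)) (hp : pref i p m) : p ∈ l₁ := by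
  obtain ⟨-, -, hlt⟩ := (h.2 p m).mp hp
  have hm : (l₁ ++ m :: l₂).idxOf m < l₁.length + 1 := by
    simpa using (List.prefix_append (l₁ ++ [m]) l₂).mem_iff_idxOf_lt_length m |>.mp (by simp)
  exact (List.prefix_append l₁ (m :: l₂)).mem_iff_idxOf_lt_length p |>.mpr (by omega)

namespace IsEnvyClosed

variable {M : V → V} {C : Set V}

theorem exists_partner_mem (hC : IsEnvyClosed pref M C) (hinv : ∀ v, M (M v) = v)
    {x m : V} {l₁ l₂ : List V} (hx : x ∈ C) (hm : M x = m)
    (hl : prefListSG acc pref x (l₁ ++ m :: l₂)) :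
    ∃ p ∈ l₁, M p ∈ C := by
  obtain ⟨y, hy, hxy⟩ := hC x hx
  rw [hm] at hxy
  exact ⟨M y, hl.mem_of_pref hxy, by rwa [hinv]⟩

theorem mem_of_mem_side (hC : IsEnvyClosed pref M C) (hinv : ∀ v, M (M v) = v)
    {a b : Fin 7 → V} {al be de : V}
    (ha0 : prefListSG acc pref (a 0) [b 1, be])
    (ha1 : prefListSG acc pref (a 1) [b 0, b 2, b 1])
    (ha2 : prefListSG acc pref (a 2) [b 3, b 1, b 2])
    (ha3 : prefListSG acc pref (a 3) [b 2, b 3, b 4])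
    (ha4 : prefListSG acc pref (a 4) [b 4, b 3, b 5])
    (ha5 : prefListSG acc pref (a 5) [b 6, b 4, b 5])
    (ha6 : prefListSG acc pref (a 6) [b 5, de])
    (hN1 : M al = b 0 ∧ M (a 6) = de ∧ M (a 0) = b 1 ∧ M (a 1) = b 2 ∧ M (a 2) = b 3 ∧
       M (a 3) = b 4 ∧ M (a 4) = b 5 ∧ M (a 5) = b 6)
    (z : Fin 7) (hz : a z ∈ C) : al ∈ C := by
  obtain ⟨hMal, hMa6, hMa0, hMa1, hMa2, hMa3, hMa4, hMa5⟩ := hN1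
  have hswap {u v : V} (h : M u = v) : M v = u := h ▸ hinv u
  have hA0 : a 0 ∉ C := fun h => by simpa using hC.exists_partner_mem hinv h hMa0 (l₁ := []) ha0
  have hA2 : a 2 ∉ C := fun h => by simpa using hC.exists_partner_mem hinv h hMa2 (l₁ := []) ha2
  have hA5 : a 5 ∉ C := fun h => by simpa using hC.exists_partner_mem hinv h hMa5 (l₁ := []) ha5
  have hA1 : a 1 ∈ C → al ∈ C := fun h => by
    simpa [hswap hMal] using hC.exists_partner_mem hinv h hMa1 (l₁ := [b 0]) ha1
  have hA3 : a 3 ∈ C → a 1 ∈ C := fun h => by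
    simpa [hswap hMa1, hswap hMa2, hA2] using
      hC.exists_partner_mem hinv h hMa3 (l₁ := [b 2, b 3]) ha3
  have hA4 : a 4 ∈ C → a 3 ∈ C := fun h => by
    simpa [hswap hMa3, hswap hMa2, hA2] using
      hC.exists_partner_mem hinv h hMa4 (l₁ := [b 4, b 3]) ha4
  have hA6 : a 6 ∈ C → a 4 ∈ C := fun h => by
    simpa [hswap hMa4] using hC.exists_partner_mem hinv h hMa6 (l₁ := [b 5]) ha6
  fin_cases z
  exacts [(hA0 hz).elim, hA1 hz, (hA2 hz).elim, hA1 (hA3 hz), hA1 (hA3 (hA4 hz)), (hA5 hz).elim,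
    hA1 (hA3 (hA4 (hA6 hz)))]

end IsEnvyClosed

end

theorem stmt_9_general {V : Type*} [DecidableEq V]
    (acc : V → V → Prop) (pref : V → V → V → Prop)
    (a b : Fin 7 → V) (al be ga de : V)
    (ha0 : prefListSG acc pref (a 0) [b 1, be])
    (ha1 : prefListSG acc pref (a 1) [b 0, b 2, b 1])
    (ha2 : prefListSG acc pref (a 2) [b 3, b 1, b 2])
    (ha3 : prefListSG acc pref (a 3) [b 2, b 3, b 4])
    (ha4 : prefListSG acc pref (a 4) [b 4, b 3, b 5])
    (ha5 : prefListSG acc pref (a 5) [b 6, b 4, b 5])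
    (ha6 : prefListSG acc pref (a 6) [b 5, de])
    (hb0 : prefListSG acc pref (b 0) [a 1, al])
    (hb1 : prefListSG acc pref (b 1) [a 0, a 2, a 1])
    (hb2 : prefListSG acc pref (b 2) [a 2, a 3, a 1])
    (hb3 : prefListSG acc pref (b 3) [a 4, a 3, a 2])
    (hb4 : prefListSG acc pref (b 4) [a 3, a 5, a 4])
    (hb5 : prefListSG acc pref (b 5) [a 6, a 4, a 5])
    (hb6 : prefListSG acc pref (b 6) [a 5, ga])
    (M : V → V)
    (hinv : ∀ v, M (M v) = v)
    (hN1 : M al = b 0 ∧ M (a 6) = de ∧ M (a 0) = b 1 ∧ M (a 1) = b 2 ∧ M (a 2) = b 3 ∧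
       M (a 3) = b 4 ∧ M (a 4) = b 5 ∧ M (a 5) = b 6)
    (r : ℕ) (ρ : ℕ → V)
    (hebc : ∀ i < r, pref (ρ i) (M (ρ ((i + 1) % r))) (M (ρ i))) :
    ((∃ i < r, ∃ z : Fin 7, ρ i = a z) → ∃ i < r, ρ i = al) ∧
    ((∃ i < r, ∃ z : Fin 7, ρ i = b z) → ∃ i < r, ρ i = de) := by
  have hC := isEnvyClosed_image_Iio hebc
  have hswap {u v : V} (h : M u = v) : M v = u := h ▸ hinv u
  obtain ⟨hMal, hMa6, hMa0, hMa1, hMa2, hMa3, hMa4, hMa5⟩ := hN1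
  constructor
  · rintro ⟨i, hi, z, hz⟩
    exact hC.mem_of_mem_side hinv ha0 ha1 ha2 ha3 ha4 ha5 ha6
      ⟨hMal, hMa6, hMa0, hMa1, hMa2, hMa3, hMa4, hMa5⟩ z ⟨i, hi, hz⟩
  · rintro ⟨i, hi, z, hz⟩
    exact hC.mem_of_mem_side (a := fun z => b z.rev) (b := fun z => a z.rev) hinv
      hb6 hb5 hb4 hb3 hb2 hb1 hb0
      ⟨hswap hMa6, hswap hMal, hswap hMa5, hswap hMa4, hswap hMa3, hswap hMa2, hswap hMa1,
        hswap hMa0⟩ z.rev ⟨i, hi, by simpa using hz⟩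

/-- if a perfect matching M contains N¹, every exchange-blocking coalition of M involving an agent from A also involves α, and every one involving an agent from B also involves δ. -/
theorem stmt_9 {V : Type*} [DecidableEq V]
    (acc : V → V → Prop) (pref : V → V → V → Prop)
    (a b : Fin 7 → V) (al be ga de : V)
    (hnd : ([a 0, a 1, a 2, a 3, a 4, a 5, a 6, b 0, b 1, b 2, b 3, b 4, b 5, b 6,
             al, be, ga, de] : List V).Nodup)
    (haccSym : ∀ p q, acc p q → acc q p)
    (ha0 : prefListSG acc pref (a 0) [b 1, be])
    (ha1 : prefListSG acc pref (a 1) [b 0, b 2, b 1])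
    (ha2 : prefListSG acc pref (a 2) [b 3, b 1, b 2])
    (ha3 : prefListSG acc pref (a 3) [b 2, b 3, b 4])
    (ha4 : prefListSG acc pref (a 4) [b 4, b 3, b 5])
    (ha5 : prefListSG acc pref (a 5) [b 6, b 4, b 5])
    (ha6 : prefListSG acc pref (a 6) [b 5, de])
    (hb0 : prefListSG acc pref (b 0) [a 1, al])
    (hb1 : prefListSG acc pref (b 1) [a 0, a 2, a 1])
    (hb2 : prefListSG acc pref (b 2) [a 2, a 3, a 1])
    (hb3 : prefListSG acc pref (b 3) [a 4, a 3, a 2])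
    (hb4 : prefListSG acc pref (b 4) [a 3, a 5, a 4])
    (hb5 : prefListSG acc pref (b 5) [a 6, a 4, a 5])
    (hb6 : prefListSG acc pref (b 6) [a 5, ga])
    (M : V → V)
    (hinv : ∀ v, M (M v) = v)
    (hperf : ∀ v, M v ≠ v)
    (hMacc : ∀ v, acc v (M v))
    (hN1 : M al = b 0 ∧ M (a 6) = de ∧ M (a 0) = b 1 ∧ M (a 1) = b 2 ∧ M (a 2) = b 3 ∧
       M (a 3) = b 4 ∧ M (a 4) = b 5 ∧ M (a 5) = b 6)
    (r : ℕ) (hr : 2 ≤ r) (ρ : ℕ → V)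
    (hρinj : Set.InjOn ρ (Set.Iio r))
    (hebc : ∀ i < r, pref (ρ i) (M (ρ ((i + 1) % r))) (M (ρ i))) :
    ((∃ i < r, ∃ z : Fin 7, ρ i = a z) → ∃ i < r, ρ i = al) ∧
    ((∃ i < r, ∃ z : Fin 7, ρ i = b z) → ∃ i < r, ρ i = de) :=
  stmt_9_general acc pref a b al be ga de ha0 ha1 ha2 ha3 ha4 ha5 ha6 hb0 hb1 hb2 hb3 hb4 hb5 hb6 M
    hinv hN1 r ρ hebc
end

section
/- In the switch gadget, if a perfect matching M contains N^2 = {{a^0,β},{γ,b^6}} ∪ {{a^z,b^{z-1}} : 1 ≤ z ≤ 6}, then every exchange-blocking coalition of M that involves some agent from A = {a^0,...,a^6} also involves γ, and every exchange-blocking coalition involving some agent from B = {b^0,...,b^6} also involves β. -/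
/-! Under `N²` the agents `a^1, a^3, a^6, b^0, b^3, b^5` hold their first choices and so envy
nobody, while every other agent of `A ∪ B` holds its second choice, so it envies exactly the
partner of its first choice. A coalition through `A` is therefore forced along
`a^0 → a^2 → a^4 → a^5 → γ`, and one through `B` along
`b^6 → b^4 → b^2 → b^1 → β`. -/

section CyclicSequence

variable {α : Type*} {R : α → α → Prop} {r : ℕ} {ρ : ℕ → α}

theorem exists_eq_of_forced_succ (hR : ∀ i < r, R (ρ i) (ρ ((i + 1) % r))) {x y : α}
    (hxy : ∀ z, R x z → z = y) (hx : ∃ i < r, ρ i = x) : ∃ i < r, ρ i = y := by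
  obtain ⟨i, hi, rfl⟩ := hx
  exact ⟨(i + 1) % r, Nat.mod_lt _ (by omega), hxy _ (hR i hi)⟩

theorem not_exists_eq_of_no_succ (hR : ∀ i < r, R (ρ i) (ρ ((i + 1) % r))) {x : α}
    (hx : ∀ z, ¬ R x z) : ¬ ∃ i < r, ρ i = x := by
  rintro ⟨i, hi, rfl⟩
  exact hx _ (hR i hi)

end CyclicSequence

def Envies {V : Type*} (pref : V → V → V → Prop) (M : V → V) (x y : V) : Prop :=
  pref x (M y) (M x)

section Envy

variable {V : Type*} [DecidableEq V] {acc : V → V → Prop} {pref : V → V → V → Prop}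
  {M : V → V} {x t : V} {l : List V}

theorem prefListSG.not_pref_head (hx : prefListSG acc pref x (t :: l)) (p : V) :
    ¬ pref x p t := by
  rw [hx.2, List.idxOf_cons_self]
  exact fun h => Nat.not_lt_zero _ h.2.2

theorem prefListSG.eq_head_of_pref_second {m p : V} (hx : prefListSG acc pref x (t :: m :: l))
    (htm : t ≠ m) (hp : pref x p m) : p = t := by
  rw [hx.2, List.idxOf_cons_ne _ htm, List.idxOf_cons_self] at hp
  by_contra hpt
  rw [List.idxOf_cons_ne _ (Ne.symm hpt)] at hp
  omega

theorem not_envies_of_partner_head (hx : prefListSG acc pref x (t :: l)) (hMx : M x = t)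
    (y : V) : ¬ Envies pref M x y := by
  unfold Envies
  rw [hMx]
  exact hx.not_pref_head _

theorem eq_of_envies_of_partner_second (hM : Function.Involutive M) {m w : V}
    (hx : prefListSG acc pref x (t :: m :: l)) (hMx : M x = m) (htm : t ≠ m) (hMt : M t = w)
    (y : V) (hy : Envies pref M x y) : y = w := by
  unfold Envies at hy
  rw [hMx] at hy
  rw [← hMt, ← hx.eq_head_of_pref_second htm hy, hM]

end Envy

theorem stmt_10_general {V : Type*} [DecidableEq V]
    (acc : V → V → Prop) (pref : V → V → V → Prop)
    (a b : Fin 7 → V) (al be ga de : V)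
    (hnd : ([a 0, a 1, a 2, a 3, a 4, a 5, a 6, b 0, b 1, b 2, b 3, b 4, b 5, b 6,
             al, be, ga, de] : List V).Nodup)
    (ha0 : prefListSG acc pref (a 0) [b 1, be])
    (ha1 : prefListSG acc pref (a 1) [b 0, b 2, b 1])
    (ha2 : prefListSG acc pref (a 2) [b 3, b 1, b 2])
    (ha3 : prefListSG acc pref (a 3) [b 2, b 3, b 4])
    (ha4 : prefListSG acc pref (a 4) [b 4, b 3, b 5])
    (ha5 : prefListSG acc pref (a 5) [b 6, b 4, b 5])
    (ha6 : prefListSG acc pref (a 6) [b 5, de])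
    (hb0 : prefListSG acc pref (b 0) [a 1, al])
    (hb1 : prefListSG acc pref (b 1) [a 0, a 2, a 1])
    (hb2 : prefListSG acc pref (b 2) [a 2, a 3, a 1])
    (hb3 : prefListSG acc pref (b 3) [a 4, a 3, a 2])
    (hb4 : prefListSG acc pref (b 4) [a 3, a 5, a 4])
    (hb5 : prefListSG acc pref (b 5) [a 6, a 4, a 5])
    (hb6 : prefListSG acc pref (b 6) [a 5, ga])
    (M : V → V)
    (hinv : ∀ v, M (M v) = v)
    (hN2 : M (a 0) = be ∧ M ga = b 6 ∧ M (a 1) = b 0 ∧ M (a 2) = b 1 ∧ M (a 3) = b 2 ∧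
       M (a 4) = b 3 ∧ M (a 5) = b 4 ∧ M (a 6) = b 5)
    (r : ℕ) (ρ : ℕ → V)
    (hebc : ∀ i < r, pref (ρ i) (M (ρ ((i + 1) % r))) (M (ρ i))) :
    ((∃ i < r, ∃ z : Fin 7, ρ i = a z) → ∃ i < r, ρ i = ga) ∧
    ((∃ i < r, ∃ z : Fin 7, ρ i = b z) → ∃ i < r, ρ i = be) := by
  obtain ⟨hM0, hMga, hM1, hM2, hM3, hM4, hM5, hM6⟩ := hN2
  have partner {x y : V} (h : M x = y) : M y = x := h ▸ hinv x
  have step {x t m w : V} {l : List V} (hx : prefListSG acc pref x (t :: m :: l))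
      (hMx : M x = m) (htm : t ≠ m) (hMt : M t = w) :
      (∃ i < r, ρ i = x) → ∃ i < r, ρ i = w :=
    exists_eq_of_forced_succ (R := Envies pref M) hebc
      (eq_of_envies_of_partner_second hinv hx hMx htm hMt)
  have stuck {x t : V} {l : List V} (hx : prefListSG acc pref x (t :: l)) (hMx : M x = t) :
      ¬ ∃ i < r, ρ i = x :=
    not_exists_eq_of_no_succ (R := Envies pref M) hebc (not_envies_of_partner_head hx hMx)
  have reach_a5 := step ha5 hM5 (fun h => by simp [h] at hnd) (partner hMga)
  have reach_a4 := reach_a5 ∘ step ha4 hM4 (fun h => by simp [h] at hnd) (partner hM5)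
  have reach_a2 := reach_a4 ∘ step ha2 hM2 (fun h => by simp [h] at hnd) (partner hM4)
  have reach_a0 := reach_a2 ∘ step ha0 hM0 (fun h => by simp [h] at hnd) (partner hM2)
  have reach_b1 := step hb1 (partner hM2) (fun h => by simp [h] at hnd) hM0
  have reach_b2 := reach_b1 ∘ step hb2 (partner hM3) (fun h => by simp [h] at hnd) hM2
  have reach_b4 := reach_b2 ∘ step hb4 (partner hM5) (fun h => by simp [h] at hnd) hM3
  have reach_b6 := reach_b4 ∘ step hb6 (partner hMga) (fun h => by simp [h] at hnd) hM5
  constructor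
  · rintro ⟨i, hi, z, hz⟩
    fin_cases z
    exacts [reach_a0 ⟨i, hi, hz⟩, (stuck ha1 hM1 ⟨i, hi, hz⟩).elim,
      reach_a2 ⟨i, hi, hz⟩, (stuck ha3 hM3 ⟨i, hi, hz⟩).elim,
      reach_a4 ⟨i, hi, hz⟩, reach_a5 ⟨i, hi, hz⟩, (stuck ha6 hM6 ⟨i, hi, hz⟩).elim]
  · rintro ⟨i, hi, z, hz⟩
    fin_cases z
    exacts [(stuck hb0 (partner hM1) ⟨i, hi, hz⟩).elim, reach_b1 ⟨i, hi, hz⟩,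
      reach_b2 ⟨i, hi, hz⟩, (stuck hb3 (partner hM4) ⟨i, hi, hz⟩).elim,
      reach_b4 ⟨i, hi, hz⟩, (stuck hb5 (partner hM6) ⟨i, hi, hz⟩).elim,
      reach_b6 ⟨i, hi, hz⟩]

/-- if a perfect matching M contains N², every exchange-blocking coalition of M involving an agent from A also involves γ, and every one involving an agent from B also involves β. -/
theorem stmt_10 {V : Type*} [DecidableEq V]
    (acc : V → V → Prop) (pref : V → V → V → Prop)
    (a b : Fin 7 → V) (al be ga de : V)
    (hnd : ([a 0, a 1, a 2, a 3, a 4, a 5, a 6, b 0, b 1, b 2, b 3, b 4, b 5, b 6,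
             al, be, ga, de] : List V).Nodup)
    (haccSym : ∀ p q, acc p q → acc q p)
    (ha0 : prefListSG acc pref (a 0) [b 1, be])
    (ha1 : prefListSG acc pref (a 1) [b 0, b 2, b 1])
    (ha2 : prefListSG acc pref (a 2) [b 3, b 1, b 2])
    (ha3 : prefListSG acc pref (a 3) [b 2, b 3, b 4])
    (ha4 : prefListSG acc pref (a 4) [b 4, b 3, b 5])
    (ha5 : prefListSG acc pref (a 5) [b 6, b 4, b 5])
    (ha6 : prefListSG acc pref (a 6) [b 5, de])
    (hb0 : prefListSG acc pref (b 0) [a 1, al])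
    (hb1 : prefListSG acc pref (b 1) [a 0, a 2, a 1])
    (hb2 : prefListSG acc pref (b 2) [a 2, a 3, a 1])
    (hb3 : prefListSG acc pref (b 3) [a 4, a 3, a 2])
    (hb4 : prefListSG acc pref (b 4) [a 3, a 5, a 4])
    (hb5 : prefListSG acc pref (b 5) [a 6, a 4, a 5])
    (hb6 : prefListSG acc pref (b 6) [a 5, ga])
    (M : V → V)
    (hinv : ∀ v, M (M v) = v)
    (hperf : ∀ v, M v ≠ v)
    (hMacc : ∀ v, acc v (M v))
    (hN2 : M (a 0) = be ∧ M ga = b 6 ∧ M (a 1) = b 0 ∧ M (a 2) = b 1 ∧ M (a 3) = b 2 ∧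
       M (a 4) = b 3 ∧ M (a 5) = b 4 ∧ M (a 6) = b 5)
    (r : ℕ) (hr : 2 ≤ r) (ρ : ℕ → V)
    (hρinj : Set.InjOn ρ (Set.Iio r))
    (hebc : ∀ i < r, pref (ρ i) (M (ρ ((i + 1) % r))) (M (ρ i))) :
    ((∃ i < r, ∃ z : Fin 7, ρ i = a z) → ∃ i < r, ρ i = ga) ∧
    ((∃ i < r, ∃ z : Fin 7, ρ i = b z) → ∃ i < r, ρ i = be) :=
  stmt_10_general acc pref a b al be ga de hnd ha0 ha1 ha2 ha3 ha4 ha5 ha6 hb0 hb1 hb2 hb3 hb4 hb5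
    hb6 M hinv hN2 r ρ hebc
end

section
/- In the switch gadget, if a perfect matching M contains N^D = {{α,b^0},{a^0,β},{a^6,δ},{γ,b^6},{a^1,b^2},{a^2,b^1},{a^3,b^3},{a^4,b^5},{a^5,b^4}}, then every exchange-blocking coalition of M that involves some agent from A = {a^0,...,a^6} also involves α or γ, and every exchange-blocking coalition involving some agent from B = {b^0,...,b^6} also involves β or δ. -/
theorem List.idxOf_getElem_le {α : Type*} [DecidableEq α] (l : List α) {k : ℕ}
    (hk : k < l.length) : l.idxOf l[k] ≤ k := by
  have hmem : l[k] ∈ l.take (k + 1) := by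
    rw [List.mem_iff_getElem]
    exact ⟨k, by simp [hk], by simp⟩
  have := (List.mem_take_iff_idxOf_lt (List.getElem_mem hk)).1 hmem
  omega

section Envy

variable {V : Type*} [DecidableEq V] {acc : V → V → Prop} {pref : V → V → V → Prop}

theorem prefListSG.mem_take_of_pref {i p : V} {l : List V} (h : prefListSG acc pref i l)
    {k : ℕ} (hk : k < l.length) (hp : pref i p l[k]) : p ∈ l.take k := by
  obtain ⟨hpl, -, hlt⟩ := (h.2 _ _).1 hp
  exact (List.mem_take_iff_idxOf_lt hpl).2 (hlt.trans_le (l.idxOf_getElem_le hk))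

theorem prefListSG.mem_map_take_of_envies {M : V → V} (hM : Function.Involutive M) {x y : V}
    {l : List V} (hx : prefListSG acc pref x l) {k : ℕ} (hk : k < l.length) (hMx : M x = l[k])
    (henv : pref x (M y) (M x)) : y ∈ (l.take k).map M := by
  rw [hMx] at henv
  exact List.mem_map.2 ⟨M y, hx.mem_take_of_pref hk henv, hM y⟩

end Envy

theorem exists_of_rank_descent {V ι : Type*} (f : ι → V) (rank : ι → ℕ) (T : V → Prop)
    {r : ℕ} {ρ : ℕ → V}
    (hstep : ∀ i < r, ∀ z, ρ i = f z →
      T (ρ ((i + 1) % r)) ∨ ∃ z', rank z' < rank z ∧ ρ ((i + 1) % r) = f z') :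
    (∃ i < r, ∃ z, ρ i = f z) → ∃ i < r, T (ρ i) := by
  rintro ⟨i, hi, z, hz⟩
  induction h : rank z using Nat.strong_induction_on generalizing i z with
  | _ n ih =>
    have hnext : (i + 1) % r < r := Nat.mod_lt _ (by omega)
    rcases hstep i hi z hz with hT | ⟨z', hlt, hz'⟩
    · exact ⟨_, hnext, hT⟩
    · exact ih _ (h ▸ hlt) _ hnext z' hz' rfl

section SwitchGadget

variable {V : Type*}

def ContainsND (M : V → V) (a b : Fin 7 → V) (al be ga de : V) : Prop :=
  M al = b 0 ∧ M (a 0) = be ∧ M (a 6) = de ∧ M ga = b 6 ∧ M (a 1) = b 2 ∧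
    M (a 2) = b 1 ∧ M (a 3) = b 3 ∧ M (a 4) = b 5 ∧ M (a 5) = b 4

theorem ContainsND.rev {M : V → V} (hM : Function.Involutive M) {a b : Fin 7 → V}
    {al be ga de : V} (h : ContainsND M a b al be ga de) :
    ContainsND M (b ∘ Fin.rev) (a ∘ Fin.rev) de ga be al := by
  obtain ⟨hal, ha0, ha6, hga, ha1, ha2, ha3, ha4, ha5⟩ := h
  exact ⟨hM.eq_iff.2 ha6.symm, hM.eq_iff.2 hga.symm, hM.eq_iff.2 hal.symm, hM.eq_iff.2 ha0.symm,
    hM.eq_iff.2 ha4.symm, hM.eq_iff.2 ha5.symm, hM.eq_iff.2 ha3.symm, hM.eq_iff.2 ha1.symm,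
    hM.eq_iff.2 ha2.symm⟩

/-- The length of the longest envy path from `aᶻ` to `{α, γ}` under a matching containing `N^D`. -/
def switchRank : Fin 7 → ℕ := ![4, 1, 3, 2, 3, 1, 4]

theorem exists_eq_al_or_eq_ga [DecidableEq V] {acc : V → V → Prop} {pref : V → V → V → Prop}
    {a b : Fin 7 → V} {al be ga de : V}
    (ha0 : prefListSG acc pref (a 0) [b 1, be])
    (ha1 : prefListSG acc pref (a 1) [b 0, b 2, b 1])
    (ha2 : prefListSG acc pref (a 2) [b 3, b 1, b 2])
    (ha3 : prefListSG acc pref (a 3) [b 2, b 3, b 4])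
    (ha4 : prefListSG acc pref (a 4) [b 4, b 3, b 5])
    (ha5 : prefListSG acc pref (a 5) [b 6, b 4, b 5])
    (ha6 : prefListSG acc pref (a 6) [b 5, de])
    {M : V → V} (hM : Function.Involutive M) (hND : ContainsND M a b al be ga de)
    {r : ℕ} {ρ : ℕ → V} (hebc : ∀ i < r, pref (ρ i) (M (ρ ((i + 1) % r))) (M (ρ i))) :
    (∃ i < r, ∃ z, ρ i = a z) → ∃ i < r, ρ i = al ∨ ρ i = ga := by
  obtain ⟨hMal, hMa0, hMa6, hMga, hMa1, hMa2, hMa3, hMa4, hMa5⟩ := hND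
  have hMb : M (b 0) = al ∧ M (b 1) = a 2 ∧ M (b 2) = a 1 ∧ M (b 3) = a 3 ∧ M (b 4) = a 5 ∧
      M (b 5) = a 4 ∧ M (b 6) = ga :=
    ⟨hM.eq_iff.2 hMal.symm, hM.eq_iff.2 hMa2.symm, hM.eq_iff.2 hMa1.symm, hM.eq_iff.2 hMa3.symm,
      hM.eq_iff.2 hMa5.symm, hM.eq_iff.2 hMa4.symm, hM.eq_iff.2 hMga.symm⟩
  refine exists_of_rank_descent a switchRank (fun v => v = al ∨ v = ga) fun i hi z hz => ?_
  have henv := hebc i hi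
  rw [hz] at henv
  fin_cases z
  · have h := ha0.mem_map_take_of_envies hM (k := 1) (by simp) hMa0 henv
    simp only [List.take, List.map, hMb, List.mem_singleton] at h
    exact .inr ⟨2, by decide, h⟩
  · have h := ha1.mem_map_take_of_envies hM (k := 1) (by simp) hMa1 henv
    simp only [List.take, List.map, hMb, List.mem_singleton] at h
    exact .inl (.inl h)
  · have h := ha2.mem_map_take_of_envies hM (k := 1) (by simp) hMa2 henv
    simp only [List.take, List.map, hMb, List.mem_singleton] at h
    exact .inr ⟨3, by decide, h⟩
  · have h := ha3.mem_map_take_of_envies hM (k := 1) (by simp) hMa3 henv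
    simp only [List.take, List.map, hMb, List.mem_singleton] at h
    exact .inr ⟨1, by decide, h⟩
  · have h := ha4.mem_map_take_of_envies hM (k := 2) (by simp) hMa4 henv
    simp only [List.take, List.map, hMb, List.mem_cons, List.not_mem_nil, or_false] at h
    rcases h with h | h
    · exact .inr ⟨5, by decide, h⟩
    · exact .inr ⟨3, by decide, h⟩
  · have h := ha5.mem_map_take_of_envies hM (k := 1) (by simp) hMa5 henv
    simp only [List.take, List.map, hMb, List.mem_singleton] at h
    exact .inl (.inr h)
  · have h := ha6.mem_map_take_of_envies hM (k := 1) (by simp) hMa6 henv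
    simp only [List.take, List.map, hMb, List.mem_singleton] at h
    exact .inr ⟨4, by decide, h⟩

end SwitchGadget

theorem stmt_11_general {V : Type*} [DecidableEq V]
    (acc : V → V → Prop) (pref : V → V → V → Prop)
    (a b : Fin 7 → V) (al be ga de : V)
    (ha0 : prefListSG acc pref (a 0) [b 1, be])
    (ha1 : prefListSG acc pref (a 1) [b 0, b 2, b 1])
    (ha2 : prefListSG acc pref (a 2) [b 3, b 1, b 2])
    (ha3 : prefListSG acc pref (a 3) [b 2, b 3, b 4])
    (ha4 : prefListSG acc pref (a 4) [b 4, b 3, b 5])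
    (ha5 : prefListSG acc pref (a 5) [b 6, b 4, b 5])
    (ha6 : prefListSG acc pref (a 6) [b 5, de])
    (hb0 : prefListSG acc pref (b 0) [a 1, al])
    (hb1 : prefListSG acc pref (b 1) [a 0, a 2, a 1])
    (hb2 : prefListSG acc pref (b 2) [a 2, a 3, a 1])
    (hb3 : prefListSG acc pref (b 3) [a 4, a 3, a 2])
    (hb4 : prefListSG acc pref (b 4) [a 3, a 5, a 4])
    (hb5 : prefListSG acc pref (b 5) [a 6, a 4, a 5])
    (hb6 : prefListSG acc pref (b 6) [a 5, ga])
    (M : V → V)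
    (hinv : ∀ v, M (M v) = v)
    (hND : M al = b 0 ∧ M (a 0) = be ∧ M (a 6) = de ∧ M ga = b 6 ∧ M (a 1) = b 2 ∧
       M (a 2) = b 1 ∧ M (a 3) = b 3 ∧ M (a 4) = b 5 ∧ M (a 5) = b 4)
    (r : ℕ) (ρ : ℕ → V)
    (hebc : ∀ i < r, pref (ρ i) (M (ρ ((i + 1) % r))) (M (ρ i))) :
    ((∃ i < r, ∃ z : Fin 7, ρ i = a z) → ∃ i < r, ρ i = al ∨ ρ i = ga) ∧
    ((∃ i < r, ∃ z : Fin 7, ρ i = b z) → ∃ i < r, ρ i = be ∨ ρ i = de) := by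
  refine ⟨exists_eq_al_or_eq_ga ha0 ha1 ha2 ha3 ha4 ha5 ha6 hinv hND hebc, ?_⟩
  rintro ⟨i, hi, z, hz⟩
  obtain ⟨j, hj, hρj⟩ := exists_eq_al_or_eq_ga (a := b ∘ Fin.rev) (b := a ∘ Fin.rev)
    hb6 hb5 hb4 hb3 hb2 hb1 hb0 hinv (ContainsND.rev hinv hND) hebc
    ⟨i, hi, z.rev, by simpa using hz⟩
  exact ⟨j, hj, hρj.symm⟩

/-- if a perfect matching M contains N^D, every exchange-blocking coalition of M involving an agent from A also involves α or γ, and every one involving an agent from B also involves β or δ. -/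
theorem stmt_11 {V : Type*} [DecidableEq V]
    (acc : V → V → Prop) (pref : V → V → V → Prop)
    (a b : Fin 7 → V) (al be ga de : V)
    (hnd : ([a 0, a 1, a 2, a 3, a 4, a 5, a 6, b 0, b 1, b 2, b 3, b 4, b 5, b 6,
             al, be, ga, de] : List V).Nodup)
    (haccSym : ∀ p q, acc p q → acc q p)
    (ha0 : prefListSG acc pref (a 0) [b 1, be])
    (ha1 : prefListSG acc pref (a 1) [b 0, b 2, b 1])
    (ha2 : prefListSG acc pref (a 2) [b 3, b 1, b 2])
    (ha3 : prefListSG acc pref (a 3) [b 2, b 3, b 4])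
    (ha4 : prefListSG acc pref (a 4) [b 4, b 3, b 5])
    (ha5 : prefListSG acc pref (a 5) [b 6, b 4, b 5])
    (ha6 : prefListSG acc pref (a 6) [b 5, de])
    (hb0 : prefListSG acc pref (b 0) [a 1, al])
    (hb1 : prefListSG acc pref (b 1) [a 0, a 2, a 1])
    (hb2 : prefListSG acc pref (b 2) [a 2, a 3, a 1])
    (hb3 : prefListSG acc pref (b 3) [a 4, a 3, a 2])
    (hb4 : prefListSG acc pref (b 4) [a 3, a 5, a 4])
    (hb5 : prefListSG acc pref (b 5) [a 6, a 4, a 5])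
    (hb6 : prefListSG acc pref (b 6) [a 5, ga])
    (M : V → V)
    (hinv : ∀ v, M (M v) = v)
    (hperf : ∀ v, M v ≠ v)
    (hMacc : ∀ v, acc v (M v))
    (hND : M al = b 0 ∧ M (a 0) = be ∧ M (a 6) = de ∧ M ga = b 6 ∧ M (a 1) = b 2 ∧
       M (a 2) = b 1 ∧ M (a 3) = b 3 ∧ M (a 4) = b 5 ∧ M (a 5) = b 4)
    (r : ℕ) (hr : 2 ≤ r) (ρ : ℕ → V)
    (hρinj : Set.InjOn ρ (Set.Iio r))
    (hebc : ∀ i < r, pref (ρ i) (M (ρ ((i + 1) % r))) (M (ρ i))) :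
    ((∃ i < r, ∃ z : Fin 7, ρ i = a z) → ∃ i < r, ρ i = al ∨ ρ i = ga) ∧
    ((∃ i < r, ∃ z : Fin 7, ρ i = b z) → ∃ i < r, ρ i = be ∨ ρ i = de) :=
  stmt_11_general acc pref a b al be ga de ha0 ha1 ha2 ha3 ha4 ha5 ha6 hb0 hb1 hb2 hb3 hb4 hb5 hb6 M
    hinv hND r ρ hebc
end

section
/- Six categories of perfect matchings relative to an hourglass: let H be a height-h hourglass in the acceptability graph G(P) of a profile with preference lists of length at most three, with layers (u_i, w_i) for 0 ≤ i ≤ h-1. Then every perfect matching M of P falls into exactly one of six categories according to which of the four corner agents u_0, w_0, u_{h-1}, w_{h-1} are matched askew: (I) exactly u_0 and w_{h-1} askew; (II) exactly w_0 and u_{h-1} askew; (III) exactly u_0 and w_0 askew; (IV) exactly u_{h-1} and w_{h-1} askew; (V) all four askew; (VI) none askew; and in each case all other agents of H are matched straight. -/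
/-!
A middle agent `u i` has the three neighbours `w (i-1), w i, w (i+1)` and no others, since its
degree is at most three; so its partner is one of them, and likewise for `w i`. Hence only the
four corners can be askew. A straight partner of a straight agent is itself straight, so the
involution `M` is a bijection between the straight `u`-agents and the straight `w`-agents.
Consequently as many `u`-corners as `w`-corners are askew, and the six categories are exactly the
ways of choosing equally many (none, one or two) askew corners on each side.
-/

/-- The vertex set of an hourglass with layers `(u i, w i)`, `i < h`. -/
def hgSet {V : Type*} (h : ℕ) (u w : ℕ → V) : Set V :=
  {v | ∃ i < h, v = u i ∨ v = w i}

/-- `IsHourglass G h u w`: the vertices `u 0, w 0, …, u (h-1), w (h-1)` induce an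
hourglass of height `h` in `G`: consecutive layers are completely cross-linked,
each layer is linked horizontally, and middle-layer vertices have exactly these
three neighbours inside the hourglass (corner vertices have degree at least two
inside, which is implied). -/
def IsHourglass {V : Type*} (G : SimpleGraph V) (h : ℕ) (u w : ℕ → V) : Prop :=
  2 ≤ h ∧
  Set.InjOn u (Set.Iio h) ∧ Set.InjOn w (Set.Iio h) ∧
  (∀ i < h, ∀ j < h, u i ≠ w j) ∧
  (∀ i < h, G.Adj (u i) (w i)) ∧
  (∀ i, i + 1 < h → G.Adj (u i) (w (i + 1)) ∧ G.Adj (u (i + 1)) (w i)) ∧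
  (∀ i, 1 ≤ i → i + 1 < h →
    (∀ j < h, G.Adj (u i) (w j) → j + 1 = i ∨ j = i ∨ j = i + 1) ∧
    (∀ j < h, ¬ G.Adj (u i) (u j)) ∧
    (∀ j < h, G.Adj (w i) (u j) → j + 1 = i ∨ j = i ∨ j = i + 1) ∧
    (∀ j < h, ¬ G.Adj (w i) (w j)))

/-- A maximal hourglass: no strictly larger vertex set induces an hourglass. -/
def IsMaxHourglass {V : Type*} (G : SimpleGraph V) (h : ℕ) (u w : ℕ → V) : Prop :=
  IsHourglass G h u w ∧
    ¬ ∃ (h' : ℕ) (u' w' : ℕ → V), IsHourglass G h' u' w' ∧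
        hgSet h u w ⊂ hgSet h' u' w'

/-- `u i` is matched straight by `M` (partner is `w j` with `|j - i| ≤ 1`,
`j` within the layer range). -/
def StraightU {V : Type*} (h : ℕ) (u w : ℕ → V) (M : V → V) (i : ℕ) : Prop :=
  M (u i) = w i ∨ (i + 1 < h ∧ M (u i) = w (i + 1)) ∨ (1 ≤ i ∧ M (u i) = w (i - 1))

/-- `w i` is matched straight by `M`. -/
def StraightW {V : Type*} (h : ℕ) (u w : ℕ → V) (M : V → V) (i : ℕ) : Prop :=
  M (w i) = u i ∨ (i + 1 < h ∧ M (w i) = u (i + 1)) ∨ (1 ≤ i ∧ M (w i) = u (i - 1))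

open Finset

lemma Function.Involutive.card_eq_of_mapsTo {α : Type*} {f : α → α} (hf : Function.Involutive f)
    {s t : Finset α} (hst : Set.MapsTo f s t) (hts : Set.MapsTo f t s) : #s = #t :=
  le_antisymm (card_le_card_of_injOn f hst hf.injective.injOn)
    (card_le_card_of_injOn f hts hf.injective.injOn)

lemma Finset.card_filter_not_eq_of_card_filter_eq {α : Type*} {s : Finset α} {p q : α → Prop}
    [DecidablePred p] [DecidablePred q] (h : #(s.filter p) = #(s.filter q)) :
    #(s.filter (¬ p ·)) = #(s.filter (¬ q ·)) := by
  have hp := card_filter_add_card_filter_not (s := s) p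
  have hq := card_filter_add_card_filter_not (s := s) q
  omega

lemma card_filter_not_range_of_forall_interior {p : ℕ → Prop} [DecidablePred p] {h : ℕ}
    (hh : 2 ≤ h) (hp : ∀ i, 1 ≤ i → i + 1 < h → p i) :
    #((range h).filter (¬ p ·)) = (if ¬ p 0 then 1 else 0) + (if ¬ p (h - 1) then 1 else 0) := by
  have hcorners : (range h).filter (¬ p ·) = ({0, h - 1} : Finset ℕ).filter (¬ p ·) := by
    ext i
    simp only [mem_filter, mem_range, mem_insert, mem_singleton]
    constructor
    · rintro ⟨hi, hpi⟩
      refine ⟨?_, hpi⟩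
      by_contra hcorner
      exact hpi (hp i (by omega) (by omega))
    · rintro ⟨hi, hpi⟩
      exact ⟨by omega, hpi⟩
  rw [hcorners, card_filter, sum_pair (by omega)]

lemma SimpleGraph.eq_or_eq_or_eq_of_adj_of_degree_le_three {V : Type*} [Fintype V]
    {G : SimpleGraph V} [DecidableRel G.Adj] {v a b c x : V} (hdeg : G.degree v ≤ 3)
    (hab : a ≠ b) (hac : a ≠ c) (hbc : b ≠ c)
    (ha : G.Adj v a) (hb : G.Adj v b) (hc : G.Adj v c) (hx : G.Adj v x) :
    x = a ∨ x = b ∨ x = c := by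
  classical
  have hsub : ({a, b, c} : Finset V) ⊆ G.neighborFinset v := by
    simp [insert_subset_iff, ha, hb, hc]
  have hcard : #({a, b, c} : Finset V) = 3 := card_eq_three.mpr ⟨a, b, c, hab, hac, hbc, rfl⟩
  have heq : ({a, b, c} : Finset V) = G.neighborFinset v :=
    eq_of_subset_of_card_le hsub (by rwa [hcard, card_neighborFinset_eq_degree])
  simpa [← heq] using (G.mem_neighborFinset v x).mpr hx

section Straight

variable {V : Type*} {h : ℕ} {u w : ℕ → V} {M : V → V}

lemma StraightU.exists_straightW_partner (hinv : Function.Involutive M) {i : ℕ} (hi : i < h)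
    (hs : StraightU h u w M i) : ∃ j < h, M (u i) = w j ∧ StraightW h u w M j := by
  rcases hs with e | ⟨hlt, e⟩ | ⟨h1, e⟩
  · exact ⟨i, hi, e, Or.inl (by rw [← e, hinv])⟩
  · exact ⟨i + 1, hlt, e, Or.inr (Or.inr ⟨by omega, by rw [← e, hinv, Nat.add_sub_cancel]⟩)⟩
  · exact ⟨i - 1, by omega, e,
      Or.inr (Or.inl ⟨by omega, by rw [Nat.sub_add_cancel h1, ← e, hinv]⟩)⟩

open Classical in
lemma mapsTo_image_straightU (hinv : Function.Involutive M) :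
    Set.MapsTo M (((range h).filter (StraightU h u w M)).image u)
      (((range h).filter (StraightW h u w M)).image w) := by
  intro x hx
  simp only [coe_image, coe_filter, mem_range, Set.mem_image] at hx ⊢
  obtain ⟨i, ⟨hi, hs⟩, rfl⟩ := hx
  obtain ⟨j, hj, e, hs'⟩ := hs.exists_straightW_partner hinv hi
  exact ⟨j, ⟨hj, hs'⟩, e.symm⟩

end Straight

namespace IsHourglass

variable {V : Type*} {G : SimpleGraph V} {h : ℕ} {u w : ℕ → V}

lemma swap (hH : IsHourglass G h u w) : IsHourglass G h w u := by
  obtain ⟨hh, hu, hw, huw, hlayer, hcross, hmid⟩ := hH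
  refine ⟨hh, hw, hu, fun i hi j hj => (huw j hj i hi).symm, fun i hi => (hlayer i hi).symm,
    fun i hi => ⟨(hcross i hi).2.symm, (hcross i hi).1.symm⟩, fun i h1 h2 => ?_⟩
  obtain ⟨hwu, huu, huw', hww⟩ := hmid i h1 h2
  exact ⟨huw', hww, hwu, huu⟩

lemma straightU_of_interior [Fintype V] [DecidableRel G.Adj] (hH : IsHourglass G h u w)
    (hdeg : ∀ v, G.degree v ≤ 3) {M : V → V} (hMadj : ∀ v, G.Adj v (M v))
    {i : ℕ} (h1 : 1 ≤ i) (h2 : i + 1 < h) : StraightU h u w M i := by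
  obtain ⟨-, -, hw, -, hlayer, hcross, -⟩ := hH
  have hwne : ∀ {j k}, j < h → k < h → j ≠ k → w j ≠ w k :=
    fun hj hk hjk e => hjk (hw (Set.mem_Iio.mpr hj) (Set.mem_Iio.mpr hk) e)
  have hprev : G.Adj (u i) (w (i - 1)) := by
    simpa [Nat.sub_add_cancel h1] using (hcross (i - 1) (by omega)).2
  rcases G.eq_or_eq_or_eq_of_adj_of_degree_le_three (hdeg (u i))
      (hwne (by omega) (by omega) (by omega)) (hwne (by omega) h2 (by omega))
      (hwne (by omega) h2 (by omega)) hprev (hlayer i (by omega)) (hcross i h2).1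
      (hMadj (u i)) with e | e | e
  · exact Or.inr (Or.inr ⟨h1, e⟩)
  · exact Or.inl e
  · exact Or.inr (Or.inl ⟨h2, e⟩)

open Classical in
lemma card_filter_straightU_eq (hH : IsHourglass G h u w) {M : V → V}
    (hinv : Function.Involutive M) :
    #((range h).filter (StraightU h u w M)) = #((range h).filter (StraightW h u w M)) := by
  obtain ⟨-, hu, hw, -⟩ := hH
  have hrange (p : ℕ → Prop) [DecidablePred p] : ↑((range h).filter p) ⊆ Set.Iio h :=
    fun _ hi => mem_range.mp (mem_filter.mp hi).1
  rw [← card_image_of_injOn (hu.mono (hrange _)), ← card_image_of_injOn (hw.mono (hrange _))]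
  exact hinv.card_eq_of_mapsTo (mapsTo_image_straightU hinv)
    (mapsTo_image_straightU (u := w) (w := u) hinv)

end IsHourglass

lemma six_categories_of_card_askew_eq {a b c d : Prop} [Decidable a] [Decidable b]
    [Decidable c] [Decidable d]
    (h : (if ¬ a then 1 else 0) + (if ¬ c then 1 else 0) =
      (if ¬ b then 1 else 0) + (if ¬ d then 1 else 0)) :
    (¬ a ∧ ¬ d ∧ b ∧ c) ∨ (¬ b ∧ ¬ c ∧ a ∧ d) ∨ (¬ a ∧ ¬ b ∧ c ∧ d) ∨
      (¬ c ∧ ¬ d ∧ a ∧ b) ∨ (¬ a ∧ ¬ b ∧ ¬ c ∧ ¬ d) ∨ (a ∧ b ∧ c ∧ d) := by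
  by_cases a <;> by_cases b <;> by_cases c <;> by_cases d <;> simp_all

theorem stmt_12_general {V : Type*} [Fintype V] (G : SimpleGraph V) [DecidableRel G.Adj]
    (hdeg : ∀ v : V, G.degree v ≤ 3)
    (h : ℕ) (u w : ℕ → V) (hH : IsHourglass G h u w)
    (M : V → V)
    (hinv : ∀ v, M (M v) = v)
    (hMadj : ∀ v, G.Adj v (M v)) :
    (∀ i, 1 ≤ i → i + 1 < h → StraightU h u w M i ∧ StraightW h u w M i) ∧
    ((¬ StraightU h u w M 0 ∧ ¬ StraightW h u w M (h - 1) ∧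
        StraightW h u w M 0 ∧ StraightU h u w M (h - 1)) ∨
     (¬ StraightW h u w M 0 ∧ ¬ StraightU h u w M (h - 1) ∧
        StraightU h u w M 0 ∧ StraightW h u w M (h - 1)) ∨
     (¬ StraightU h u w M 0 ∧ ¬ StraightW h u w M 0 ∧
        StraightU h u w M (h - 1) ∧ StraightW h u w M (h - 1)) ∨
     (¬ StraightU h u w M (h - 1) ∧ ¬ StraightW h u w M (h - 1) ∧
        StraightU h u w M 0 ∧ StraightW h u w M 0) ∨
     (¬ StraightU h u w M 0 ∧ ¬ StraightW h u w M 0 ∧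
        ¬ StraightU h u w M (h - 1) ∧ ¬ StraightW h u w M (h - 1)) ∨
     (StraightU h u w M 0 ∧ StraightW h u w M 0 ∧
        StraightU h u w M (h - 1) ∧ StraightW h u w M (h - 1))) := by
  classical
  have hmid : ∀ i, 1 ≤ i → i + 1 < h → StraightU h u w M i ∧ StraightW h u w M i :=
    fun i h1 h2 => ⟨hH.straightU_of_interior hdeg hMadj h1 h2,
      hH.swap.straightU_of_interior hdeg hMadj h1 h2⟩
  refine ⟨hmid, six_categories_of_card_askew_eq ?_⟩
  rw [← card_filter_not_range_of_forall_interior hH.1 fun i h1 h2 => (hmid i h1 h2).1,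
    ← card_filter_not_range_of_forall_interior hH.1 fun i h1 h2 => (hmid i h1 h2).2]
  exact card_filter_not_eq_of_card_filter_eq (hH.card_filter_straightU_eq hinv)

/-- every perfect matching of a profile whose acceptability graph
has maximum degree three matches all middle-layer agents of an hourglass
straight, and falls into exactly one of six categories according to which of the
four corner agents are matched askew: (I) exactly `u 0` and `w (h-1)`;
(II) exactly `w 0` and `u (h-1)`; (III) exactly `u 0` and `w 0`;
(IV) exactly `u (h-1)` and `w (h-1)`; (V) all four; (VI) none. -/
theorem stmt_12 {V : Type*} [Fintype V] (G : SimpleGraph V) [DecidableRel G.Adj]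
    (hdeg : ∀ v : V, G.degree v ≤ 3)
    (h : ℕ) (u w : ℕ → V) (hH : IsHourglass G h u w)
    (M : V → V)
    (hinv : ∀ v, M (M v) = v)
    (hperf : ∀ v, M v ≠ v)
    (hMadj : ∀ v, G.Adj v (M v)) :
    (∀ i, 1 ≤ i → i + 1 < h → StraightU h u w M i ∧ StraightW h u w M i) ∧
    ((¬ StraightU h u w M 0 ∧ ¬ StraightW h u w M (h - 1) ∧
        StraightW h u w M 0 ∧ StraightU h u w M (h - 1)) ∨
     (¬ StraightW h u w M 0 ∧ ¬ StraightU h u w M (h - 1) ∧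
        StraightU h u w M 0 ∧ StraightW h u w M (h - 1)) ∨
     (¬ StraightU h u w M 0 ∧ ¬ StraightW h u w M 0 ∧
        StraightU h u w M (h - 1) ∧ StraightW h u w M (h - 1)) ∨
     (¬ StraightU h u w M (h - 1) ∧ ¬ StraightW h u w M (h - 1) ∧
        StraightU h u w M 0 ∧ StraightW h u w M 0) ∨
     (¬ StraightU h u w M 0 ∧ ¬ StraightW h u w M 0 ∧
        ¬ StraightU h u w M (h - 1) ∧ ¬ StraightW h u w M (h - 1)) ∨
     (StraightU h u w M 0 ∧ StraightW h u w M 0 ∧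
        StraightU h u w M (h - 1) ∧ StraightW h u w M (h - 1))) :=
  stmt_12_general G hdeg h u w hH M hinv hMadj
end

section
/- Overlapping hourglasses have equal small height: if H_1 and H_2 are distinct maximal hourglasses in a graph G of maximum degree three with heights h_1 and h_2 and V(H_1) ∩ V(H_2) ≠ ∅, then either h_1 = h_2 = 2 or h_1 = h_2 = 3. -/
set_option linter.unusedSectionVars false

namespace HGaux

variable {V : Type*} {G : SimpleGraph V} {h h1 h2 : ℕ} {u w u1 w1 u2 w2 : ℕ → V}

theorem memU (hi : i < h) : u i ∈ hgSet h u w := ⟨i, hi, Or.inl rfl⟩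
theorem memW (hi : i < h) : w i ∈ hgSet h u w := ⟨i, hi, Or.inr rfl⟩

theorem hg2 (H : IsHourglass G h u w) : 2 ≤ h := H.1

theorem uNe (H : IsHourglass G h u w) {i j : ℕ} (hi : i < h) (hj : j < h) (hij : i ≠ j) :
    u i ≠ u j := fun e => hij (H.2.1 hi hj e)

theorem wNe (H : IsHourglass G h u w) {i j : ℕ} (hi : i < h) (hj : j < h) (hij : i ≠ j) :
    w i ≠ w j := fun e => hij (H.2.2.1 hi hj e)

theorem uwNe (H : IsHourglass G h u w) {i j : ℕ} (hi : i < h) (hj : j < h) :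
    u i ≠ w j := H.2.2.2.1 i hi j hj

theorem wuNe (H : IsHourglass G h u w) {i j : ℕ} (hi : i < h) (hj : j < h) :
    w i ≠ u j := (H.2.2.2.1 j hj i hi).symm

theorem rung (H : IsHourglass G h u w) {i : ℕ} (hi : i < h) : G.Adj (u i) (w i) :=
  H.2.2.2.2.1 i hi

theorem crossL (H : IsHourglass G h u w) {i : ℕ} (hi : i + 1 < h) : G.Adj (u i) (w (i + 1)) :=
  (H.2.2.2.2.2.1 i hi).1

theorem crossR (H : IsHourglass G h u w) {i : ℕ} (hi : i + 1 < h) : G.Adj (u (i + 1)) (w i) :=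
  (H.2.2.2.2.2.1 i hi).2

theorem midUW (H : IsHourglass G h u w) {i j : ℕ} (hi1 : 1 ≤ i) (hi2 : i + 1 < h)
    (hj : j < h) (ha : G.Adj (u i) (w j)) : j + 1 = i ∨ j = i ∨ j = i + 1 :=
  (H.2.2.2.2.2.2 i hi1 hi2).1 j hj ha

theorem midUU (H : IsHourglass G h u w) {i j : ℕ} (hi1 : 1 ≤ i) (hi2 : i + 1 < h)
    (hj : j < h) : ¬ G.Adj (u i) (u j) :=
  (H.2.2.2.2.2.2 i hi1 hi2).2.1 j hj

theorem midWU (H : IsHourglass G h u w) {i j : ℕ} (hi1 : 1 ≤ i) (hi2 : i + 1 < h)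
    (hj : j < h) (ha : G.Adj (w i) (u j)) : j + 1 = i ∨ j = i ∨ j = i + 1 :=
  (H.2.2.2.2.2.2 i hi1 hi2).2.2.1 j hj ha

theorem midWW (H : IsHourglass G h u w) {i j : ℕ} (hi1 : 1 ≤ i) (hi2 : i + 1 < h)
    (hj : j < h) : ¬ G.Adj (w i) (w j) :=
  (H.2.2.2.2.2.2 i hi1 hi2).2.2.2 j hj

variable [Fintype V] [DecidableRel G.Adj]

theorem three_nbrs (hdeg : ∀ v : V, G.degree v ≤ 3) {v a b c x : V}
    (hab : a ≠ b) (hac : a ≠ c) (hbc : b ≠ c)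
    (ha : G.Adj v a) (hb : G.Adj v b) (hc : G.Adj v c) (hx : G.Adj v x) :
    x = a ∨ x = b ∨ x = c := by
  classical
  by_contra hcon
  push_neg at hcon
  obtain ⟨h1, h2, h3⟩ := hcon
  have hsub : ({x, a, b, c} : Finset V) ⊆ G.neighborFinset v := by
    intro y hy
    simp only [Finset.mem_insert, Finset.mem_singleton] at hy
    rw [SimpleGraph.mem_neighborFinset]
    rcases hy with rfl|rfl|rfl|rfl <;> assumption
  have hcard : ({x, a, b, c} : Finset V).card = 4 := by
    rw [Finset.card_insert_of_notMem (by simp [h1, h2, h3]),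
      Finset.card_insert_of_notMem (by simp [hab, hac]),
      Finset.card_insert_of_notMem (by simp [hbc]), Finset.card_singleton]
  have hle := Finset.card_le_card hsub
  have hd : (G.neighborFinset v).card ≤ 3 := hdeg v
  omega

/-- Full neighbourhood of a middle `u`-vertex. -/
theorem nbrU (hdeg : ∀ v : V, G.degree v ≤ 3) (H : IsHourglass G h u w) {i : ℕ}
    (hi1 : 1 ≤ i) (hi2 : i + 1 < h) {x : V} (hx : G.Adj (u i) x) :
    x = w (i - 1) ∨ x = w i ∨ x = w (i + 1) := by
  have e1 : i - 1 + 1 = i := by omega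
  have a1 : G.Adj (u i) (w (i - 1)) := by
    have := crossR H (i := i - 1) (by omega)
    rwa [e1] at this
  exact three_nbrs hdeg (wNe H (by omega) (by omega) (by omega))
    (wNe H (by omega) (by omega) (by omega)) (wNe H (by omega) (by omega) (by omega))
    a1 (rung H (by omega)) (crossL H hi2) hx

/-- Full neighbourhood of a middle `w`-vertex. -/
theorem nbrW (hdeg : ∀ v : V, G.degree v ≤ 3) (H : IsHourglass G h u w) {i : ℕ}
    (hi1 : 1 ≤ i) (hi2 : i + 1 < h) {x : V} (hx : G.Adj (w i) x) :
    x = u (i - 1) ∨ x = u i ∨ x = u (i + 1) := by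
  have e1 : i - 1 + 1 = i := by omega
  have a1 : G.Adj (w i) (u (i - 1)) := by
    have := (crossL H (i := i - 1) (by omega)).symm
    rwa [e1] at this
  exact three_nbrs hdeg (uNe H (by omega) (by omega) (by omega))
    (uNe H (by omega) (by omega) (by omega)) (uNe H (by omega) (by omega) (by omega))
    a1 (rung H (by omega)).symm (crossR H hi2).symm hx

/-- Vertices of the hourglass adjacent to `w 0`. -/
theorem adjW0 (H : IsHourglass G h u w) {v : V} (hv : v ∈ hgSet h u w)
    (hadj : G.Adj v (w 0)) : v = u 0 ∨ v = u 1 ∨ v = u (h - 1) ∨ v = w (h - 1) := by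
  obtain ⟨i, hi, rfl | rfl⟩ := hv
  · by_cases hm : 1 ≤ i ∧ i + 1 < h
    · have := midUW H hm.1 hm.2 (j := 0) (by omega) hadj
      have hi1 : i = 1 := by omega
      subst hi1; right; left; rfl
    · have : i = 0 ∨ i = h - 1 := by omega
      rcases this with rfl | rfl
      · left; rfl
      · right; right; left; rfl
  · by_cases hm : 1 ≤ i ∧ i + 1 < h
    · exact absurd hadj (midWW H hm.1 hm.2 (by omega))
    · have : i = 0 ∨ i = h - 1 := by omega
      rcases this with rfl | rfl
      · exact absurd rfl hadj.ne
      · right; right; right; rfl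

/-- Vertices of the hourglass adjacent to `u 0`. -/
theorem adjU0 (H : IsHourglass G h u w) {v : V} (hv : v ∈ hgSet h u w)
    (hadj : G.Adj v (u 0)) : v = w 0 ∨ v = w 1 ∨ v = u (h - 1) ∨ v = w (h - 1) := by
  obtain ⟨i, hi, rfl | rfl⟩ := hv
  · by_cases hm : 1 ≤ i ∧ i + 1 < h
    · exact absurd hadj (midUU H hm.1 hm.2 (by omega))
    · have : i = 0 ∨ i = h - 1 := by omega
      rcases this with rfl | rfl
      · exact absurd rfl hadj.ne
      · right; right; left; rfl
  · by_cases hm : 1 ≤ i ∧ i + 1 < h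
    · have := midWU H hm.1 hm.2 (j := 0) (by omega) hadj
      have hi1 : i = 1 := by omega
      subst hi1; right; left; rfl
    · have : i = 0 ∨ i = h - 1 := by omega
      rcases this with rfl | rfl
      · left; rfl
      · right; right; right; rfl





theorem swap_hg (H : IsHourglass G h u w) : IsHourglass G h w u := by
  obtain ⟨h2le, iU, iW, nUW, rg, cr, mid⟩ := H
  refine ⟨h2le, iW, iU, fun i hi j hj => (nUW j hj i hi).symm,
    fun i hi => (rg i hi).symm,
    fun i hi => ⟨((cr i hi).2).symm, ((cr i hi).1).symm⟩, fun i hi1 hi2 => ?_⟩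
  obtain ⟨m1, m2, m3, m4⟩ := mid i hi1 hi2
  exact ⟨m3, m4, m1, m2⟩

theorem swap_hgSet : hgSet h w u = hgSet h u w := by
  ext v
  constructor <;> rintro ⟨i, hi, hv | hv⟩
  · exact ⟨i, hi, Or.inr hv⟩
  · exact ⟨i, hi, Or.inl hv⟩
  · exact ⟨i, hi, Or.inr hv⟩
  · exact ⟨i, hi, Or.inl hv⟩

theorem swap_max (Hm : IsMaxHourglass G h u w) : IsMaxHourglass G h w u :=
  ⟨swap_hg Hm.1, by rw [swap_hgSet]; exact Hm.2⟩

theorem rev_hg (H : IsHourglass G h u w) :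
    IsHourglass G h (fun i => u (h - 1 - i)) (fun i => w (h - 1 - i)) := by
  obtain ⟨h2le, iU, iW, nUW, rg, cr, mid⟩ := H
  refine ⟨h2le, ?_, ?_, ?_, ?_, ?_, ?_⟩
  · intro i hi j hj e
    have hi' : i < h := hi
    have hj' : j < h := hj
    have := iU (show h - 1 - i ∈ Set.Iio h by simp; omega)
      (show h - 1 - j ∈ Set.Iio h by simp; omega) e
    omega
  · intro i hi j hj e
    have hi' : i < h := hi
    have hj' : j < h := hj
    have := iW (show h - 1 - i ∈ Set.Iio h by simp; omega)
      (show h - 1 - j ∈ Set.Iio h by simp; omega) e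
    omega
  · intro i hi j hj
    exact nUW _ (by omega) _ (by omega)
  · intro i hi
    exact rg _ (by omega)
  · intro i hi
    have e1 : h - 1 - i = (h - 1 - (i + 1)) + 1 := by omega
    constructor
    · show G.Adj (u (h - 1 - i)) (w (h - 1 - (i + 1)))
      rw [e1]; exact (cr _ (by omega)).2
    · show G.Adj (u (h - 1 - (i + 1))) (w (h - 1 - i))
      rw [e1]; exact (cr _ (by omega)).1
  · intro i hi1 hi2
    obtain ⟨m1, m2, m3, m4⟩ := mid (h - 1 - i) (by omega) (by omega)
    refine ⟨fun j hj ha => ?_, fun j hj => m2 _ (by omega), fun j hj ha => ?_,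
      fun j hj => m4 _ (by omega)⟩
    · have := m1 (h - 1 - j) (by omega) ha
      omega
    · have := m3 (h - 1 - j) (by omega) ha
      omega

theorem rev_hgSet : hgSet h (fun i => u (h - 1 - i)) (fun i => w (h - 1 - i)) = hgSet h u w := by
  ext v
  constructor <;> rintro ⟨i, hi, hv | hv⟩
  · exact ⟨h - 1 - i, by omega, Or.inl hv⟩
  · exact ⟨h - 1 - i, by omega, Or.inr hv⟩
  · refine ⟨h - 1 - i, by omega, Or.inl ?_⟩
    simp only []
    rw [show h - 1 - (h - 1 - i) = i by omega]
    exact hv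
  · refine ⟨h - 1 - i, by omega, Or.inr ?_⟩
    simp only []
    rw [show h - 1 - (h - 1 - i) = i by omega]
    exact hv

theorem rev_max (Hm : IsMaxHourglass G h u w) :
    IsMaxHourglass G h (fun i => u (h - 1 - i)) (fun i => w (h - 1 - i)) :=
  ⟨rev_hg Hm.1, by rw [rev_hgSet]; exact Hm.2⟩

theorem sub_false (Hm1 : IsMaxHourglass G h1 u1 w1) (H2 : IsHourglass G h2 u2 w2)
    (hne : hgSet h1 u1 w1 ≠ hgSet h2 u2 w2) (hss : hgSet h1 u1 w1 ⊆ hgSet h2 u2 w2) :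
    False :=
  Hm1.2 ⟨h2, u2, w2, H2, hss.ssubset_of_ne hne⟩

/-- Re-pairing of a height-2 hourglass along the diagonals. -/
theorem repair_hg (H : IsHourglass G 2 u w) :
    IsHourglass G 2 u (fun i => w (1 - i)) := by
  obtain ⟨h2le, iU, iW, nUW, rg, cr, mid⟩ := H
  refine ⟨le_refl 2, iU, ?_, ?_, ?_, ?_, ?_⟩
  · intro i hi j hj e
    have hi' : i < 2 := hi
    have hj' : j < 2 := hj
    have := iW (show 1 - i ∈ Set.Iio 2 by simp)
      (show 1 - j ∈ Set.Iio 2 by simp) e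
    omega
  · intro i hi j hj
    exact nUW _ hi _ (by omega)
  · intro i hi
    interval_cases i
    · exact (cr 0 (by omega)).1
    · exact (cr 0 (by omega)).2
  · intro i hi
    have : i = 0 := by omega
    subst this
    exact ⟨rg 0 (by omega), rg 1 (by omega)⟩
  · intro i hi1 hi2
    omega

theorem repair_hgSet : hgSet 2 u (fun i => w (1 - i)) = hgSet 2 u w := by
  ext v
  constructor <;> rintro ⟨i, hi, hv | hv⟩
  · exact ⟨i, hi, Or.inl hv⟩
  · exact ⟨1 - i, by omega, Or.inr hv⟩
  · exact ⟨i, hi, Or.inl hv⟩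
  · refine ⟨1 - i, by omega, Or.inr ?_⟩
    simp only []
    rw [show 1 - (1 - i) = i by omega]
    exact hv

theorem repair_max (Hm : IsMaxHourglass G 2 u w) :
    IsMaxHourglass G 2 u (fun i => w (1 - i)) :=
  ⟨repair_hg Hm.1, by rw [repair_hgSet]; exact Hm.2⟩


theorem extend_false {V : Type*} [Fintype V] {G : SimpleGraph V} [DecidableRel G.Adj]
    {h : ℕ} {u w : ℕ → V}
    (hdeg : ∀ v : V, G.degree v ≤ 3) (Hm : IsMaxHourglass G h u w)
    {a b : V} (hab : G.Adj a b) (hbw : G.Adj b (w 0)) (hau : G.Adj a (u 0))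
    (ha : a ∉ hgSet h u w) (hb : b ∉ hgSet h u w) : False := by
  classical
  obtain ⟨H, hmax⟩ := Hm
  have h2le := hg2 H
  have hane : ∀ i, i < h → a ≠ u i := fun i hi e => ha ⟨i, hi, Or.inl e⟩
  have hanw : ∀ i, i < h → a ≠ w i := fun i hi e => ha ⟨i, hi, Or.inr e⟩
  have hbne : ∀ i, i < h → b ≠ u i := fun i hi e => hb ⟨i, hi, Or.inl e⟩
  have hbnw : ∀ i, i < h → b ≠ w i := fun i hi e => hb ⟨i, hi, Or.inr e⟩
  have nbrU0 : ∀ x, G.Adj (u 0) x → x = a ∨ x = w 0 ∨ x = w 1 := fun x hx =>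
    three_nbrs hdeg (hanw 0 (by omega)) (hanw 1 (by omega))
      (wNe H (by omega) (by omega) (by omega)) hau.symm (rung H (by omega))
      (crossL H (by omega)) hx
  have nbrW0 : ∀ x, G.Adj (w 0) x → x = b ∨ x = u 0 ∨ x = u 1 := fun x hx =>
    three_nbrs hdeg (hbne 0 (by omega)) (hbne 1 (by omega))
      (uNe H (by omega) (by omega) (by omega)) hbw.symm (rung H (by omega)).symm
      (crossR H (by omega)).symm hx
  set u' : ℕ → V := fun i => if i = 0 then b else u (i - 1) with hu'def
  set w' : ℕ → V := fun i => if i = 0 then a else w (i - 1) with hw'def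
  have hu'0 : u' 0 = b := rfl
  have hw'0 : w' 0 = a := rfl
  have hu's : ∀ i, 1 ≤ i → u' i = u (i - 1) := by
    intro i hi; simp only [hu'def]; rw [if_neg (by omega : ¬ i = 0)]
  have hw's : ∀ i, 1 ≤ i → w' i = w (i - 1) := by
    intro i hi; simp only [hw'def]; rw [if_neg (by omega : ¬ i = 0)]
  have H' : IsHourglass G (h + 1) u' w' := by
    refine ⟨by omega, ?_, ?_, ?_, ?_, ?_, ?_⟩
    · -- InjOn u'
      intro i hi j hj e
      have hi' : i < h + 1 := hi
      have hj' : j < h + 1 := hj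
      rcases Nat.eq_zero_or_pos i with rfl | hipos <;> rcases Nat.eq_zero_or_pos j with rfl | hjpos
      · rfl
      · rw [hu'0, hu's j (by omega)] at e; exact absurd e (hbne _ (by omega))
      · rw [hu'0, hu's i (by omega)] at e; exact absurd e.symm (hbne _ (by omega))
      · rw [hu's i (by omega), hu's j (by omega)] at e
        have := H.2.1 (show i - 1 ∈ Set.Iio h by simp; omega)
          (show j - 1 ∈ Set.Iio h by simp; omega) e
        omega
    · -- InjOn w'
      intro i hi j hj e
      have hi' : i < h + 1 := hi
      have hj' : j < h + 1 := hj
      rcases Nat.eq_zero_or_pos i with rfl | hipos <;> rcases Nat.eq_zero_or_pos j with rfl | hjpos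
      · rfl
      · rw [hw'0, hw's j (by omega)] at e; exact absurd e (hanw _ (by omega))
      · rw [hw'0, hw's i (by omega)] at e; exact absurd e.symm (hanw _ (by omega))
      · rw [hw's i (by omega), hw's j (by omega)] at e
        have := H.2.2.1 (show i - 1 ∈ Set.Iio h by simp; omega)
          (show j - 1 ∈ Set.Iio h by simp; omega) e
        omega
    · -- u' i ≠ w' j
      intro i hi j hj
      rcases Nat.eq_zero_or_pos i with rfl | hipos <;> rcases Nat.eq_zero_or_pos j with rfl | hjpos
      · rw [hu'0, hw'0]; exact hab.ne'
      · rw [hu'0, hw's j (by omega)]; exact hbnw _ (by omega)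
      · rw [hu's i (by omega), hw'0]; exact fun e => (hane _ (by omega)) e.symm
      · rw [hu's i (by omega), hw's j (by omega)]; exact uwNe H (by omega) (by omega)
    · -- rung
      intro i hi
      rcases Nat.eq_zero_or_pos i with rfl | hipos
      · rw [hu'0, hw'0]; exact hab.symm
      · rw [hu's i (by omega), hw's i (by omega)]; exact rung H (by omega)
    · -- cross
      intro i hi
      rcases Nat.eq_zero_or_pos i with rfl | hipos
      · constructor
        · rw [hu'0, hw's 1 (by omega)]; exact hbw
        · rw [hu's 1 (by omega), hw'0]; exact hau.symm
      · constructor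
        · rw [hu's i (by omega), hw's (i + 1) (by omega)]
          have : i - 1 + 1 = i + 1 - 1 := by omega
          rw [← this]
          exact crossL H (by omega)
        · rw [hu's (i + 1) (by omega), hw's i (by omega)]
          have : i + 1 - 1 = i - 1 + 1 := by omega
          rw [this]
          exact crossR H (by omega)
    · -- middles
      intro t ht1 ht2
      rcases Nat.lt_or_ge t 2 with ht | ht
      · -- t = 1
        have : t = 1 := by omega
        subst this
        refine ⟨?_, ?_, ?_, ?_⟩
        · intro j hj hadj
          rw [hu's 1 (by omega)] at hadj
          rcases nbrU0 _ hadj with e | e | e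
          · rcases Nat.eq_zero_or_pos j with rfl | hjpos
            · left; rfl
            · rw [hw's j (by omega)] at e; exact absurd e.symm (hanw _ (by omega))
          · rcases Nat.eq_zero_or_pos j with rfl | hjpos
            · rw [hw'0] at e; exact absurd e (hanw 0 (by omega))
            · rw [hw's j (by omega)] at e
              have := H.2.2.1 (show j - 1 ∈ Set.Iio h by simp; omega)
                (show 0 ∈ Set.Iio h by simp; omega) e
              omega
          · rcases Nat.eq_zero_or_pos j with rfl | hjpos
            · rw [hw'0] at e; exact absurd e (hanw 1 (by omega))
            · rw [hw's j (by omega)] at e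
              have := H.2.2.1 (show j - 1 ∈ Set.Iio h by simp; omega)
                (show 1 ∈ Set.Iio h by simp; omega) e
              omega
        · intro j hj hadj
          rw [hu's 1 (by omega)] at hadj
          rcases nbrU0 _ hadj with e | e | e
          · rcases Nat.eq_zero_or_pos j with rfl | hjpos
            · rw [hu'0] at e; exact hab.ne e.symm
            · rw [hu's j (by omega)] at e; exact (hane _ (by omega)) e.symm
          · rcases Nat.eq_zero_or_pos j with rfl | hjpos
            · rw [hu'0] at e; exact (hbnw _ (by omega)) e
            · rw [hu's j (by omega)] at e; exact (uwNe H (by omega) (by omega)) e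
          · rcases Nat.eq_zero_or_pos j with rfl | hjpos
            · rw [hu'0] at e; exact (hbnw _ (by omega)) e
            · rw [hu's j (by omega)] at e; exact (uwNe H (by omega) (by omega)) e
        · intro j hj hadj
          rw [hw's 1 (by omega)] at hadj
          rcases nbrW0 _ hadj with e | e | e
          · rcases Nat.eq_zero_or_pos j with rfl | hjpos
            · left; rfl
            · rw [hu's j (by omega)] at e; exact absurd e.symm (hbne _ (by omega))
          · rcases Nat.eq_zero_or_pos j with rfl | hjpos
            · rw [hu'0] at e; exact absurd e (hbne 0 (by omega))
            · rw [hu's j (by omega)] at e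
              have := H.2.1 (show j - 1 ∈ Set.Iio h by simp; omega)
                (show 0 ∈ Set.Iio h by simp; omega) e
              omega
          · rcases Nat.eq_zero_or_pos j with rfl | hjpos
            · rw [hu'0] at e; exact absurd e (hbne 1 (by omega))
            · rw [hu's j (by omega)] at e
              have := H.2.1 (show j - 1 ∈ Set.Iio h by simp; omega)
                (show 1 ∈ Set.Iio h by simp; omega) e
              omega
        · intro j hj hadj
          rw [hw's 1 (by omega)] at hadj
          rcases nbrW0 _ hadj with e | e | e
          · rcases Nat.eq_zero_or_pos j with rfl | hjpos
            · rw [hw'0] at e; exact hab.ne e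
            · rw [hw's j (by omega)] at e; exact (hbnw _ (by omega)) e.symm
          · rcases Nat.eq_zero_or_pos j with rfl | hjpos
            · rw [hw'0] at e; exact (hane _ (by omega)) e
            · rw [hw's j (by omega)] at e; exact (wuNe H (by omega) (by omega)) e
          · rcases Nat.eq_zero_or_pos j with rfl | hjpos
            · rw [hw'0] at e; exact (hane _ (by omega)) e
            · rw [hw's j (by omega)] at e; exact (wuNe H (by omega) (by omega)) e
      · -- t ≥ 2 : old middle t - 1
        have hm1 : 1 ≤ t - 1 := by omega
        have hm2 : (t - 1) + 1 < h := by omega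
        refine ⟨?_, ?_, ?_, ?_⟩
        · intro j hj hadj
          rw [hu's t (by omega)] at hadj
          rcases Nat.eq_zero_or_pos j with rfl | hjpos
          · rw [hw'0] at hadj
            rcases nbrU hdeg H hm1 hm2 hadj with e | e | e
            all_goals first
              | exact absurd e (hanw _ (by omega))
          · rw [hw's j (by omega)] at hadj
            have := midUW H hm1 hm2 (j := j - 1) (by omega) hadj
            omega
        · intro j hj hadj
          rw [hu's t (by omega)] at hadj
          rcases Nat.eq_zero_or_pos j with rfl | hjpos
          · rw [hu'0] at hadj
            rcases nbrU hdeg H hm1 hm2 hadj with e | e | e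
            all_goals exact absurd e (hbnw _ (by omega))
          · rw [hu's j (by omega)] at hadj
            exact (midUU H hm1 hm2 (j := j - 1) (by omega)) hadj
        · intro j hj hadj
          rw [hw's t (by omega)] at hadj
          rcases Nat.eq_zero_or_pos j with rfl | hjpos
          · rw [hu'0] at hadj
            rcases nbrW hdeg H hm1 hm2 hadj with e | e | e
            all_goals exact absurd e (hbne _ (by omega))
          · rw [hu's j (by omega)] at hadj
            have := midWU H hm1 hm2 (j := j - 1) (by omega) hadj
            omega
        · intro j hj hadj
          rw [hw's t (by omega)] at hadj
          rcases Nat.eq_zero_or_pos j with rfl | hjpos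
          · rw [hw'0] at hadj
            rcases nbrW hdeg H hm1 hm2 hadj with e | e | e
            all_goals exact absurd e (hane _ (by omega))
          · rw [hw's j (by omega)] at hadj
            exact (midWW H hm1 hm2 (j := j - 1) (by omega)) hadj
  have hsub : hgSet h u w ⊆ hgSet (h + 1) u' w' := by
    rintro v ⟨i, hi, rfl | rfl⟩
    · exact ⟨i + 1, by omega, Or.inl (by rw [hu's (i + 1) (by omega), Nat.add_sub_cancel])⟩
    · exact ⟨i + 1, by omega, Or.inr (by rw [hw's (i + 1) (by omega), Nat.add_sub_cancel])⟩
  refine hmax ⟨h + 1, u', w', H', hsub.ssubset_of_ne fun heq => ?_⟩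
  exact ha (heq ▸ (⟨0, by omega, Or.inr rfl⟩ : a ∈ hgSet (h + 1) u' w'))

theorem prop_up {V : Type*} [Fintype V] {G : SimpleGraph V} [DecidableRel G.Adj]
    {h1 h2 : ℕ} {u1 w1 u2 w2 : ℕ → V}
    (hdeg : ∀ v : V, G.degree v ≤ 3)
    (H1 : IsHourglass G h1 u1 w1) (H2 : IsHourglass G h2 u2 w2)
    {a b : ℕ} (hb1 : a + 1 < h1) (hb2 : b + 1 < h2)
    (e0u : u1 a = u2 b) (e0w : w1 a = w2 b)
    (e1u : u1 (a + 1) = u2 (b + 1)) (e1w : w1 (a + 1) = w2 (b + 1)) :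
    ∀ t, a + t < h1 → b + t < h2 → u1 (a + t) = u2 (b + t) ∧ w1 (a + t) = w2 (b + t) := by
  intro t
  induction t using Nat.strong_induction_on with
  | _ t ih =>
    intro ht1 ht2
    match t with
    | 0 => exact ⟨e0u, e0w⟩
    | 1 => exact ⟨e1u, e1w⟩
    | (k+2) =>
      obtain ⟨pu, pw⟩ := ih k (by omega) (by omega) (by omega)
      obtain ⟨qu, qw⟩ := ih (k+1) (by omega) (by omega) (by omega)
      have hadjU : G.Adj (w2 (b + (k + 1))) (u1 (a + (k + 2))) := by
        rw [← qw]
        have := crossR H1 (i := a + (k + 1)) (by omega)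
        rw [show a + (k + 1) + 1 = a + (k + 2) by omega] at this
        exact this.symm
      have hadjW : G.Adj (u2 (b + (k + 1))) (w1 (a + (k + 2))) := by
        rw [← qu]
        have := crossL H1 (i := a + (k + 1)) (by omega)
        rw [show a + (k + 1) + 1 = a + (k + 2) by omega] at this
        exact this
      constructor
      · rcases nbrW hdeg H2 (i := b + (k + 1)) (by omega) (by omega) hadjU with e | e | e
        · rw [show b + (k + 1) - 1 = b + k by omega] at e
          rw [← pu] at e
          exact absurd e (uNe H1 (by omega) (by omega) (by omega))
        · rw [← qu] at e
          exact absurd e (uNe H1 (by omega) (by omega) (by omega))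
        · rw [show b + (k + 1) + 1 = b + (k + 2) by omega] at e
          exact e
      · rcases nbrU hdeg H2 (i := b + (k + 1)) (by omega) (by omega) hadjW with e | e | e
        · rw [show b + (k + 1) - 1 = b + k by omega] at e
          rw [← pw] at e
          exact absurd e (wNe H1 (by omega) (by omega) (by omega))
        · rw [← qw] at e
          exact absurd e (wNe H1 (by omega) (by omega) (by omega))
        · rw [show b + (k + 1) + 1 = b + (k + 2) by omega] at e
          exact e

theorem prop_down {V : Type*} [Fintype V] {G : SimpleGraph V} [DecidableRel G.Adj]
    {h1 h2 : ℕ} {u1 w1 u2 w2 : ℕ → V}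
    (hdeg : ∀ v : V, G.degree v ≤ 3)
    (H1 : IsHourglass G h1 u1 w1) (H2 : IsHourglass G h2 u2 w2)
    {a b : ℕ} (ha0 : 1 ≤ a) (hb0 : 1 ≤ b) (hb1 : a < h1) (hb2 : b < h2)
    (e0u : u1 a = u2 b) (e0w : w1 a = w2 b)
    (e1u : u1 (a - 1) = u2 (b - 1)) (e1w : w1 (a - 1) = w2 (b - 1)) :
    ∀ t, t ≤ a → t ≤ b → u1 (a - t) = u2 (b - t) ∧ w1 (a - t) = w2 (b - t) := by
  intro t
  induction t using Nat.strong_induction_on with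
  | _ t ih =>
    intro ht1 ht2
    match t with
    | 0 => exact ⟨e0u, e0w⟩
    | 1 => exact ⟨e1u, e1w⟩
    | (k+2) =>
      obtain ⟨pu, pw⟩ := ih k (by omega) (by omega) (by omega)
      obtain ⟨qu, qw⟩ := ih (k+1) (by omega) (by omega) (by omega)
      have hadjU : G.Adj (w2 (b - (k + 1))) (u1 (a - (k + 2))) := by
        rw [← qw]
        have := crossL H1 (i := a - (k + 2)) (by omega)
        rw [show a - (k + 2) + 1 = a - (k + 1) by omega] at this
        exact this.symm
      have hadjW : G.Adj (u2 (b - (k + 1))) (w1 (a - (k + 2))) := by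
        rw [← qu]
        have := crossR H1 (i := a - (k + 2)) (by omega)
        rw [show a - (k + 2) + 1 = a - (k + 1) by omega] at this
        exact this
      constructor
      · rcases nbrW hdeg H2 (i := b - (k + 1)) (by omega) (by omega) hadjU with e | e | e
        · rw [show b - (k + 1) - 1 = b - (k + 2) by omega] at e
          exact e
        · rw [← qu] at e
          exact absurd e (uNe H1 (by omega) (by omega) (by omega))
        · rw [show b - (k + 1) + 1 = b - k by omega] at e
          rw [← pu] at e
          exact absurd e (uNe H1 (by omega) (by omega) (by omega))
      · rcases nbrU hdeg H2 (i := b - (k + 1)) (by omega) (by omega) hadjW with e | e | e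
        · rw [show b - (k + 1) - 1 = b - (k + 2) by omega] at e
          exact e
        · rw [← qw] at e
          exact absurd e (wNe H1 (by omega) (by omega) (by omega))
        · rw [show b - (k + 1) + 1 = b - k by omega] at e
          rw [← pw] at e
          exact absurd e (wNe H1 (by omega) (by omega) (by omega))

variable {V : Type*} [Fintype V] {G : SimpleGraph V} [DecidableRel G.Adj]
variable {h1 h2 : ℕ} {u1 w1 u2 w2 : ℕ → V}

/-- Wrap case W1 : `u1 (s-1) = u2 (h2-1)`. -/
theorem wrap1 (hdeg : ∀ v : V, G.degree v ≤ 3)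
    (Hm1 : IsMaxHourglass G h1 u1 w1) (Hm2 : IsMaxHourglass G h2 u2 w2)
    (hne : hgSet h1 u1 w1 ≠ hgSet h2 u2 w2)
    (h23 : 3 ≤ h2) {s : ℕ} (hs1 : 1 ≤ s) (hs2 : s + 1 < h1)
    (AL : ∀ t, s + t < h1 → t < h2 → u1 (s + t) = u2 t ∧ w1 (s + t) = w2 t)
    (hB : h1 < s + h2) (e : u1 (s - 1) = u2 (h2 - 1)) : False := by
  have H1 := Hm1.1
  have H2 := Hm2.1
  have hw0 : w1 s = w2 0 := by
    have := AL 0 (by omega) (by omega); simpa using this.2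
  have hu0 : u1 s = u2 0 := by
    have := AL 0 (by omega) (by omega); simpa using this.1
  have adjTop : G.Adj (u1 (s - 1)) (w2 (h2 - 1)) := by rw [e]; exact rung H2 (by omega)
  have adjTop2 : G.Adj (u1 (s - 1)) (w2 (h2 - 2)) := by
    rw [e]
    have := crossR H2 (i := h2 - 2) (by omega)
    rwa [show h2 - 2 + 1 = h2 - 1 by omega] at this
  rcases Nat.lt_or_ge s 2 with hs | hs
  · -- s = 1
    have hseq : s = 1 := by omega
    subst hseq
    have trip : w1 0 = w2 (h2 - 1) ∨ w1 0 = w2 (h2 - 2) ∨ w1 0 = w2 0 := by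
      refine three_nbrs hdeg (v := u1 0) (wNe H2 (by omega) (by omega) (by omega))
        (wNe H2 (by omega) (by omega) (by omega)) (wNe H2 (by omega) (by omega) (by omega))
        adjTop adjTop2 ?_ (rung H1 (by omega))
      rw [← hw0]; exact crossL H1 (by omega)
    rcases trip with e2 | e2 | e2
    · refine sub_false Hm1 H2 hne ?_
      rintro v ⟨r, hr, rfl | rfl⟩
      · rcases Nat.eq_zero_or_pos r with rfl | hrpos
        · exact ⟨h2 - 1, by omega, Or.inl e⟩
        · refine ⟨r - 1, by omega, Or.inl ?_⟩
          have := (AL (r - 1) (by omega) (by omega)).1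
          rwa [show 1 + (r - 1) = r by omega] at this
      · rcases Nat.eq_zero_or_pos r with rfl | hrpos
        · exact ⟨h2 - 1, by omega, Or.inr e2⟩
        · refine ⟨r - 1, by omega, Or.inr ?_⟩
          have := (AL (r - 1) (by omega) (by omega)).2
          rwa [show 1 + (r - 1) = r by omega] at this
    · have hadj : G.Adj (w2 (h2 - 2)) (u2 0) := by
        rw [← e2, ← hu0]
        exact (crossR H1 (i := 0) (by omega)).symm
      have hmid := midWU H2 (i := h2 - 2) (by omega) (by omega) (j := 0) (by omega) hadj
      have h2eq : h2 = 3 := by omega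
      have halt : w1 (1 + 1) = w2 1 := (AL 1 (by omega) (by omega)).2
      rw [show (1 : ℕ) = h2 - 2 by omega, ← e2] at halt
      exact (wNe H1 (by omega) (by omega) (by omega)) halt.symm
    · rw [← hw0] at e2
      exact (wNe H1 (by omega) (by omega) (by omega)) e2
  · -- s ≥ 2
    have trip1 : w2 (h2 - 1) = w1 (s - 1 - 1) ∨ w2 (h2 - 1) = w1 (s - 1) ∨
        w2 (h2 - 1) = w1 (s - 1 + 1) := nbrU hdeg H1 (by omega) (by omega) adjTop
    have trip2 : w2 (h2 - 2) = w1 (s - 1 - 1) ∨ w2 (h2 - 2) = w1 (s - 1) ∨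
        w2 (h2 - 2) = w1 (s - 1 + 1) := nbrU hdeg H1 (by omega) (by omega) adjTop2
    rw [show s - 1 - 1 = s - 2 by omega, show s - 1 + 1 = s by omega] at trip1 trip2
    have killtop : ∀ x, x = w1 s → x = w2 (h2 - 1) ∨ x = w2 (h2 - 2) → False := by
      rintro x rfl h
      rcases h with e' | e' <;> rw [hw0] at e'
      · exact (wNe H2 (by omega) (by omega) (by omega)) e'
      · exact (wNe H2 (by omega) (by omega) (by omega)) e'
    rcases trip1 with e1 | e1 | e1
    · -- w2 (h2-1) = w1 (s-2) : crossed case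
      rcases trip2 with e2 | e2 | e2
      · rw [← e2] at e1; exact (wNe H2 (by omega) (by omega) (by omega)) e1
      · -- w2 (h2-2) = w1 (s-1) : forces h2 = 3, then containment
        have hadj : G.Adj (w2 (h2 - 2)) (u2 0) := by
          rw [← hu0, e2]
          have := crossR H1 (i := s - 1) (by omega)
          rw [show s - 1 + 1 = s by omega] at this
          exact this.symm
        have hmid := midWU H2 (i := h2 - 2) (by omega) (by omega) (j := 0) (by omega) hadj
        have h2eq : h2 = 3 := by omega
        refine sub_false Hm2 H1 hne.symm ?_
        rintro v ⟨r, hr, rfl | rfl⟩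
        · have hr3 : r < 3 := by omega
          interval_cases r
          · exact ⟨s, by omega, Or.inl hu0.symm⟩
          · refine ⟨s + 1, by omega, Or.inl ?_⟩
            exact ((AL 1 (by omega) (by omega)).1).symm
          · refine ⟨s - 1, by omega, Or.inl ?_⟩
            have := e.symm
            rwa [show h2 - 1 = 2 by omega] at this
        · have hr3 : r < 3 := by omega
          interval_cases r
          · exact ⟨s, by omega, Or.inr hw0.symm⟩
          · refine ⟨s - 1, by omega, Or.inr ?_⟩
            have := e2
            rwa [show h2 - 2 = 1 by omega] at this
          · refine ⟨s - 2, by omega, Or.inr ?_⟩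
            have := e1
            rwa [show h2 - 1 = 2 by omega] at this
      · exact killtop _ e2 (Or.inr rfl)
    · -- w2 (h2-1) = w1 (s-1) : aligned wrap
      have e2 : w2 (h2 - 2) = w1 (s - 2) := by
        rcases trip2 with e2 | e2 | e2
        · exact e2
        · rw [← e2] at e1; exact absurd e1 (wNe H2 (by omega) (by omega) (by omega))
        · exact absurd (killtop _ e2 (Or.inr rfl)) not_false
      have hadjr : G.Adj (w2 (h2 - 2)) (u1 (s - 2)) := by
        rw [e2]; exact (rung H1 (by omega)).symm
      have trip3 := nbrW hdeg H2 (i := h2 - 2) (by omega) (by omega) hadjr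
      rw [show h2 - 2 - 1 = h2 - 3 by omega, show h2 - 2 + 1 = h2 - 1 by omega] at trip3
      have eu2 : u1 (s - 2) = u2 (h2 - 2) := by
        rcases trip3 with e3 | e3 | e3
        · by_cases h3case : h2 = 3
          · rw [show h2 - 3 = 0 by omega, ← hu0] at e3
            exact absurd e3 (uNe H1 (by omega) (by omega) (by omega))
          · have hadj2 : G.Adj (u2 (h2 - 3)) (w2 (h2 - 1)) := by
              rw [← e3, e1]
              have := crossL H1 (i := s - 2) (by omega)
              rwa [show s - 2 + 1 = s - 1 by omega] at this
            have := midUW H2 (i := h2 - 3) (by omega) (by omega) (j := h2 - 1) (by omega) hadj2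
            omega
        · exact e3
        · rw [← e] at e3
          exact absurd e3 (uNe H1 (by omega) (by omega) (by omega))
      have PD := prop_down hdeg H1 H2 (a := s - 1) (b := h2 - 1) (by omega) (by omega)
        (by omega) (by omega) e e1.symm
        (by rw [show s - 1 - 1 = s - 2 by omega, show h2 - 1 - 1 = h2 - 2 by omega]; exact eu2)
        (by rw [show s - 1 - 1 = s - 2 by omega, show h2 - 1 - 1 = h2 - 2 by omega]; exact e2.symm)
      rcases Nat.lt_or_ge (h2 - 1) (s - 1) with hc | hc
      · have := (PD (h2 - 1) (by omega) (by omega)).1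
        rw [show h2 - 1 - (h2 - 1) = 0 by omega, ← hu0] at this
        exact (uNe H1 (by omega) (by omega) (by omega)) this
      · refine sub_false Hm1 H2 hne ?_
        rintro v ⟨r, hr, rfl | rfl⟩
        · rcases Nat.lt_or_ge r s with hrs | hrs
          · have := (PD (s - 1 - r) (by omega) (by omega)).1
            rw [show s - 1 - (s - 1 - r) = r by omega] at this
            exact ⟨h2 - 1 - (s - 1 - r), by omega, Or.inl this⟩
          · have := (AL (r - s) (by omega) (by omega)).1
            rw [show s + (r - s) = r by omega] at this
            exact ⟨r - s, by omega, Or.inl this⟩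
        · rcases Nat.lt_or_ge r s with hrs | hrs
          · have := (PD (s - 1 - r) (by omega) (by omega)).2
            rw [show s - 1 - (s - 1 - r) = r by omega] at this
            exact ⟨h2 - 1 - (s - 1 - r), by omega, Or.inr this⟩
          · have := (AL (r - s) (by omega) (by omega)).2
            rw [show s + (r - s) = r by omega] at this
            exact ⟨r - s, by omega, Or.inr this⟩
    · exact killtop _ e1 (Or.inl rfl)

/-- Wrap case W2 (Möbius) : `u1 (s-1) = w2 (h2-1)`. -/
theorem wrap2 (hdeg : ∀ v : V, G.degree v ≤ 3)
    (Hm1 : IsMaxHourglass G h1 u1 w1) (Hm2 : IsMaxHourglass G h2 u2 w2)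
    (hne : hgSet h1 u1 w1 ≠ hgSet h2 u2 w2)
    (h23 : 3 ≤ h2) {s : ℕ} (hs1 : 1 ≤ s) (hs2 : s + 1 < h1)
    (AL : ∀ t, s + t < h1 → t < h2 → u1 (s + t) = u2 t ∧ w1 (s + t) = w2 t)
    (hB : h1 < s + h2) (e : u1 (s - 1) = w2 (h2 - 1)) : False := by
  have H1 := Hm1.1
  have H2 := Hm2.1
  have hw0 : w1 s = w2 0 := by
    have := AL 0 (by omega) (by omega); simpa using this.2
  have hu0 : u1 s = u2 0 := by
    have := AL 0 (by omega) (by omega); simpa using this.1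
  have adjT1 : G.Adj (u1 (s - 1)) (u2 (h2 - 1)) := by
    rw [e]; exact (rung H2 (by omega)).symm
  have adjT2 : G.Adj (u1 (s - 1)) (u2 (h2 - 2)) := by
    rw [e]
    have := crossL H2 (i := h2 - 2) (by omega)
    rw [show h2 - 2 + 1 = h2 - 1 by omega] at this
    exact this.symm
  rcases Nat.lt_or_ge s 2 with hs | hs
  · -- s = 1
    have hseq : s = 1 := by omega
    subst hseq
    have trip : w1 0 = u2 (h2 - 1) ∨ w1 0 = u2 (h2 - 2) ∨ w1 0 = w2 0 := by
      refine three_nbrs hdeg (v := u1 0) (uNe H2 (by omega) (by omega) (by omega))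
        (uwNe H2 (by omega) (by omega)) (uwNe H2 (by omega) (by omega))
        adjT1 adjT2 ?_ (rung H1 (by omega))
      rw [← hw0]; exact crossL H1 (by omega)
    rcases trip with e2 | e2 | e2
    · refine sub_false Hm1 H2 hne ?_
      rintro v ⟨r, hr, rfl | rfl⟩
      · rcases Nat.eq_zero_or_pos r with rfl | hrpos
        · exact ⟨h2 - 1, by omega, Or.inr e⟩
        · refine ⟨r - 1, by omega, Or.inl ?_⟩
          have := (AL (r - 1) (by omega) (by omega)).1
          rwa [show 1 + (r - 1) = r by omega] at this
      · rcases Nat.eq_zero_or_pos r with rfl | hrpos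
        · exact ⟨h2 - 1, by omega, Or.inl e2⟩
        · refine ⟨r - 1, by omega, Or.inr ?_⟩
          have := (AL (r - 1) (by omega) (by omega)).2
          rwa [show 1 + (r - 1) = r by omega] at this
    · have hadj : G.Adj (u2 (h2 - 2)) (u2 0) := by
        rw [← e2, ← hu0]
        exact (crossR H1 (i := 0) (by omega)).symm
      exact (midUU H2 (i := h2 - 2) (by omega) (by omega) (j := 0) (by omega)) hadj
    · rw [← hw0] at e2
      exact (wNe H1 (by omega) (by omega) (by omega)) e2
  · -- s ≥ 2
    have trip1 : u2 (h2 - 1) = w1 (s - 1 - 1) ∨ u2 (h2 - 1) = w1 (s - 1) ∨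
        u2 (h2 - 1) = w1 (s - 1 + 1) := nbrU hdeg H1 (by omega) (by omega) adjT1
    have trip2 : u2 (h2 - 2) = w1 (s - 1 - 1) ∨ u2 (h2 - 2) = w1 (s - 1) ∨
        u2 (h2 - 2) = w1 (s - 1 + 1) := nbrU hdeg H1 (by omega) (by omega) adjT2
    rw [show s - 1 - 1 = s - 2 by omega, show s - 1 + 1 = s by omega] at trip1 trip2
    have f2 : u2 (h2 - 2) = w1 (s - 2) := by
      rcases trip2 with e2 | e2 | e2
      · exact e2
      · -- u2 (h2-2) = w1 (s-1) : kill via u2 0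
        have hadj : G.Adj (u2 (h2 - 2)) (u2 0) := by
          rw [e2, ← hu0]
          have := crossR H1 (i := s - 1) (by omega)
          rw [show s - 1 + 1 = s by omega] at this
          exact this.symm
        exact absurd hadj (midUU H2 (i := h2 - 2) (by omega) (by omega) (j := 0) (by omega))
      · rw [hw0] at e2
        exact absurd e2 (uwNe H2 (by omega) (by omega))
    have f1 : u2 (h2 - 1) = w1 (s - 1) := by
      rcases trip1 with e1 | e1 | e1
      · rw [← f2] at e1
        exact absurd e1 (uNe H2 (by omega) (by omega) (by omega))
      · exact e1
      · rw [hw0] at e1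
        exact absurd e1 (uwNe H2 (by omega) (by omega))
    have f3 : u1 (s - 2) = w2 (h2 - 2) := by
      have hadjr : G.Adj (u2 (h2 - 2)) (u1 (s - 2)) := by
        rw [f2]; exact (rung H1 (by omega)).symm
      have trip3 := nbrU hdeg H2 (i := h2 - 2) (by omega) (by omega) hadjr
      rw [show h2 - 2 - 1 = h2 - 3 by omega, show h2 - 2 + 1 = h2 - 1 by omega] at trip3
      rcases trip3 with e3 | e3 | e3
      · by_cases h3case : h2 = 3
        · rw [show h2 - 3 = 0 by omega, ← hw0] at e3
          exact absurd e3 (uwNe H1 (by omega) (by omega))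
        · have hadj2 : G.Adj (w2 (h2 - 3)) (u2 (h2 - 1)) := by
            rw [← e3, f1]
            have := crossL H1 (i := s - 2) (by omega)
            rwa [show s - 2 + 1 = s - 1 by omega] at this
          have := midWU H2 (i := h2 - 3) (by omega) (by omega) (j := h2 - 1) (by omega) hadj2
          omega
      · exact e3
      · rw [← e] at e3
        exact absurd e3 (uNe H1 (by omega) (by omega) (by omega))
    have PD := prop_down hdeg H1 (swap_hg H2) (a := s - 1) (b := h2 - 1) (by omega) (by omega)
      (by omega) (by omega) e f1.symm
      (by rw [show s - 1 - 1 = s - 2 by omega, show h2 - 1 - 1 = h2 - 2 by omega]; exact f3)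
      (by rw [show s - 1 - 1 = s - 2 by omega, show h2 - 1 - 1 = h2 - 2 by omega]; exact f2.symm)
    rcases Nat.lt_or_ge (h2 - 1) (s - 1) with hc | hc
    · have := (PD (h2 - 1) (by omega) (by omega)).1
      rw [show h2 - 1 - (h2 - 1) = 0 by omega, ← hw0] at this
      exact (uwNe H1 (by omega) (by omega)) this
    · refine sub_false Hm1 H2 hne ?_
      rintro v ⟨r, hr, rfl | rfl⟩
      · rcases Nat.lt_or_ge r s with hrs | hrs
        · have := (PD (s - 1 - r) (by omega) (by omega)).1
          rw [show s - 1 - (s - 1 - r) = r by omega] at this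
          exact ⟨h2 - 1 - (s - 1 - r), by omega, Or.inr this⟩
        · have := (AL (r - s) (by omega) (by omega)).1
          rw [show s + (r - s) = r by omega] at this
          exact ⟨r - s, by omega, Or.inl this⟩
      · rcases Nat.lt_or_ge r s with hrs | hrs
        · have := (PD (s - 1 - r) (by omega) (by omega)).2
          rw [show s - 1 - (s - 1 - r) = r by omega] at this
          exact ⟨h2 - 1 - (s - 1 - r), by omega, Or.inl this⟩
        · have := (AL (r - s) (by omega) (by omega)).2
          rw [show s + (r - s) = r by omega] at this
          exact ⟨r - s, by omega, Or.inr this⟩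

/-- Core of the endgame: `H2`'s bottom row sits strictly inside `H1`. -/
theorem ecore (hdeg : ∀ v : V, G.degree v ≤ 3)
    (Hm1 : IsMaxHourglass G h1 u1 w1) (Hm2 : IsMaxHourglass G h2 u2 w2)
    (hne : hgSet h1 u1 w1 ≠ hgSet h2 u2 w2)
    (h23 : 3 ≤ h2) {s : ℕ} (hs1 : 1 ≤ s) (hs2 : s + 1 < h1)
    (AL : ∀ t, s + t < h1 → t < h2 → u1 (s + t) = u2 t ∧ w1 (s + t) = w2 t) : False := by
  have H1 := Hm1.1
  have H2 := Hm2.1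
  rcases le_or_gt (s + h2) h1 with hc | hc
  · refine sub_false Hm2 H1 hne.symm ?_
    rintro v ⟨r, hr, rfl | rfl⟩
    · exact ⟨s + r, by omega, Or.inl ((AL r (by omega) hr).1).symm⟩
    · exact ⟨s + r, by omega, Or.inr ((AL r (by omega) hr).2).symm⟩
  · have hw0 : w1 s = w2 0 := by
      have := AL 0 (by omega) (by omega); simpa using this.2
    have hu0 : u1 s = u2 0 := by
      have := AL 0 (by omega) (by omega); simpa using this.1
    have hu1 : u1 (s + 1) = u2 1 := (AL 1 (by omega) (by omega)).1
    have hw1 : w1 (s + 1) = w2 1 := (AL 1 (by omega) (by omega)).2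
    have hbw : G.Adj (u1 (s - 1)) (w2 0) := by
      rw [← hw0]
      have := crossL H1 (i := s - 1) (by omega)
      rwa [show s - 1 + 1 = s by omega] at this
    have hau : G.Adj (w1 (s - 1)) (u2 0) := by
      rw [← hu0]
      have := crossR H1 (i := s - 1) (by omega)
      rw [show s - 1 + 1 = s by omega] at this
      exact this.symm
    have ALsw : ∀ t, s + t < h1 → t < h2 → w1 (s + t) = w2 t ∧ u1 (s + t) = u2 t :=
      fun t p q => ⟨(AL t p q).2, (AL t p q).1⟩
    have hnesw : hgSet h1 w1 u1 ≠ hgSet h2 w2 u2 := by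
      rw [show hgSet h1 w1 u1 = hgSet h1 u1 w1 from swap_hgSet,
        show hgSet h2 w2 u2 = hgSet h2 u2 w2 from swap_hgSet]
      exact hne
    by_cases hu : u1 (s - 1) ∈ hgSet h2 u2 w2
    · rcases adjW0 H2 hu hbw with e | e | e | e
      · rw [← hu0] at e
        exact (uNe H1 (by omega) (by omega) (by omega)) e
      · rw [← hu1] at e
        exact (uNe H1 (by omega) (by omega) (by omega)) e
      · exact wrap1 hdeg Hm1 Hm2 hne h23 hs1 hs2 AL hc e
      · exact wrap2 hdeg Hm1 Hm2 hne h23 hs1 hs2 AL hc e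
    · by_cases hw : w1 (s - 1) ∈ hgSet h2 u2 w2
      · rcases adjU0 H2 hw hau with e | e | e | e
        · rw [← hw0] at e
          exact (wNe H1 (by omega) (by omega) (by omega)) e
        · rw [← hw1] at e
          exact (wNe H1 (by omega) (by omega) (by omega)) e
        · exact wrap2 hdeg (swap_max Hm1) (swap_max Hm2) hnesw h23 hs1 hs2 ALsw hc e
        · exact wrap1 hdeg (swap_max Hm1) (swap_max Hm2) hnesw h23 hs1 hs2 ALsw hc e
      · exact extend_false hdeg Hm2 (rung H1 (by omega)).symm hbw hau hw hu

/-- A doubly-aligned row pair kills the configuration. -/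
theorem lemE (hdeg : ∀ v : V, G.degree v ≤ 3)
    (Hm1 : IsMaxHourglass G h1 u1 w1) (Hm2 : IsMaxHourglass G h2 u2 w2)
    (hne : hgSet h1 u1 w1 ≠ hgSet h2 u2 w2)
    (h23 : 3 ≤ h2) {i j : ℕ} (hi : i + 1 < h1) (hj : j + 1 < h2)
    (b0u : u1 i = u2 j) (b0w : w1 i = w2 j)
    (b1u : u1 (i + 1) = u2 (j + 1)) (b1w : w1 (i + 1) = w2 (j + 1)) : False := by
  have H1 := Hm1.1
  have H2 := Hm2.1
  have UP := prop_up hdeg H1 H2 hi hj b0u b0w b1u b1w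
  have DOWN := prop_down hdeg H1 H2 (a := i + 1) (b := j + 1) (by omega) (by omega) hi hj
    b1u b1w (by rw [Nat.add_sub_cancel, Nat.add_sub_cancel]; exact b0u)
    (by rw [Nat.add_sub_cancel, Nat.add_sub_cancel]; exact b0w)
  have ALL : ∀ p q, p < h1 → q < h2 → p + j = q + i → u1 p = u2 q ∧ w1 p = w2 q := by
    intro p q hp hq hpq
    rcases le_or_gt i p with hc | hc
    · have := UP (p - i) (by omega) (by omega)
      rwa [show i + (p - i) = p by omega, show j + (p - i) = q by omega] at this
    · have := DOWN (i + 1 - p) (by omega) (by omega)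
      rwa [show i + 1 - (i + 1 - p) = p by omega, show j + 1 - (i + 1 - p) = q by omega] at this
  rcases Nat.lt_or_ge j i with hij | hij
  · refine ecore hdeg Hm1 Hm2 hne h23 (s := i - j) (by omega) (by omega) ?_
    intro t ht1 ht2
    exact ALL (i - j + t) t ht1 ht2 (by omega)
  · rcases le_or_gt (h1 - 1 - i) (h2 - 1 - j) with hc2 | hc2
    · refine sub_false Hm1 H2 hne ?_
      rintro v ⟨r, hr, rfl | rfl⟩
      · exact ⟨r + j - i, by omega, Or.inl (ALL r (r + j - i) hr (by omega) (by omega)).1⟩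
      · exact ⟨r + j - i, by omega, Or.inr (ALL r (r + j - i) hr (by omega) (by omega)).2⟩
    · refine ecore hdeg (rev_max Hm1) (rev_max Hm2)
        (by rw [rev_hgSet, rev_hgSet]; exact hne) h23
        (s := (h1 - 1 - i) - (h2 - 1 - j)) (by omega) (by omega) ?_
      intro t ht1 ht2
      exact ALL (h1 - 1 - ((h1 - 1 - i) - (h2 - 1 - j) + t)) (h2 - 1 - t)
        (by omega) (by omega) (by omega)

/-- Crossed double-row configuration kills. -/
theorem crossed2 (hdeg : ∀ v : V, G.degree v ≤ 3)
    (Hm1 : IsMaxHourglass G h1 u1 w1) (Hm2 : IsMaxHourglass G h2 u2 w2)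
    (hne : hgSet h1 u1 w1 ≠ hgSet h2 u2 w2) (bad : ¬(h1 = h2 ∧ h2 ≤ 3))
    {i j : ℕ} (hi1 : 1 ≤ i) (hi2 : i + 1 < h1) (hj1 : 1 ≤ j) (hj2 : j + 1 < h2)
    (A : u1 i = u2 j) (B : u1 (i + 1) = u2 (j + 1))
    (C : w1 i = w2 (j + 1)) (D : w1 (i + 1) = w2 j) : False := by
  have H1 := Hm1.1
  have H2 := Hm2.1
  have P3 : w1 (i - 1) = w2 (j - 1) := by
    have adj : G.Adj (u2 j) (w1 (i - 1)) := by
      rw [← A]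
      have := crossR H1 (i := i - 1) (by omega)
      rwa [show i - 1 + 1 = i by omega] at this
    rcases nbrU hdeg H2 hj1 hj2 adj with e | e | e
    · exact e
    · rw [← D] at e; exact absurd e (wNe H1 (by omega) (by omega) (by omega))
    · rw [← C] at e; exact absurd e (wNe H1 (by omega) (by omega) (by omega))
  rcases Nat.lt_or_ge (i + 2) h1 with htop | htop
  · -- i + 2 ≤ h1 - 1: derive P2 and kill
    have P2 : u1 (i + 2) = u2 (j - 1) := by
      have adj : G.Adj (w2 j) (u1 (i + 2)) := by
        rw [← D]
        have := crossR H1 (i := i + 1) (by omega)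
        rw [show i + 1 + 1 = i + 2 by omega] at this
        exact this.symm
      rcases nbrW hdeg H2 hj1 hj2 adj with e | e | e
      · exact e
      · rw [← A] at e; exact absurd e (uNe H1 (by omega) (by omega) (by omega))
      · rw [← B] at e; exact absurd e (uNe H1 (by omega) (by omega) (by omega))
    have kill0 : G.Adj (u1 (i + 2)) (w1 (i - 1)) := by
      rw [P2, P3]; exact rung H2 (by omega)
    rcases Nat.lt_or_ge (i + 3) h1 with hk1 | hk1
    · have := midUW H1 (i := i + 2) (by omega) (by omega) (j := i - 1) (by omega) kill0
      omega
    · rcases Nat.lt_or_ge 1 i with hk2 | hk2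
      · have := midWU H1 (i := i - 1) (by omega) (by omega) (j := i + 2) (by omega) kill0.symm
        omega
      · -- i = 1, h1 = 4
        have hieq : i = 1 := by omega
        have h1eq : h1 = 4 := by omega
        subst hieq
        rcases Nat.lt_or_ge 1 j with hjc | hjc
        · -- j ≥ 2 : hgSet1 ⊆ hgSet2
          have P4 : w1 3 = w2 (j - 2) := by
            have adj : G.Adj (u2 (j - 1)) (w1 3) := by
              rw [← P2]; exact rung H1 (by omega)
            rcases nbrU hdeg H2 (i := j - 1) (by omega) (by omega) adj with e | e | e
            · rwa [show j - 1 - 1 = j - 2 by omega] at e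
            · rw [← P3] at e
              exact absurd e (wNe H1 (by omega) (by omega) (by omega))
            · rw [show j - 1 + 1 = j by omega, ← D] at e
              exact absurd e (wNe H1 (by omega) (by omega) (by omega))
          have U0 : u1 0 = u2 (j - 2) := by
            have adj : G.Adj (w2 (j - 1)) (u1 0) := by
              rw [← P3]; exact (rung H1 (by omega)).symm
            rcases nbrW hdeg H2 (i := j - 1) (by omega) (by omega) adj with e | e | e
            · rwa [show j - 1 - 1 = j - 2 by omega] at e
            · rw [← P2] at e
              exact absurd e (uNe H1 (by omega) (by omega) (by omega))
            · rw [show j - 1 + 1 = j by omega, ← A] at e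
              exact absurd e (uNe H1 (by omega) (by omega) (by omega))
          refine sub_false Hm1 H2 hne ?_
          rintro v ⟨r, hr, rfl | rfl⟩
          · have : r = 0 ∨ r = 1 ∨ r = 2 ∨ r = 3 := by omega
            rcases this with rfl | rfl | rfl | rfl
            · exact ⟨j - 2, by omega, Or.inl U0⟩
            · exact ⟨j, by omega, Or.inl A⟩
            · exact ⟨j + 1, by omega, Or.inl B⟩
            · exact ⟨j - 1, by omega, Or.inl P2⟩
          · have : r = 0 ∨ r = 1 ∨ r = 2 ∨ r = 3 := by omega
            rcases this with rfl | rfl | rfl | rfl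
            · exact ⟨j - 1, by omega, Or.inr P3⟩
            · exact ⟨j + 1, by omega, Or.inr C⟩
            · exact ⟨j, by omega, Or.inr D⟩
            · exact ⟨j - 2, by omega, Or.inr P4⟩
        · -- j = 1
          have hjeq : j = 1 := by omega
          subst hjeq
          rcases Nat.lt_or_ge 3 h2 with hh2 | hh2
          · -- h2 ≥ 4
            have W3 : w2 3 = w1 3 := by
              have adj : G.Adj (u1 2) (w2 3) := by
                rw [B]; exact crossL H2 (i := 2) (by omega)
              rcases nbrU hdeg H1 (i := 2) (by omega) (by omega) adj with e | e | e
              · rw [show (2:ℕ) - 1 = 1 by omega, C] at e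
                exact absurd e (wNe H2 (by omega) (by omega) (by omega))
              · rw [D] at e
                exact absurd e (wNe H2 (by omega) (by omega) (by omega))
              · exact e
            have U3 : u2 3 = u1 0 := by
              have adj : G.Adj (w1 1) (u2 3) := by
                rw [C]; exact (crossR H2 (i := 2) (by omega)).symm
              rcases nbrW hdeg H1 (i := 1) (by omega) (by omega) adj with e | e | e
              · exact e
              · rw [A] at e
                exact absurd e (uNe H2 (by omega) (by omega) (by omega))
              · rw [B] at e
                exact absurd e (uNe H2 (by omega) (by omega) (by omega))
            rcases Nat.lt_or_ge 4 h2 with hh5 | hh5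
            · -- h2 ≥ 5 : kill
              have kill : G.Adj (u2 3) (w2 0) := by
                rw [U3, ← show w1 0 = w2 0 from P3]
                exact rung H1 (by omega)
              have := midUW H2 (i := 3) (by omega) (by omega) (j := 0) (by omega) kill
              omega
            · -- h2 = 4 : hgSet2 ⊆ hgSet1
              refine sub_false Hm2 H1 hne.symm ?_
              rintro v ⟨r, hr, rfl | rfl⟩
              · have : r = 0 ∨ r = 1 ∨ r = 2 ∨ r = 3 := by omega
                rcases this with rfl | rfl | rfl | rfl
                · exact ⟨3, by omega, Or.inl P2.symm⟩
                · exact ⟨1, by omega, Or.inl A.symm⟩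
                · exact ⟨2, by omega, Or.inl B.symm⟩
                · exact ⟨0, by omega, Or.inl U3⟩
              · have : r = 0 ∨ r = 1 ∨ r = 2 ∨ r = 3 := by omega
                rcases this with rfl | rfl | rfl | rfl
                · exact ⟨0, by omega, Or.inr P3.symm⟩
                · exact ⟨2, by omega, Or.inr D.symm⟩
                · exact ⟨1, by omega, Or.inr C.symm⟩
                · exact ⟨3, by omega, Or.inr W3⟩
          · -- h2 = 3 : hgSet2 ⊆ hgSet1
            refine sub_false Hm2 H1 hne.symm ?_
            rintro v ⟨r, hr, rfl | rfl⟩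
            · have : r = 0 ∨ r = 1 ∨ r = 2 := by omega
              rcases this with rfl | rfl | rfl
              · exact ⟨3, by omega, Or.inl P2.symm⟩
              · exact ⟨1, by omega, Or.inl A.symm⟩
              · exact ⟨2, by omega, Or.inl B.symm⟩
            · have : r = 0 ∨ r = 1 ∨ r = 2 := by omega
              rcases this with rfl | rfl | rfl
              · exact ⟨0, by omega, Or.inr P3.symm⟩
              · exact ⟨2, by omega, Or.inr D.symm⟩
              · exact ⟨1, by omega, Or.inr C.symm⟩
  · -- i + 2 = h1 (top boundary)
    have hieq : i + 2 = h1 := by omega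
    rcases Nat.lt_or_ge 1 j with hjc | hjc
    · -- j ≥ 2
      have adjP : G.Adj (w2 (j - 1)) (u1 (i - 1)) := by
        rw [← P3]; exact (rung H1 (by omega)).symm
      rcases nbrW hdeg H2 (i := j - 1) (by omega) (by omega) adjP with f | f | f
      · -- sheared : u1 (i-1) = u2 (j-2)
        rw [show j - 1 - 1 = j - 2 by omega] at f
        have kill : G.Adj (u2 (j - 2)) (w2 (j + 1)) := by
          rw [← f, ← C]
          have := crossL H1 (i := i - 1) (by omega)
          rwa [show i - 1 + 1 = i by omega] at this
        rcases Nat.lt_or_ge 2 j with hj3 | hj3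
        · have := midUW H2 (i := j - 2) (by omega) (by omega) (j := j + 1) (by omega) kill
          omega
        · have hjeq : j = 2 := by omega
          subst hjeq
          rcases Nat.lt_or_ge (2 + 2) h2 with hh5 | hh5
          · have := midWU H2 (i := 2 + 1) (by omega) (by omega) (j := 0) (by omega) kill.symm
            omega
          · -- h2 = 4 : hgSet2 ⊆ hgSet1
            have hh2eq : h2 = 4 := by omega
            rcases Nat.lt_or_ge 1 i with hic | hic
            · have eu21 : u2 1 = u1 (i - 2) := by
                have adj : G.Adj (w1 (i - 1)) (u2 1) := by
                  rw [show w1 (i-1) = w2 1 from P3]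
                  exact (rung H2 (by omega)).symm
                rcases nbrW hdeg H1 (i := i - 1) (by omega) (by omega) adj with e | e | e
                · rwa [show i - 1 - 1 = i - 2 by omega] at e
                · rw [f] at e
                  exact absurd e (uNe H2 (by omega) (by omega) (by omega))
                · rw [show i - 1 + 1 = i by omega, A] at e
                  exact absurd e (uNe H2 (by omega) (by omega) (by omega))
              have ew20 : w2 0 = w1 (i - 2) := by
                have adj : G.Adj (u1 (i - 1)) (w2 0) := by
                  rw [f]; exact rung H2 (by omega)
                rcases nbrU hdeg H1 (i := i - 1) (by omega) (by omega) adj with e | e | e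
                · rwa [show i - 1 - 1 = i - 2 by omega] at e
                · rw [P3] at e
                  exact absurd e (wNe H2 (by omega) (by omega) (by omega))
                · rw [show i - 1 + 1 = i by omega, C] at e
                  exact absurd e (wNe H2 (by omega) (by omega) (by omega))
              refine sub_false Hm2 H1 hne.symm ?_
              rintro v ⟨r, hr, rfl | rfl⟩
              · have : r = 0 ∨ r = 1 ∨ r = 2 ∨ r = 3 := by omega
                rcases this with rfl | rfl | rfl | rfl
                · exact ⟨i - 1, by omega, Or.inl f.symm⟩
                · exact ⟨i - 2, by omega, Or.inl eu21⟩
                · exact ⟨i, by omega, Or.inl A.symm⟩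
                · exact ⟨i + 1, by omega, Or.inl B.symm⟩
              · have : r = 0 ∨ r = 1 ∨ r = 2 ∨ r = 3 := by omega
                rcases this with rfl | rfl | rfl | rfl
                · exact ⟨i - 2, by omega, Or.inr ew20⟩
                · exact ⟨i - 1, by omega, Or.inr P3.symm⟩
                · exact ⟨i + 1, by omega, Or.inr D.symm⟩
                · exact ⟨i, by omega, Or.inr C.symm⟩
            · -- i = 1, h1 = 3 : hgSet1 ⊆ hgSet2
              have hieq1 : i = 1 := by omega
              subst hieq1
              refine sub_false Hm1 H2 hne ?_
              rintro v ⟨r, hr, rfl | rfl⟩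
              · have : r = 0 ∨ r = 1 ∨ r = 2 := by omega
                rcases this with rfl | rfl | rfl
                · exact ⟨0, by omega, Or.inl f⟩
                · exact ⟨2, by omega, Or.inl A⟩
                · exact ⟨3, by omega, Or.inl B⟩
              · have : r = 0 ∨ r = 1 ∨ r = 2 := by omega
                rcases this with rfl | rfl | rfl
                · exact ⟨1, by omega, Or.inr P3⟩
                · exact ⟨3, by omega, Or.inr C⟩
                · exact ⟨2, by omega, Or.inr D⟩
      · -- aligned : u1 (i-1) = u2 (j-1)
        rcases Nat.lt_or_ge 1 i with hic | hic
        · have P5 : w2 (j - 2) = w1 (i - 2) := by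
            have adj : G.Adj (u1 (i - 1)) (w2 (j - 2)) := by
              rw [f]
              have := crossR H2 (i := j - 2) (by omega)
              rwa [show j - 2 + 1 = j - 1 by omega] at this
            rcases nbrU hdeg H1 (i := i - 1) (by omega) (by omega) adj with e | e | e
            · rwa [show i - 1 - 1 = i - 2 by omega] at e
            · rw [P3] at e
              exact absurd e (wNe H2 (by omega) (by omega) (by omega))
            · rw [show i - 1 + 1 = i by omega, C] at e
              exact absurd e (wNe H2 (by omega) (by omega) (by omega))
          have U5 : u1 (i - 2) = u2 (j - 2) := by
            have adj : G.Adj (w2 (j - 1)) (u1 (i - 2)) := by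
              rw [← P3]
              have := crossL H1 (i := i - 2) (by omega)
              rw [show i - 2 + 1 = i - 1 by omega] at this
              exact this.symm
            rcases nbrW hdeg H2 (i := j - 1) (by omega) (by omega) adj with e | e | e
            · rwa [show j - 1 - 1 = j - 2 by omega] at e
            · rw [← f] at e
              exact absurd e (uNe H1 (by omega) (by omega) (by omega))
            · rw [show j - 1 + 1 = j by omega, ← A] at e
              exact absurd e (uNe H1 (by omega) (by omega) (by omega))
          refine lemE hdeg Hm1 Hm2 hne (by omega) (i := i - 2) (j := j - 2)
            (by omega) (by omega) U5 P5.symm ?_ ?_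
          · rw [show i - 2 + 1 = i - 1 by omega, show j - 2 + 1 = j - 1 by omega]
            exact f
          · rw [show i - 2 + 1 = i - 1 by omega, show j - 2 + 1 = j - 1 by omega]
            exact P3
        · -- i = 1 (h1 = 3) : hgSet1 ⊆ hgSet2
          have hieq1 : i = 1 := by omega
          subst hieq1
          refine sub_false Hm1 H2 hne ?_
          rintro v ⟨r, hr, rfl | rfl⟩
          · have : r = 0 ∨ r = 1 ∨ r = 2 := by omega
            rcases this with rfl | rfl | rfl
            · exact ⟨j - 1, by omega, Or.inl f⟩
            · exact ⟨j, by omega, Or.inl A⟩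
            · exact ⟨j + 1, by omega, Or.inl B⟩
          · have : r = 0 ∨ r = 1 ∨ r = 2 := by omega
            rcases this with rfl | rfl | rfl
            · exact ⟨j - 1, by omega, Or.inr P3⟩
            · exact ⟨j + 1, by omega, Or.inr C⟩
            · exact ⟨j, by omega, Or.inr D⟩
      · -- u1 (i-1) = u2 j : contradiction
        rw [show j - 1 + 1 = j by omega, ← A] at f
        exact absurd f (uNe H1 (by omega) (by omega) (by omega))
    · -- j = 1
      have hjeq : j = 1 := by omega
      subst hjeq
      rcases Nat.lt_or_ge 1 i with hic | hic
      · have adjP : G.Adj (w1 (i - 1)) (u2 0) := by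
          rw [show w1 (i - 1) = w2 0 from P3]
          exact (rung H2 (by omega)).symm
        rcases nbrW hdeg H1 (i := i - 1) (by omega) (by omega) adjP with f | f | f
        · -- u2 0 = u1 (i-2) : sheared down
          rw [show i - 1 - 1 = i - 2 by omega] at f
          have kill : G.Adj (u1 (i - 2)) (w1 (i + 1)) := by
            rw [← f, D]; exact crossL H2 (i := 0) (by omega)
          rcases Nat.lt_or_ge 2 i with hi3 | hi3
          · have := midUW H1 (i := i - 2) (by omega) (by omega) (j := i + 1) (by omega) kill
            omega
          · -- i = 2, h1 = 4
            have hieq2 : i = 2 := by omega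
            subst hieq2
            have f0 : u2 0 = u1 0 := by simpa using f
            rcases Nat.lt_or_ge 3 h2 with hh2 | hh2
            · -- h2 ≥ 4
              have U23 : u2 3 = u1 1 := by
                have adj : G.Adj (w1 2) (u2 3) := by
                  rw [C]; exact (crossR H2 (i := 2) (by omega)).symm
                rcases nbrW hdeg H1 (i := 2) (by omega) (by omega) adj with e | e | e
                · exact e
                · rw [A] at e
                  exact absurd e (uNe H2 (by omega) (by omega) (by omega))
                · rw [B] at e
                  exact absurd e (uNe H2 (by omega) (by omega) (by omega))
              rcases Nat.lt_or_ge 4 h2 with hh5 | hh5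
              · have kill2 : G.Adj (u2 3) (w2 0) := by
                  rw [U23, ← show w1 1 = w2 0 from P3]
                  exact rung H1 (by omega)
                have := midUW H2 (i := 3) (by omega) (by omega) (j := 0) (by omega) kill2
                omega
              · -- h2 = 4
                have W23 : w2 3 = w1 0 := by
                  have adj : G.Adj (u1 1) (w2 3) := by
                    rw [← U23]; exact rung H2 (by omega)
                  rcases nbrU hdeg H1 (i := 1) (by omega) (by omega) adj with e | e | e
                  · exact e
                  · rw [show w1 1 = w2 0 from P3] at e
                    exact absurd e (wNe H2 (by omega) (by omega) (by omega))
                  · rw [C] at e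
                    exact absurd e (wNe H2 (by omega) (by omega) (by omega))
                refine sub_false Hm2 H1 hne.symm ?_
                rintro v ⟨r, hr, rfl | rfl⟩
                · have : r = 0 ∨ r = 1 ∨ r = 2 ∨ r = 3 := by omega
                  rcases this with rfl | rfl | rfl | rfl
                  · exact ⟨0, by omega, Or.inl f0⟩
                  · exact ⟨2, by omega, Or.inl A.symm⟩
                  · exact ⟨3, by omega, Or.inl B.symm⟩
                  · exact ⟨1, by omega, Or.inl U23⟩
                · have : r = 0 ∨ r = 1 ∨ r = 2 ∨ r = 3 := by omega
                  rcases this with rfl | rfl | rfl | rfl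
                  · exact ⟨1, by omega, Or.inr P3.symm⟩
                  · exact ⟨3, by omega, Or.inr D.symm⟩
                  · exact ⟨2, by omega, Or.inr C.symm⟩
                  · exact ⟨0, by omega, Or.inr W23⟩
            · -- h2 = 3
              refine sub_false Hm2 H1 hne.symm ?_
              rintro v ⟨r, hr, rfl | rfl⟩
              · have : r = 0 ∨ r = 1 ∨ r = 2 := by omega
                rcases this with rfl | rfl | rfl
                · exact ⟨0, by omega, Or.inl f0⟩
                · exact ⟨2, by omega, Or.inl A.symm⟩
                · exact ⟨3, by omega, Or.inl B.symm⟩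
              · have : r = 0 ∨ r = 1 ∨ r = 2 := by omega
                rcases this with rfl | rfl | rfl
                · exact ⟨1, by omega, Or.inr P3.symm⟩
                · exact ⟨3, by omega, Or.inr D.symm⟩
                · exact ⟨2, by omega, Or.inr C.symm⟩
        · -- u2 0 = u1 (i-1) : aligned
          rcases Nat.lt_or_ge 3 h2 with hh2 | hh2
          · -- h2 ≥ 4 : pure contradiction
            have adj : G.Adj (w1 i) (u2 3) := by
              rw [C]; exact (crossR H2 (i := 2) (by omega)).symm
            rcases nbrW hdeg H1 hi1 hi2 adj with e | e | e
            · rw [← f] at e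
              exact (uNe H2 (by omega) (by omega) (by omega)) e
            · rw [A] at e
              exact (uNe H2 (by omega) (by omega) (by omega)) e
            · rw [B] at e
              exact (uNe H2 (by omega) (by omega) (by omega)) e
          · -- h2 = 3 : hgSet2 ⊆ hgSet1
            refine sub_false Hm2 H1 hne.symm ?_
            rintro v ⟨r, hr, rfl | rfl⟩
            · have : r = 0 ∨ r = 1 ∨ r = 2 := by omega
              rcases this with rfl | rfl | rfl
              · exact ⟨i - 1, by omega, Or.inl f⟩
              · exact ⟨i, by omega, Or.inl A.symm⟩
              · exact ⟨i + 1, by omega, Or.inl B.symm⟩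
            · have : r = 0 ∨ r = 1 ∨ r = 2 := by omega
              rcases this with rfl | rfl | rfl
              · exact ⟨i - 1, by omega, Or.inr P3.symm⟩
              · exact ⟨i + 1, by omega, Or.inr D.symm⟩
              · exact ⟨i, by omega, Or.inr C.symm⟩
        · -- u2 0 = u1 i : contradiction
          rw [show i - 1 + 1 = i by omega, A] at f
          exact (uNe H2 (by omega) (by omega) (by omega)) f.symm
      · -- i = 1 (h1 = 3), j = 1 : use bad to get h2 ≥ 4
        have hieq1 : i = 1 := by omega
        have h1eq : h1 = 3 := by omega
        subst hieq1
        have h24 : 4 ≤ h2 := by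
          rcases Nat.lt_or_ge h2 4 with hh | hh
          · exact absurd ⟨by omega, by omega⟩ bad
          · exact hh
        have U33 : u2 3 = u1 0 := by
          have adj : G.Adj (w1 1) (u2 3) := by
            rw [C]; exact (crossR H2 (i := 2) (by omega)).symm
          rcases nbrW hdeg H1 (i := 1) (by omega) (by omega) adj with e | e | e
          · exact e
          · rw [A] at e
            exact absurd e (uNe H2 (by omega) (by omega) (by omega))
          · rw [B] at e
            exact absurd e (uNe H2 (by omega) (by omega) (by omega))
        refine sub_false Hm1 H2 hne ?_
        rintro v ⟨r, hr, rfl | rfl⟩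
        · have : r = 0 ∨ r = 1 ∨ r = 2 := by omega
          rcases this with rfl | rfl | rfl
          · exact ⟨3, by omega, Or.inl U33.symm⟩
          · exact ⟨1, by omega, Or.inl A⟩
          · exact ⟨2, by omega, Or.inl B⟩
        · have : r = 0 ∨ r = 1 ∨ r = 2 := by omega
          rcases this with rfl | rfl | rfl
          · exact ⟨0, by omega, Or.inr P3⟩
          · exact ⟨2, by omega, Or.inr C⟩
          · exact ⟨1, by omega, Or.inr D⟩

/-- δ=+1 core: `u1 i = u2 j`, `w1 i = w2 (j+1)`, `w1 (i+1) = w2 j`. -/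
theorem step3d1core (hdeg : ∀ v : V, G.degree v ≤ 3)
    (Hm1 : IsMaxHourglass G h1 u1 w1) (Hm2 : IsMaxHourglass G h2 u2 w2)
    (hne : hgSet h1 u1 w1 ≠ hgSet h2 u2 w2) (bad : ¬(h1 = h2 ∧ h2 ≤ 3))
    {i j : ℕ} (hi1 : 1 ≤ i) (hi2 : i + 1 < h1) (hj1 : 1 ≤ j) (hj2 : j + 1 < h2)
    (A : u1 i = u2 j) (C : w1 i = w2 (j + 1)) (D : w1 (i + 1) = w2 j) : False := by
  have H1 := Hm1.1
  have H2 := Hm2.1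
  have adj : G.Adj (w2 j) (u1 (i + 1)) := by
    rw [← D]; exact (rung H1 (by omega)).symm
  rcases nbrW hdeg H2 hj1 hj2 adj with Q | Q | Q
  · -- branch Q : u1 (i+1) = u2 (j-1)
    have E1 : u2 (j + 1) = u1 (i - 1) := by
      have adj2 : G.Adj (w1 i) (u2 (j + 1)) := by
        rw [C]; exact (rung H2 (by omega)).symm
      rcases nbrW hdeg H1 hi1 hi2 adj2 with e | e | e
      · exact e
      · rw [A] at e; exact absurd e (uNe H2 (by omega) (by omega) (by omega))
      · rw [Q] at e; exact absurd e (uNe H2 (by omega) (by omega) (by omega))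
    have P3 : w1 (i - 1) = w2 (j - 1) := by
      have adj3 : G.Adj (u2 j) (w1 (i - 1)) := by
        rw [← A]
        have := crossR H1 (i := i - 1) (by omega)
        rwa [show i - 1 + 1 = i by omega] at this
      rcases nbrU hdeg H2 hj1 hj2 adj3 with e | e | e
      · exact e
      · rw [← D] at e; exact absurd e (wNe H1 (by omega) (by omega) (by omega))
      · rw [← C] at e; exact absurd e (wNe H1 (by omega) (by omega) (by omega))
    have kill : G.Adj (u2 (j + 1)) (w2 (j - 1)) := by
      rw [E1, ← P3]
      have := rung H1 (i := i - 1) (show i - 1 < h1 by omega)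
      exact this
    rcases Nat.lt_or_ge (j + 2) h2 with hk | hk
    · have := midUW H2 (i := j + 1) (by omega) (by omega) (j := j - 1) (by omega) kill
      omega
    · rcases Nat.lt_or_ge 1 j with hk2 | hk2
      · have := midWU H2 (i := j - 1) (by omega) (by omega) (j := j + 1) (by omega) kill.symm
        omega
      · -- j = 1, h2 = 3 : hgSet2 ⊆ hgSet1
        have hjeq : j = 1 := by omega
        subst hjeq
        refine sub_false Hm2 H1 hne.symm ?_
        rintro v ⟨r, hr, rfl | rfl⟩
        · have : r = 0 ∨ r = 1 ∨ r = 2 := by omega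
          rcases this with rfl | rfl | rfl
          · exact ⟨i + 1, by omega, Or.inl Q.symm⟩
          · exact ⟨i, by omega, Or.inl A.symm⟩
          · exact ⟨i - 1, by omega, Or.inl E1⟩
        · have : r = 0 ∨ r = 1 ∨ r = 2 := by omega
          rcases this with rfl | rfl | rfl
          · exact ⟨i - 1, by omega, Or.inr (by simpa using P3.symm)⟩
          · exact ⟨i + 1, by omega, Or.inr D.symm⟩
          · exact ⟨i, by omega, Or.inr C.symm⟩
  · rw [← A] at Q
    exact absurd Q (uNe H1 (by omega) (by omega) (by omega))
  · exact crossed2 hdeg Hm1 Hm2 hne bad hi1 hi2 hj1 hj2 A Q C D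

/-- δ=+1 : `u1 i = u2 j`, `w1 i = w2 (j+1)`. -/
theorem step3d1 (hdeg : ∀ v : V, G.degree v ≤ 3)
    (Hm1 : IsMaxHourglass G h1 u1 w1) (Hm2 : IsMaxHourglass G h2 u2 w2)
    (hne : hgSet h1 u1 w1 ≠ hgSet h2 u2 w2) (bad : ¬(h1 = h2 ∧ h2 ≤ 3))
    {i j : ℕ} (hi1 : 1 ≤ i) (hi2 : i + 1 < h1) (hj1 : 1 ≤ j) (hj2 : j + 1 < h2)
    (A : u1 i = u2 j) (C : w1 i = w2 (j + 1)) : False := by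
  have H1 := Hm1.1
  have H2 := Hm2.1
  have adj : G.Adj (u1 i) (w2 j) := by
    rw [A]; exact rung H2 (by omega)
  rcases nbrU hdeg H1 hi1 hi2 adj with e | e | e
  · -- w2 j = w1 (i-1) : reversed H1
    refine step3d1core hdeg (rev_max Hm1) Hm2
      (by rw [rev_hgSet]; exact hne) bad
      (i := h1 - 1 - i) (j := j) (by omega) (by omega) hj1 hj2 ?_ ?_ ?_
    · show u1 (h1 - 1 - (h1 - 1 - i)) = u2 j
      rw [show h1 - 1 - (h1 - 1 - i) = i by omega]; exact A
    · show w1 (h1 - 1 - (h1 - 1 - i)) = w2 (j + 1)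
      rw [show h1 - 1 - (h1 - 1 - i) = i by omega]; exact C
    · show w1 (h1 - 1 - (h1 - 1 - i + 1)) = w2 j
      rw [show h1 - 1 - (h1 - 1 - i + 1) = i - 1 by omega]; exact e.symm
  · rw [C] at e
    exact absurd e.symm (wNe H2 (by omega) (by omega) (by omega))
  · exact step3d1core hdeg Hm1 Hm2 hne bad hi1 hi2 hj1 hj2 A C e.symm

/-- δ=0 core : aligned row plus `w1 (i+1) = w2 (j+1)`. -/
theorem step3d0core (hdeg : ∀ v : V, G.degree v ≤ 3)
    (Hm1 : IsMaxHourglass G h1 u1 w1) (Hm2 : IsMaxHourglass G h2 u2 w2)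
    (hne : hgSet h1 u1 w1 ≠ hgSet h2 u2 w2)
    {i j : ℕ} (hi1 : 1 ≤ i) (hi2 : i + 1 < h1) (hj1 : 1 ≤ j) (hj2 : j + 1 < h2)
    (A : u1 i = u2 j) (B0 : w1 i = w2 j) (W : w1 (i + 1) = w2 (j + 1)) : False := by
  have H1 := Hm1.1
  have H2 := Hm2.1
  have adj : G.Adj (w2 j) (u1 (i + 1)) := by
    rw [← B0]; exact (crossR H1 (by omega)).symm
  rcases nbrW hdeg H2 hj1 hj2 adj with e | e | e
  · -- anti : u1 (i+1) = u2 (j-1)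
    have kill : G.Adj (u2 (j - 1)) (w2 (j + 1)) := by
      rw [← e, ← W]; exact rung H1 (by omega)
    rcases Nat.lt_or_ge 1 j with hk | hk
    · have := midUW H2 (i := j - 1) (by omega) (by omega) (j := j + 1) (by omega) kill
      omega
    · have hjeq : j = 1 := by omega
      subst hjeq
      rcases Nat.lt_or_ge (1 + 2) h2 with hk2 | hk2
      · have := midWU H2 (i := 2) (by omega) (by omega) (j := 0) (by omega) kill.symm
        omega
      · -- h2 = 3 : hgSet2 ⊆ hgSet1
        have eU : u1 (i - 1) = u2 2 := by
          have adj2 : G.Adj (w2 1) (u1 (i - 1)) := by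
            rw [← B0]
            have := crossL H1 (i := i - 1) (by omega)
            rw [show i - 1 + 1 = i by omega] at this
            exact this.symm
          rcases nbrW hdeg H2 (i := 1) (by omega) (by omega) adj2 with e2 | e2 | e2
          · rw [show (1:ℕ) - 1 = 0 by omega, ← e] at e2
            exact absurd e2 (uNe H1 (by omega) (by omega) (by omega))
          · rw [← A] at e2
            exact absurd e2 (uNe H1 (by omega) (by omega) (by omega))
          · exact e2
        have eW : w1 (i - 1) = w2 0 := by
          have adj3 : G.Adj (u2 1) (w1 (i - 1)) := by
            rw [← A]
            have := crossR H1 (i := i - 1) (by omega)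
            rwa [show i - 1 + 1 = i by omega] at this
          rcases nbrU hdeg H2 (i := 1) (by omega) (by omega) adj3 with e2 | e2 | e2
          · rwa [show (1:ℕ) - 1 = 0 by omega] at e2
          · rw [← B0] at e2
            exact absurd e2 (wNe H1 (by omega) (by omega) (by omega))
          · rw [← W] at e2
            exact absurd e2 (wNe H1 (by omega) (by omega) (by omega))
        refine sub_false Hm2 H1 hne.symm ?_
        rintro v ⟨r, hr, rfl | rfl⟩
        · have : r = 0 ∨ r = 1 ∨ r = 2 := by omega
          rcases this with rfl | rfl | rfl
          · exact ⟨i + 1, by omega, Or.inl e.symm⟩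
          · exact ⟨i, by omega, Or.inl A.symm⟩
          · exact ⟨i - 1, by omega, Or.inl eU.symm⟩
        · have : r = 0 ∨ r = 1 ∨ r = 2 := by omega
          rcases this with rfl | rfl | rfl
          · exact ⟨i - 1, by omega, Or.inr eW.symm⟩
          · exact ⟨i, by omega, Or.inr B0.symm⟩
          · exact ⟨i + 1, by omega, Or.inr W.symm⟩
  · rw [← A] at e
    exact absurd e (uNe H1 (by omega) (by omega) (by omega))
  · exact lemE hdeg Hm1 Hm2 hne (by omega) hi2 hj2 A B0 e W

/-- δ=0 : aligned row. -/
theorem step3d0 (hdeg : ∀ v : V, G.degree v ≤ 3)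
    (Hm1 : IsMaxHourglass G h1 u1 w1) (Hm2 : IsMaxHourglass G h2 u2 w2)
    (hne : hgSet h1 u1 w1 ≠ hgSet h2 u2 w2)
    {i j : ℕ} (hi1 : 1 ≤ i) (hi2 : i + 1 < h1) (hj1 : 1 ≤ j) (hj2 : j + 1 < h2)
    (A : u1 i = u2 j) (B0 : w1 i = w2 j) : False := by
  have H1 := Hm1.1
  have H2 := Hm2.1
  have adj : G.Adj (u2 j) (w1 (i + 1)) := by
    rw [← A]; exact crossL H1 (by omega)
  rcases nbrU hdeg H2 hj1 hj2 adj with e | e | e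
  · -- w1 (i+1) = w2 (j-1) : reversed H2
    refine step3d0core hdeg Hm1 (rev_max Hm2)
      (by rw [rev_hgSet]; exact hne)
      (i := i) (j := h2 - 1 - j) hi1 hi2 (by omega) (by omega) ?_ ?_ ?_
    · show u1 i = u2 (h2 - 1 - (h2 - 1 - j))
      rw [show h2 - 1 - (h2 - 1 - j) = j by omega]; exact A
    · show w1 i = w2 (h2 - 1 - (h2 - 1 - j))
      rw [show h2 - 1 - (h2 - 1 - j) = j by omega]; exact B0
    · show w1 (i + 1) = w2 (h2 - 1 - (h2 - 1 - j + 1))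
      rw [show h2 - 1 - (h2 - 1 - j + 1) = j - 1 by omega]; exact e
  · rw [← B0] at e
    exact absurd e (wNe H1 (by omega) (by omega) (by omega))
  · exact step3d0core hdeg Hm1 Hm2 hne hi1 hi2 hj1 hj2 A B0 e

/-- Shared middle-middle vertex (u-side in both hourglasses) yields `False`. -/
theorem step3 (hdeg : ∀ v : V, G.degree v ≤ 3)
    (Hm1 : IsMaxHourglass G h1 u1 w1) (Hm2 : IsMaxHourglass G h2 u2 w2)
    (hne : hgSet h1 u1 w1 ≠ hgSet h2 u2 w2) (bad : ¬(h1 = h2 ∧ h2 ≤ 3))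
    {i j : ℕ} (hi1 : 1 ≤ i) (hi2 : i + 1 < h1) (hj1 : 1 ≤ j) (hj2 : j + 1 < h2)
    (A : u1 i = u2 j) : False := by
  have H1 := Hm1.1
  have H2 := Hm2.1
  have adj : G.Adj (u2 j) (w1 i) := by
    rw [← A]; exact rung H1 (by omega)
  rcases nbrU hdeg H2 hj1 hj2 adj with e | e | e
  · -- w1 i = w2 (j-1) : reversed H2
    refine step3d1 hdeg Hm1 (rev_max Hm2)
      (by rw [rev_hgSet]; exact hne) bad
      (i := i) (j := h2 - 1 - j) hi1 hi2 (by omega) (by omega) ?_ ?_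
    · show u1 i = u2 (h2 - 1 - (h2 - 1 - j))
      rw [show h2 - 1 - (h2 - 1 - j) = j by omega]
      exact A
    · show w1 i = w2 (h2 - 1 - (h2 - 1 - j + 1))
      rw [show h2 - 1 - (h2 - 1 - j + 1) = j - 1 by omega]
      exact e
  · exact step3d0 hdeg Hm1 Hm2 hne hi1 hi2 hj1 hj2 A e
  · exact step3d1 hdeg Hm1 Hm2 hne bad hi1 hi2 hj1 hj2 A e

/-- S2C-i : `u1 0 = u2 1`, `w1 1 = w2 0`, `w1 0 = w2 1`. -/
theorem s2ci (hdeg : ∀ v : V, G.degree v ≤ 3)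
    (Hm1 : IsMaxHourglass G h1 u1 w1) (Hm2 : IsMaxHourglass G h2 u2 w2)
    (hne : hgSet h1 u1 w1 ≠ hgSet h2 u2 w2) (bad : ¬(h1 = h2 ∧ h2 ≤ 3))
    (h13 : 3 ≤ h1) (h23 : 3 ≤ h2)
    (A0 : u1 0 = u2 1) (W10 : w1 1 = w2 0) (V0 : w1 0 = w2 1) : False := by
  have H1 := Hm1.1
  have H2 := Hm2.1
  have hnesw : hgSet h1 w1 u1 ≠ hgSet h2 w2 u2 := by
    rw [show hgSet h1 w1 u1 = hgSet h1 u1 w1 from swap_hgSet,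
      show hgSet h2 w2 u2 = hgSet h2 u2 w2 from swap_hgSet]
    exact hne
  have hnes2 : hgSet h1 u1 w1 ≠ hgSet h2 w2 u2 := by
    rw [show hgSet h2 w2 u2 = hgSet h2 u2 w2 from swap_hgSet]
    exact hne
  have adj1 : G.Adj (w2 1) (u1 1) := by
    rw [← V0]; exact (crossR H1 (i := 0) (by omega)).symm
  rcases nbrW hdeg H2 (i := 1) (by omega) (by omega) adj1 with U10 | U10 | U10
  · -- u1 1 = u2 0 : long case
    rw [show (1:ℕ) - 1 = 0 by omega] at U10
    have hab : G.Adj (w2 2) (u2 2) := (rung H2 (by omega)).symm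
    have hbw : G.Adj (u2 2) (w1 0) := by
      rw [V0]; exact crossR H2 (i := 1) (by omega)
    have hau : G.Adj (w2 2) (u1 0) := by
      rw [A0]; exact (crossL H2 (i := 1) (by omega)).symm
    by_cases hu22 : u2 2 ∈ hgSet h1 u1 w1
    · rcases adjW0 H1 hu22 hbw with X | X | X | X
      · rw [A0] at X; exact absurd X (uNe H2 (by omega) (by omega) (by omega))
      · rw [U10] at X; exact absurd X (uNe H2 (by omega) (by omega) (by omega))
      · -- u2 2 = u1 (h1-1)
        rcases Nat.lt_or_ge 3 h2 with h24 | h24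
        · -- h2 ≥ 4
          have t2 : w1 (h1 - 2) = w2 1 ∨ w1 (h1 - 2) = w2 2 ∨ w1 (h1 - 2) = w2 3 := by
            have adj : G.Adj (u2 2) (w1 (h1 - 2)) := by
              rw [X]
              have := crossR H1 (i := h1 - 2) (by omega)
              rwa [show h1 - 2 + 1 = h1 - 1 by omega] at this
            have := nbrU hdeg H2 (i := 2) (by omega) (by omega) adj
            rwa [show (2:ℕ) - 1 = 1 by omega, show (2:ℕ) + 1 = 3 by omega] at this
          rcases t2 with e2 | e2 | e2
          · rw [← V0] at e2
            exact absurd e2 (wNe H1 (by omega) (by omega) (by omega))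
          · exact step3 hdeg (swap_max Hm1) (swap_max Hm2) hnesw bad (i := h1 - 2) (j := 2)
              (by omega) (by omega) (by omega) (by omega) e2
          · -- w1 (h1-2) = w2 3
            have t1 : w1 (h1 - 1) = w2 1 ∨ w1 (h1 - 1) = w2 2 ∨ w1 (h1 - 1) = w2 3 := by
              have adj : G.Adj (u2 2) (w1 (h1 - 1)) := by
                rw [X]; exact rung H1 (by omega)
              have := nbrU hdeg H2 (i := 2) (by omega) (by omega) adj
              rwa [show (2:ℕ) - 1 = 1 by omega, show (2:ℕ) + 1 = 3 by omega] at this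
            rcases t1 with e1 | e1 | e1
            · rw [← V0] at e1
              exact absurd e1 (wNe H1 (by omega) (by omega) (by omega))
            · rcases Nat.lt_or_ge 4 h2 with h25 | h25
              · exact step3 hdeg (swap_max Hm1) (swap_max Hm2) hnesw bad (i := h1 - 2) (j := 3)
                  (by omega) (by omega) (by omega) (by omega) e2
              · -- h2 = 4 : containment H2 ⊆ H1
                have t3 : u2 3 = u1 (h1 - 3) ∨ u2 3 = u1 (h1 - 2) := by
                  have adj : G.Adj (w1 (h1 - 2)) (u2 3) := by
                    rw [e2]; exact (rung H2 (by omega)).symm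
                  rcases nbrW hdeg H1 (i := h1 - 2) (by omega) (by omega) adj with g | g | g
                  · left; rwa [show h1 - 2 - 1 = h1 - 3 by omega] at g
                  · right; exact g
                  · rw [show h1 - 2 + 1 = h1 - 1 by omega, ← X] at g
                    exact absurd g (uNe H2 (by omega) (by omega) (by omega))
                refine sub_false Hm2 H1 hne.symm ?_
                rintro v ⟨r, hr, rfl | rfl⟩
                · have : r = 0 ∨ r = 1 ∨ r = 2 ∨ r = 3 := by omega
                  rcases this with rfl | rfl | rfl | rfl
                  · exact ⟨1, by omega, Or.inl U10.symm⟩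
                  · exact ⟨0, by omega, Or.inl A0.symm⟩
                  · exact ⟨h1 - 1, by omega, Or.inl X⟩
                  · rcases t3 with g | g
                    · exact ⟨h1 - 3, by omega, Or.inl g⟩
                    · exact ⟨h1 - 2, by omega, Or.inl g⟩
                · have : r = 0 ∨ r = 1 ∨ r = 2 ∨ r = 3 := by omega
                  rcases this with rfl | rfl | rfl | rfl
                  · exact ⟨1, by omega, Or.inr W10.symm⟩
                  · exact ⟨0, by omega, Or.inr V0.symm⟩
                  · exact ⟨h1 - 1, by omega, Or.inr e1.symm⟩
                  · exact ⟨h1 - 2, by omega, Or.inr e2.symm⟩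
            · have := e1.trans e2.symm
              exact absurd this (wNe H1 (by omega) (by omega) (by omega))
        · -- h2 = 3
          by_cases hWe : w2 2 = w1 (h1 - 1)
          · refine sub_false Hm2 H1 hne.symm ?_
            rintro v ⟨r, hr, rfl | rfl⟩
            · have : r = 0 ∨ r = 1 ∨ r = 2 := by omega
              rcases this with rfl | rfl | rfl
              · exact ⟨1, by omega, Or.inl U10.symm⟩
              · exact ⟨0, by omega, Or.inl A0.symm⟩
              · exact ⟨h1 - 1, by omega, Or.inl X⟩
            · have : r = 0 ∨ r = 1 ∨ r = 2 := by omega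
              rcases this with rfl | rfl | rfl
              · exact ⟨1, by omega, Or.inr W10.symm⟩
              · exact ⟨0, by omega, Or.inr V0.symm⟩
              · exact ⟨h1 - 1, by omega, Or.inr hWe⟩
          · have trip := three_nbrs hdeg (v := u2 2) (a := w2 2) (b := w1 0) (c := w1 (h1 - 1))
              (by rw [V0]; exact wNe H2 (by omega) (by omega) (by omega)) hWe
              (wNe H1 (by omega) (by omega) (by omega))
              (rung H2 (by omega)) hbw
              (by rw [X]; exact rung H1 (by omega))
              (x := w1 (h1 - 2))
              (by rw [X]
                  have := crossR H1 (i := h1 - 2) (by omega)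
                  rwa [show h1 - 2 + 1 = h1 - 1 by omega] at this)
            rcases trip with g | g | g
            · -- w1 (h1-2) = w2 2 : containment
              refine sub_false Hm2 H1 hne.symm ?_
              rintro v ⟨r, hr, rfl | rfl⟩
              · have : r = 0 ∨ r = 1 ∨ r = 2 := by omega
                rcases this with rfl | rfl | rfl
                · exact ⟨1, by omega, Or.inl U10.symm⟩
                · exact ⟨0, by omega, Or.inl A0.symm⟩
                · exact ⟨h1 - 1, by omega, Or.inl X⟩
              · have : r = 0 ∨ r = 1 ∨ r = 2 := by omega
                rcases this with rfl | rfl | rfl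
                · exact ⟨1, by omega, Or.inr W10.symm⟩
                · exact ⟨0, by omega, Or.inr V0.symm⟩
                · exact ⟨h1 - 2, by omega, Or.inr g.symm⟩
            · exact absurd g (wNe H1 (by omega) (by omega) (by omega))
            · exact absurd g (wNe H1 (by omega) (by omega) (by omega))
      · -- u2 2 = w1 (h1-1) : Möbius
        rcases Nat.lt_or_ge 3 h2 with h24 | h24
        · -- h2 ≥ 4
          have t2 : u1 (h1 - 2) = w2 2 ∨ u1 (h1 - 2) = w2 3 := by
            have adj : G.Adj (u2 2) (u1 (h1 - 2)) := by
              rw [X]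
              have := crossL H1 (i := h1 - 2) (by omega)
              rw [show h1 - 2 + 1 = h1 - 1 by omega] at this
              exact this.symm
            have := nbrU hdeg H2 (i := 2) (by omega) (by omega) adj
            rw [show (2:ℕ) - 1 = 1 by omega, show (2:ℕ) + 1 = 3 by omega] at this
            rcases this with g | g | g
            · rw [← V0] at g
              exact absurd g (uwNe H1 (by omega) (by omega))
            · exact Or.inl g
            · exact Or.inr g
          rcases t2 with e2 | e2
          · exact step3 hdeg Hm1 (swap_max Hm2) hnes2 bad (i := h1 - 2) (j := 2)
              (by omega) (by omega) (by omega) (by omega) e2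
          · have t1 : u1 (h1 - 1) = w2 2 ∨ u1 (h1 - 1) = w2 3 := by
              have adj : G.Adj (u2 2) (u1 (h1 - 1)) := by
                rw [X]; exact (rung H1 (by omega)).symm
              have := nbrU hdeg H2 (i := 2) (by omega) (by omega) adj
              rw [show (2:ℕ) - 1 = 1 by omega, show (2:ℕ) + 1 = 3 by omega] at this
              rcases this with g | g | g
              · rw [← V0] at g
                exact absurd g (uwNe H1 (by omega) (by omega))
              · exact Or.inl g
              · exact Or.inr g
            rcases t1 with e1 | e1
            · rcases Nat.lt_or_ge 4 h2 with h25 | h25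
              · exact step3 hdeg Hm1 (swap_max Hm2) hnes2 bad (i := h1 - 2) (j := 3)
                  (by omega) (by omega) (by omega) (by omega) e2
              · -- h2 = 4 : containment H2 ⊆ H1
                have t3 : u2 3 = w1 (h1 - 3) ∨ u2 3 = w1 (h1 - 2) := by
                  have adj : G.Adj (u1 (h1 - 2)) (u2 3) := by
                    rw [e2]; exact (rung H2 (by omega)).symm
                  rcases nbrU hdeg H1 (i := h1 - 2) (by omega) (by omega) adj with g | g | g
                  · left; rwa [show h1 - 2 - 1 = h1 - 3 by omega] at g
                  · right; exact g
                  · rw [show h1 - 2 + 1 = h1 - 1 by omega, ← X] at g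
                    exact absurd g (uNe H2 (by omega) (by omega) (by omega))
                refine sub_false Hm2 H1 hne.symm ?_
                rintro v ⟨r, hr, rfl | rfl⟩
                · have : r = 0 ∨ r = 1 ∨ r = 2 ∨ r = 3 := by omega
                  rcases this with rfl | rfl | rfl | rfl
                  · exact ⟨1, by omega, Or.inl U10.symm⟩
                  · exact ⟨0, by omega, Or.inl A0.symm⟩
                  · exact ⟨h1 - 1, by omega, Or.inr X⟩
                  · rcases t3 with g | g
                    · exact ⟨h1 - 3, by omega, Or.inr g⟩
                    · exact ⟨h1 - 2, by omega, Or.inr g⟩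
                · have : r = 0 ∨ r = 1 ∨ r = 2 ∨ r = 3 := by omega
                  rcases this with rfl | rfl | rfl | rfl
                  · exact ⟨1, by omega, Or.inr W10.symm⟩
                  · exact ⟨0, by omega, Or.inr V0.symm⟩
                  · exact ⟨h1 - 1, by omega, Or.inl e1.symm⟩
                  · exact ⟨h1 - 2, by omega, Or.inl e2.symm⟩
            · have := e1.trans e2.symm
              exact absurd this (uNe H1 (by omega) (by omega) (by omega))
        · -- h2 = 3 Möbius
          by_cases hWe : w2 2 = u1 (h1 - 1) ∨ w2 2 = u1 (h1 - 2)
          · refine sub_false Hm2 H1 hne.symm ?_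
            rintro v ⟨r, hr, rfl | rfl⟩
            · have : r = 0 ∨ r = 1 ∨ r = 2 := by omega
              rcases this with rfl | rfl | rfl
              · exact ⟨1, by omega, Or.inl U10.symm⟩
              · exact ⟨0, by omega, Or.inl A0.symm⟩
              · exact ⟨h1 - 1, by omega, Or.inr X⟩
            · have : r = 0 ∨ r = 1 ∨ r = 2 := by omega
              rcases this with rfl | rfl | rfl
              · exact ⟨1, by omega, Or.inr W10.symm⟩
              · exact ⟨0, by omega, Or.inr V0.symm⟩
              · rcases hWe with g | g
                · exact ⟨h1 - 1, by omega, Or.inl g⟩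
                · exact ⟨h1 - 2, by omega, Or.inl g⟩
          · push_neg at hWe
            have trip := three_nbrs hdeg (v := u2 2) (a := w2 2) (b := w1 0) (c := u1 (h1 - 1))
              (by rw [V0]; exact wNe H2 (by omega) (by omega) (by omega))
              hWe.1 (wuNe H1 (by omega) (by omega))
              (rung H2 (by omega)) hbw
              (by rw [X]; exact (rung H1 (by omega)).symm)
              (x := u1 (h1 - 2))
              (by rw [X]
                  have := crossL H1 (i := h1 - 2) (by omega)
                  rw [show h1 - 2 + 1 = h1 - 1 by omega] at this
                  exact this.symm)
            rcases trip with g | g | g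
            · exact hWe.2 g.symm
            · exact absurd g (uwNe H1 (by omega) (by omega))
            · exact absurd g (uNe H1 (by omega) (by omega) (by omega))
    · by_cases hw22 : w2 2 ∈ hgSet h1 u1 w1
      · rcases adjU0 H1 hw22 hau with X | X | X | X
        · rw [V0] at X
          exact absurd X (wNe H2 (by omega) (by omega) (by omega))
        · rw [W10] at X
          exact absurd X (wNe H2 (by omega) (by omega) (by omega))
        · -- w2 2 = u1 (h1-1)
          rcases Nat.lt_or_ge 3 h2 with h24 | h24
          · have t1 : w1 (h1 - 1) = u2 3 := by
              have adj : G.Adj (w2 2) (w1 (h1 - 1)) := by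
                rw [X]; exact rung H1 (by omega)
              have := nbrW hdeg H2 (i := 2) (by omega) (by omega) adj
              rw [show (2:ℕ) - 1 = 1 by omega, show (2:ℕ) + 1 = 3 by omega] at this
              rcases this with g | g | g
              · rw [← A0] at g
                exact absurd g.symm (uwNe H1 (by omega) (by omega))
              · exact absurd (⟨h1 - 1, by omega, Or.inr g.symm⟩ : u2 2 ∈ hgSet h1 u1 w1) hu22
              · exact g
            have t2 : w1 (h1 - 2) = u2 3 := by
              have adj : G.Adj (w2 2) (w1 (h1 - 2)) := by
                rw [X]
                have := crossR H1 (i := h1 - 2) (by omega)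
                rwa [show h1 - 2 + 1 = h1 - 1 by omega] at this
              have := nbrW hdeg H2 (i := 2) (by omega) (by omega) adj
              rw [show (2:ℕ) - 1 = 1 by omega, show (2:ℕ) + 1 = 3 by omega] at this
              rcases this with g | g | g
              · rw [← A0] at g
                exact absurd g.symm (uwNe H1 (by omega) (by omega))
              · exact absurd (⟨h1 - 2, by omega, Or.inr g.symm⟩ : u2 2 ∈ hgSet h1 u1 w1) hu22
              · exact g
            exact absurd (t1.trans t2.symm) (wNe H1 (by omega) (by omega) (by omega))
          · -- h2 = 3
            by_cases hc : u2 2 = w1 (h1 - 1) ∨ u2 2 = w1 (h1 - 2)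
            · rcases hc with g | g
              · exact absurd (⟨h1 - 1, by omega, Or.inr g⟩ : u2 2 ∈ hgSet h1 u1 w1) hu22
              · exact absurd (⟨h1 - 2, by omega, Or.inr g⟩ : u2 2 ∈ hgSet h1 u1 w1) hu22
            · push_neg at hc
              have trip := three_nbrs hdeg (v := w2 2) (a := u2 2) (b := u1 0) (c := w1 (h1 - 1))
                (by rw [A0]; exact uNe H2 (by omega) (by omega) (by omega))
                hc.1 (uwNe H1 (by omega) (by omega))
                (rung H2 (by omega)).symm hau
                (by rw [X]; exact rung H1 (by omega))
                (x := w1 (h1 - 2))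
                (by rw [X]
                    have := crossR H1 (i := h1 - 2) (by omega)
                    rwa [show h1 - 2 + 1 = h1 - 1 by omega] at this)
              rcases trip with g | g | g
              · exact hc.2 g.symm
              · exact absurd g.symm (uwNe H1 (by omega) (by omega))
              · exact absurd g (wNe H1 (by omega) (by omega) (by omega))
        · -- w2 2 = w1 (h1-1)
          rcases Nat.lt_or_ge 3 h2 with h24 | h24
          · have t1 : u1 (h1 - 1) = u2 3 := by
              have adj : G.Adj (w2 2) (u1 (h1 - 1)) := by
                rw [X]; exact (rung H1 (by omega)).symm
              have := nbrW hdeg H2 (i := 2) (by omega) (by omega) adj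
              rw [show (2:ℕ) - 1 = 1 by omega, show (2:ℕ) + 1 = 3 by omega] at this
              rcases this with g | g | g
              · rw [← A0] at g
                exact absurd g (uNe H1 (by omega) (by omega) (by omega))
              · exact absurd (⟨h1 - 1, by omega, Or.inl g.symm⟩ : u2 2 ∈ hgSet h1 u1 w1) hu22
              · exact g
            have t2 : u1 (h1 - 2) = u2 3 := by
              have adj : G.Adj (w2 2) (u1 (h1 - 2)) := by
                rw [X]
                have := crossL H1 (i := h1 - 2) (by omega)
                rw [show h1 - 2 + 1 = h1 - 1 by omega] at this
                exact this.symm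
              have := nbrW hdeg H2 (i := 2) (by omega) (by omega) adj
              rw [show (2:ℕ) - 1 = 1 by omega, show (2:ℕ) + 1 = 3 by omega] at this
              rcases this with g | g | g
              · rw [← A0] at g
                exact absurd g (uNe H1 (by omega) (by omega) (by omega))
              · exact absurd (⟨h1 - 2, by omega, Or.inl g.symm⟩ : u2 2 ∈ hgSet h1 u1 w1) hu22
              · exact g
            exact absurd (t1.trans t2.symm) (uNe H1 (by omega) (by omega) (by omega))
          · -- h2 = 3
            by_cases hc : u2 2 = u1 (h1 - 1) ∨ u2 2 = u1 (h1 - 2)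
            · rcases hc with g | g
              · exact absurd (⟨h1 - 1, by omega, Or.inl g⟩ : u2 2 ∈ hgSet h1 u1 w1) hu22
              · exact absurd (⟨h1 - 2, by omega, Or.inl g⟩ : u2 2 ∈ hgSet h1 u1 w1) hu22
            · push_neg at hc
              have trip := three_nbrs hdeg (v := w2 2) (a := u2 2) (b := u1 0) (c := u1 (h1 - 1))
                (by rw [A0]; exact uNe H2 (by omega) (by omega) (by omega))
                hc.1 (uNe H1 (by omega) (by omega) (by omega))
                (rung H2 (by omega)).symm hau
                (by rw [X]; exact (rung H1 (by omega)).symm)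
                (x := u1 (h1 - 2))
                (by rw [X]
                    have := crossL H1 (i := h1 - 2) (by omega)
                    rw [show h1 - 2 + 1 = h1 - 1 by omega] at this
                    exact this.symm)
              rcases trip with g | g | g
              · exact hc.2 g.symm
              · exact absurd g (uNe H1 (by omega) (by omega) (by omega))
              · exact absurd g (uNe H1 (by omega) (by omega) (by omega))
      · exact extend_false hdeg Hm1 hab hbw hau hw22 hu22
  · rw [← A0] at U10
    exact absurd U10 (uNe H1 (by omega) (by omega) (by omega))
  · -- u1 1 = u2 2
    rw [show (1:ℕ) + 1 = 2 by omega] at U10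
    rcases Nat.lt_or_ge (2 + 1) h2 with hh | hh
    · exact step3 hdeg Hm1 Hm2 hne bad (i := 1) (j := 2)
        (by omega) (by omega) (by omega) hh U10
    · -- h2 = 3
      have f1 : w2 2 = w1 2 := by
        have adj : G.Adj (u1 1) (w2 2) := by
          rw [U10]; exact rung H2 (by omega)
        rcases nbrU hdeg H1 (i := 1) (by omega) (by omega) adj with g | g | g
        · rw [show (1:ℕ) - 1 = 0 by omega, V0] at g
          exact absurd g (wNe H2 (by omega) (by omega) (by omega))
        · rw [W10] at g
          exact absurd g (wNe H2 (by omega) (by omega) (by omega))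
        · rw [show (1:ℕ) + 1 = 2 by omega] at g
          exact g
      have f2 : u2 0 = u1 2 := by
        have adj : G.Adj (w1 1) (u2 0) := by
          rw [W10]; exact (rung H2 (by omega)).symm
        rcases nbrW hdeg H1 (i := 1) (by omega) (by omega) adj with g | g | g
        · rw [show (1:ℕ) - 1 = 0 by omega, A0] at g
          exact absurd g (uNe H2 (by omega) (by omega) (by omega))
        · rw [U10] at g
          exact absurd g (uNe H2 (by omega) (by omega) (by omega))
        · rw [show (1:ℕ) + 1 = 2 by omega] at g
          exact g
      refine sub_false Hm2 H1 hne.symm ?_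
      rintro v ⟨r, hr, rfl | rfl⟩
      · have : r = 0 ∨ r = 1 ∨ r = 2 := by omega
        rcases this with rfl | rfl | rfl
        · exact ⟨2, by omega, Or.inl f2⟩
        · exact ⟨0, by omega, Or.inl A0.symm⟩
        · exact ⟨1, by omega, Or.inl U10.symm⟩
      · have : r = 0 ∨ r = 1 ∨ r = 2 := by omega
        rcases this with rfl | rfl | rfl
        · exact ⟨1, by omega, Or.inr W10.symm⟩
        · exact ⟨0, by omega, Or.inr V0.symm⟩
        · exact ⟨2, by omega, Or.inr f1⟩

/-- S2C-ii : `u1 0 = u2 1`, `w1 1 = w2 0`, `w1 0 = w2 2`. -/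
theorem s2cii (hdeg : ∀ v : V, G.degree v ≤ 3)
    (Hm1 : IsMaxHourglass G h1 u1 w1) (Hm2 : IsMaxHourglass G h2 u2 w2)
    (hne : hgSet h1 u1 w1 ≠ hgSet h2 u2 w2) (bad : ¬(h1 = h2 ∧ h2 ≤ 3))
    (h13 : 3 ≤ h1) (h23 : 3 ≤ h2)
    (A0 : u1 0 = u2 1) (W10 : w1 1 = w2 0) (V2 : w1 0 = w2 2) : False := by
  have H1 := Hm1.1
  have H2 := Hm2.1
  have hnesw : hgSet h1 w1 u1 ≠ hgSet h2 w2 u2 := by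
    rw [show hgSet h1 w1 u1 = hgSet h1 u1 w1 from swap_hgSet,
      show hgSet h2 w2 u2 = hgSet h2 u2 w2 from swap_hgSet]
    exact hne
  have hnes2 : hgSet h1 u1 w1 ≠ hgSet h2 w2 u2 := by
    rw [show hgSet h2 w2 u2 = hgSet h2 u2 w2 from swap_hgSet]
    exact hne
  rcases Nat.lt_or_ge 3 h2 with h24 | h24
  · -- h2 ≥ 4
    have adj : G.Adj (w2 2) (u1 1) := by
      rw [← V2]; exact (crossR H1 (i := 0) (by omega)).symm
    have := nbrW hdeg H2 (i := 2) (by omega) (by omega) adj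
    rw [show (2:ℕ) - 1 = 1 by omega, show (2:ℕ) + 1 = 3 by omega] at this
    rcases this with Y | Y | Y
    · rw [← A0] at Y
      exact absurd Y (uNe H1 (by omega) (by omega) (by omega))
    · exact step3 hdeg Hm1 Hm2 hne bad (i := 1) (j := 2)
        (by omega) (by omega) (by omega) (by omega) Y
    · -- u1 1 = u2 3
      rcases Nat.lt_or_ge 4 h2 with h25 | h25
      · exact step3 hdeg Hm1 Hm2 hne bad (i := 1) (j := 3)
          (by omega) (by omega) (by omega) (by omega) Y
      · -- h2 = 4
        have g1 : w2 3 = w1 2 := by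
          have adj2 : G.Adj (u1 1) (w2 3) := by
            rw [Y]; exact rung H2 (by omega)
          rcases nbrU hdeg H1 (i := 1) (by omega) (by omega) adj2 with g | g | g
          · rw [show (1:ℕ) - 1 = 0 by omega, V2] at g
            exact absurd g (wNe H2 (by omega) (by omega) (by omega))
          · rw [W10] at g
            exact absurd g (wNe H2 (by omega) (by omega) (by omega))
          · rwa [show (1:ℕ) + 1 = 2 by omega] at g
        have g2 : u2 0 = u1 2 := by
          have adj2 : G.Adj (w1 1) (u2 0) := by
            rw [W10]; exact (rung H2 (by omega)).symm
          rcases nbrW hdeg H1 (i := 1) (by omega) (by omega) adj2 with g | g | g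
          · rw [show (1:ℕ) - 1 = 0 by omega, A0] at g
            exact absurd g (uNe H2 (by omega) (by omega) (by omega))
          · rw [Y] at g
            exact absurd g (uNe H2 (by omega) (by omega) (by omega))
          · rwa [show (1:ℕ) + 1 = 2 by omega] at g
        rcases Nat.lt_or_ge 3 h1 with h14 | h14
        · -- h1 ≥ 4 : derive remaining rows and containment of H2 in H1
          have g3 : u2 2 = u1 3 := by
            have adj2 : G.Adj (w1 2) (u2 2) := by
              rw [← g1]; exact (crossL H2 (i := 2) (by omega)).symm
            rcases nbrW hdeg H1 (i := 2) (by omega) (by omega) adj2 with g | g | g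
            · rw [show (2:ℕ) - 1 = 1 by omega, Y] at g
              exact absurd g (uNe H2 (by omega) (by omega) (by omega))
            · rw [← g2] at g
              exact absurd g (uNe H2 (by omega) (by omega) (by omega))
            · rwa [show (2:ℕ) + 1 = 3 by omega] at g
          have g4 : w2 1 = w1 3 := by
            have adj2 : G.Adj (u2 2) (w1 3) := by
              rw [g3]; exact rung H1 (by omega)
            rcases nbrU hdeg H2 (i := 2) (by omega) (by omega) adj2 with g | g | g
            · rw [show (2:ℕ) - 1 = 1 by omega] at g
              exact g.symm
            · rw [← V2] at g
              exact absurd g (wNe H1 (by omega) (by omega) (by omega))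
            · rw [show (2:ℕ) + 1 = 3 by omega, g1] at g
              exact absurd g (wNe H1 (by omega) (by omega) (by omega))
          refine sub_false Hm2 H1 hne.symm ?_
          rintro v ⟨r, hr, rfl | rfl⟩
          · have : r = 0 ∨ r = 1 ∨ r = 2 ∨ r = 3 := by omega
            rcases this with rfl | rfl | rfl | rfl
            · exact ⟨2, by omega, Or.inl g2⟩
            · exact ⟨0, by omega, Or.inl A0.symm⟩
            · exact ⟨3, by omega, Or.inl g3⟩
            · exact ⟨1, by omega, Or.inl Y.symm⟩
          · have : r = 0 ∨ r = 1 ∨ r = 2 ∨ r = 3 := by omega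
            rcases this with rfl | rfl | rfl | rfl
            · exact ⟨1, by omega, Or.inr W10.symm⟩
            · exact ⟨3, by omega, Or.inr g4⟩
            · exact ⟨0, by omega, Or.inr V2.symm⟩
            · exact ⟨2, by omega, Or.inr g1⟩
        · -- h1 = 3 : containment of H1 in H2
          refine sub_false Hm1 H2 hne ?_
          rintro v ⟨r, hr, rfl | rfl⟩
          · have : r = 0 ∨ r = 1 ∨ r = 2 := by omega
            rcases this with rfl | rfl | rfl
            · exact ⟨1, by omega, Or.inl A0⟩
            · exact ⟨3, by omega, Or.inl Y⟩
            · exact ⟨0, by omega, Or.inl g2.symm⟩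
          · have : r = 0 ∨ r = 1 ∨ r = 2 := by omega
            rcases this with rfl | rfl | rfl
            · exact ⟨2, by omega, Or.inr V2⟩
            · exact ⟨0, by omega, Or.inr W10⟩
            · exact ⟨3, by omega, Or.inr g1.symm⟩
  · -- h2 = 3
    by_cases hc : u1 1 = u2 2
    · have k1 : w2 1 = w1 2 := by
        have adj : G.Adj (u1 1) (w2 1) := by
          rw [hc]; exact crossR H2 (i := 1) (by omega)
        rcases nbrU hdeg H1 (i := 1) (by omega) (by omega) adj with g | g | g
        · rw [show (1:ℕ) - 1 = 0 by omega, V2] at g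
          exact absurd g (wNe H2 (by omega) (by omega) (by omega))
        · rw [W10] at g
          exact absurd g (wNe H2 (by omega) (by omega) (by omega))
        · rw [show (1:ℕ) + 1 = 2 by omega] at g
          exact g
      have k2 : u1 2 = u2 0 := by
        have adj : G.Adj (w2 1) (u1 2) := by
          rw [k1]; exact (rung H1 (by omega)).symm
        rcases nbrW hdeg H2 (i := 1) (by omega) (by omega) adj with g | g | g
        · rwa [show (1:ℕ) - 1 = 0 by omega] at g
        · rw [← A0] at g
          exact absurd g (uNe H1 (by omega) (by omega) (by omega))
        · rw [show (1:ℕ) + 1 = 2 by omega, ← hc] at g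
          exact absurd g (uNe H1 (by omega) (by omega) (by omega))
      refine sub_false Hm2 H1 hne.symm ?_
      rintro v ⟨r, hr, rfl | rfl⟩
      · have : r = 0 ∨ r = 1 ∨ r = 2 := by omega
        rcases this with rfl | rfl | rfl
        · exact ⟨2, by omega, Or.inl k2.symm⟩
        · exact ⟨0, by omega, Or.inl A0.symm⟩
        · exact ⟨1, by omega, Or.inl hc.symm⟩
      · have : r = 0 ∨ r = 1 ∨ r = 2 := by omega
        rcases this with rfl | rfl | rfl
        · exact ⟨1, by omega, Or.inr W10.symm⟩
        · exact ⟨2, by omega, Or.inr k1⟩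
        · exact ⟨0, by omega, Or.inr V2.symm⟩
    · -- u1 1 ≠ u2 2 : blocked-extension analysis
      have hab : G.Adj (w2 1) (u2 2) := (crossR H2 (i := 1) (by omega)).symm
      have hbw : G.Adj (u2 2) (w1 0) := by
        rw [V2]; exact rung H2 (by omega)
      have hau : G.Adj (w2 1) (u1 0) := by
        rw [A0]; exact (rung H2 (by omega)).symm
      by_cases hu22 : u2 2 ∈ hgSet h1 u1 w1
      · rcases adjW0 H1 hu22 hbw with X | X | X | X
        · rw [A0] at X
          exact absurd X (uNe H2 (by omega) (by omega) (by omega))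
        · exact hc X.symm
        · -- u2 2 = u1 (h1-1)
          have trip := three_nbrs hdeg (v := u2 2) (a := w1 0) (b := w1 (h1 - 1))
            (c := w1 (h1 - 2))
            (wNe H1 (by omega) (by omega) (by omega))
            (wNe H1 (by omega) (by omega) (by omega))
            (wNe H1 (by omega) (by omega) (by omega))
            hbw
            (by rw [X]; exact rung H1 (by omega))
            (by rw [X]
                have := crossR H1 (i := h1 - 2) (by omega)
                rwa [show h1 - 2 + 1 = h1 - 1 by omega] at this)
            (x := w2 1) (crossR H2 (i := 1) (by omega))
          rcases trip with g | g | g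
          · rw [V2] at g
            exact absurd g (wNe H2 (by omega) (by omega) (by omega))
          · -- w2 1 = w1 (h1-1) : containment
            have t : u2 0 = u1 1 ∨ u2 0 = u1 2 := by
              have adj2 : G.Adj (w1 1) (u2 0) := by
                rw [W10]; exact (rung H2 (by omega)).symm
              rcases nbrW hdeg H1 (i := 1) (by omega) (by omega) adj2 with g2 | g2 | g2
              · rw [show (1:ℕ) - 1 = 0 by omega, A0] at g2
                exact absurd g2 (uNe H2 (by omega) (by omega) (by omega))
              · exact Or.inl g2
              · rw [show (1:ℕ) + 1 = 2 by omega] at g2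
                exact Or.inr g2
            refine sub_false Hm2 H1 hne.symm ?_
            rintro v ⟨r, hr, rfl | rfl⟩
            · have : r = 0 ∨ r = 1 ∨ r = 2 := by omega
              rcases this with rfl | rfl | rfl
              · rcases t with g2 | g2
                · exact ⟨1, by omega, Or.inl g2⟩
                · exact ⟨2, by omega, Or.inl g2⟩
              · exact ⟨0, by omega, Or.inl A0.symm⟩
              · exact ⟨h1 - 1, by omega, Or.inl X⟩
            · have : r = 0 ∨ r = 1 ∨ r = 2 := by omega
              rcases this with rfl | rfl | rfl
              · exact ⟨1, by omega, Or.inr W10.symm⟩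
              · exact ⟨h1 - 1, by omega, Or.inr g⟩
              · exact ⟨0, by omega, Or.inr V2.symm⟩
          · -- w2 1 = w1 (h1-2) : step3 double-swapped
            exact step3 hdeg (swap_max Hm1) (swap_max Hm2) hnesw bad
              (i := h1 - 2) (j := 1) (by omega) (by omega) (by omega) (by omega) g.symm
        · -- u2 2 = w1 (h1-1)
          have trip := three_nbrs hdeg (v := u2 2) (a := w1 0) (b := u1 (h1 - 1))
            (c := u1 (h1 - 2))
            (wuNe H1 (by omega) (by omega))
            (wuNe H1 (by omega) (by omega))
            (uNe H1 (by omega) (by omega) (by omega))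
            hbw
            (by rw [X]; exact (rung H1 (by omega)).symm)
            (by rw [X]
                have := crossL H1 (i := h1 - 2) (by omega)
                rw [show h1 - 2 + 1 = h1 - 1 by omega] at this
                exact this.symm)
            (x := w2 1) (crossR H2 (i := 1) (by omega))
          rcases trip with g | g | g
          · rw [V2] at g
            exact absurd g (wNe H2 (by omega) (by omega) (by omega))
          · -- w2 1 = u1 (h1-1)
            have t : u2 0 = u1 1 ∨ u2 0 = u1 2 := by
              have adj2 : G.Adj (w1 1) (u2 0) := by
                rw [W10]; exact (rung H2 (by omega)).symm
              rcases nbrW hdeg H1 (i := 1) (by omega) (by omega) adj2 with g2 | g2 | g2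
              · rw [show (1:ℕ) - 1 = 0 by omega, A0] at g2
                exact absurd g2 (uNe H2 (by omega) (by omega) (by omega))
              · exact Or.inl g2
              · rw [show (1:ℕ) + 1 = 2 by omega] at g2
                exact Or.inr g2
            have kadj : G.Adj (u2 0) (u1 (h1 - 1)) := by
              rw [← g]; exact crossL H2 (i := 0) (by omega)
            rcases t with g2 | g2
            · rw [g2] at kadj
              exact (midUU H1 (i := 1) (by omega) (by omega) (j := h1 - 1) (by omega)) kadj
            · rcases Nat.lt_or_ge 3 h1 with h14 | h14
              · rw [g2] at kadj
                exact (midUU H1 (i := 2) (by omega) (by omega) (j := h1 - 1) (by omega)) kadj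
              · -- h1 = 3 : u2 0 = u1 2 = u1 (h1-1) = w2 1
                have : u2 0 = w2 1 := by
                  rw [g2, show (2:ℕ) = h1 - 1 by omega, g]
                exact absurd this (uwNe H2 (by omega) (by omega))
          · -- w2 1 = u1 (h1-2) : step3 swap H2
            exact step3 hdeg Hm1 (swap_max Hm2) hnes2 bad
              (i := h1 - 2) (j := 1) (by omega) (by omega) (by omega) (by omega) g.symm
      · by_cases hw21 : w2 1 ∈ hgSet h1 u1 w1
        · rcases adjU0 H1 hw21 hau with X | X | X | X
          · rw [V2] at X
            exact absurd X (wNe H2 (by omega) (by omega) (by omega))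
          · rw [W10] at X
            exact absurd X (wNe H2 (by omega) (by omega) (by omega))
          · -- w2 1 = u1 (h1-1)
            have t1 : w1 (h1 - 1) = u2 0 := by
              have adj2 : G.Adj (w2 1) (w1 (h1 - 1)) := by
                rw [X]; exact rung H1 (by omega)
              rcases nbrW hdeg H2 (i := 1) (by omega) (by omega) adj2 with g | g | g
              · rwa [show (1:ℕ) - 1 = 0 by omega] at g
              · rw [← A0] at g
                exact absurd g.symm (uwNe H1 (by omega) (by omega))
              · rw [show (1:ℕ) + 1 = 2 by omega] at g
                exact absurd (⟨h1 - 1, by omega, Or.inr g.symm⟩ : u2 2 ∈ hgSet h1 u1 w1) hu22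
            have t2 : w1 (h1 - 2) = u2 0 := by
              have adj2 : G.Adj (w2 1) (w1 (h1 - 2)) := by
                rw [X]
                have := crossR H1 (i := h1 - 2) (by omega)
                rwa [show h1 - 2 + 1 = h1 - 1 by omega] at this
              rcases nbrW hdeg H2 (i := 1) (by omega) (by omega) adj2 with g | g | g
              · rwa [show (1:ℕ) - 1 = 0 by omega] at g
              · rw [← A0] at g
                exact absurd g.symm (uwNe H1 (by omega) (by omega))
              · rw [show (1:ℕ) + 1 = 2 by omega] at g
                exact absurd (⟨h1 - 2, by omega, Or.inr g.symm⟩ : u2 2 ∈ hgSet h1 u1 w1) hu22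
            exact absurd (t1.trans t2.symm) (wNe H1 (by omega) (by omega) (by omega))
          · -- w2 1 = w1 (h1-1)
            have t1 : u1 (h1 - 1) = u2 0 := by
              have adj2 : G.Adj (w2 1) (u1 (h1 - 1)) := by
                rw [X]; exact (rung H1 (by omega)).symm
              rcases nbrW hdeg H2 (i := 1) (by omega) (by omega) adj2 with g | g | g
              · rwa [show (1:ℕ) - 1 = 0 by omega] at g
              · rw [← A0] at g
                exact absurd g (uNe H1 (by omega) (by omega) (by omega))
              · rw [show (1:ℕ) + 1 = 2 by omega] at g
                exact absurd (⟨h1 - 1, by omega, Or.inl g.symm⟩ : u2 2 ∈ hgSet h1 u1 w1) hu22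
            have t2 : u1 (h1 - 2) = u2 0 := by
              have adj2 : G.Adj (w2 1) (u1 (h1 - 2)) := by
                rw [X]
                have := crossL H1 (i := h1 - 2) (by omega)
                rw [show h1 - 2 + 1 = h1 - 1 by omega] at this
                exact this.symm
              rcases nbrW hdeg H2 (i := 1) (by omega) (by omega) adj2 with g | g | g
              · rwa [show (1:ℕ) - 1 = 0 by omega] at g
              · rw [← A0] at g
                exact absurd g (uNe H1 (by omega) (by omega) (by omega))
              · rw [show (1:ℕ) + 1 = 2 by omega] at g
                exact absurd (⟨h1 - 2, by omega, Or.inl g.symm⟩ : u2 2 ∈ hgSet h1 u1 w1) hu22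
            exact absurd (t1.trans t2.symm) (uNe H1 (by omega) (by omega) (by omega))
        · exact extend_false hdeg Hm1 hab hbw hau hw21 hu22

/-- S2C : `u1 0 = u2 1`, `w1 1 = w2 0`. -/
theorem s2c (hdeg : ∀ v : V, G.degree v ≤ 3)
    (Hm1 : IsMaxHourglass G h1 u1 w1) (Hm2 : IsMaxHourglass G h2 u2 w2)
    (hne : hgSet h1 u1 w1 ≠ hgSet h2 u2 w2) (bad : ¬(h1 = h2 ∧ h2 ≤ 3))
    (h13 : 3 ≤ h1) (h23 : 3 ≤ h2)
    (A0 : u1 0 = u2 1) (W10 : w1 1 = w2 0) : False := by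
  have H1 := Hm1.1
  have H2 := Hm2.1
  have adj : G.Adj (u2 1) (w1 0) := by
    rw [← A0]; exact rung H1 (by omega)
  rcases nbrU hdeg H2 (i := 1) (by omega) (by omega) adj with e | e | e
  · rw [show (1:ℕ) - 1 = 0 by omega, ← W10] at e
    exact absurd e (wNe H1 (by omega) (by omega) (by omega))
  · exact s2ci hdeg Hm1 Hm2 hne bad h13 h23 A0 W10 e
  · rw [show (1:ℕ) + 1 = 2 by omega] at e
    exact s2cii hdeg Hm1 Hm2 hne bad h13 h23 A0 W10 e

/-- Corner of `H1` equals a middle `u`-vertex of `H2`. -/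
theorem s2core (hdeg : ∀ v : V, G.degree v ≤ 3)
    (Hm1 : IsMaxHourglass G h1 u1 w1) (Hm2 : IsMaxHourglass G h2 u2 w2)
    (hne : hgSet h1 u1 w1 ≠ hgSet h2 u2 w2) (bad : ¬(h1 = h2 ∧ h2 ≤ 3))
    (h13 : 3 ≤ h1) {j : ℕ} (hj1 : 1 ≤ j) (hj2 : j + 1 < h2)
    (A00 : u1 0 = u2 j) : False := by
  have H1 := Hm1.1
  have H2 := Hm2.1
  have hnesw : hgSet h1 w1 u1 ≠ hgSet h2 w2 u2 := by
    rw [show hgSet h1 w1 u1 = hgSet h1 u1 w1 from swap_hgSet,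
      show hgSet h2 w2 u2 = hgSet h2 u2 w2 from swap_hgSet]
    exact hne
  have adj : G.Adj (u2 j) (w1 1) := by
    rw [← A00]; exact crossL H1 (by omega)
  rcases nbrU hdeg H2 hj1 hj2 adj with e | e | e
  · rcases Nat.lt_or_ge 1 j with hj | hj
    · exact step3 hdeg (swap_max Hm1) (swap_max Hm2) hnesw bad (i := 1) (j := j - 1)
        (by omega) (by omega) (by omega) (by omega) e
    · have hjeq : j = 1 := by omega
      subst hjeq
      rw [show (1:ℕ) - 1 = 0 by omega] at e
      exact s2c hdeg Hm1 Hm2 hne bad h13 (by omega) A00 e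
  · exact step3 hdeg (swap_max Hm1) (swap_max Hm2) hnesw bad (i := 1) (j := j)
      (by omega) (by omega) hj1 hj2 e
  · rcases Nat.lt_or_ge (j + 2) h2 with hj | hj
    · exact step3 hdeg (swap_max Hm1) (swap_max Hm2) hnesw bad (i := 1) (j := j + 1)
        (by omega) (by omega) (by omega) (by omega) e
    · -- j = h2 - 2 : reversed H2
      refine s2c hdeg Hm1 (rev_max Hm2) (by rw [rev_hgSet]; exact hne) bad h13 (by omega)
        ?_ ?_
      · show u1 0 = u2 (h2 - 1 - 1)
        rw [show h2 - 1 - 1 = j by omega]; exact A00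
      · show w1 1 = w2 (h2 - 1 - 0)
        rw [show h2 - 1 - 0 = j + 1 by omega]; exact e

/-- h1 = 2, C-configuration. -/
theorem step2twoC (hdeg : ∀ v : V, G.degree v ≤ 3)
    (Hm1 : IsMaxHourglass G 2 u1 w1) (Hm2 : IsMaxHourglass G h2 u2 w2)
    (hne : hgSet 2 u1 w1 ≠ hgSet h2 u2 w2)
    {j : ℕ} (hj1 : 1 ≤ j) (hj2 : j + 1 < h2)
    (A0 : u1 0 = u2 j) (e0 : w1 0 = w2 j) (e1 : w1 1 = w2 (j + 1)) : False := by
  have H1 := Hm1.1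
  have H2 := Hm2.1
  have adj : G.Adj (w2 j) (u1 1) := by
    rw [← e0]; exact (crossR H1 (i := 0) (by omega)).symm
  rcases nbrW hdeg H2 hj1 hj2 adj with e | e | e
  · -- u1 1 = u2 (j-1) : kill
    have kill : G.Adj (u2 (j - 1)) (w2 (j + 1)) := by
      rw [← e, ← e1]; exact rung H1 (by omega)
    rcases Nat.lt_or_ge 1 j with hk | hk
    · have := midUW H2 (i := j - 1) (by omega) (by omega) (j := j + 1) (by omega) kill
      omega
    · have hjeq : j = 1 := by omega
      subst hjeq
      rcases Nat.lt_or_ge (1 + 2) h2 with hk2 | hk2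
      · have := midWU H2 (i := 2) (by omega) (by omega) (j := 0) (by omega) kill.symm
        omega
      · -- h2 = 3 : containment
        refine sub_false Hm1 H2 hne ?_
        rintro v ⟨r, hr, rfl | rfl⟩
        · have : r = 0 ∨ r = 1 := by omega
          rcases this with rfl | rfl
          · exact ⟨1, by omega, Or.inl A0⟩
          · exact ⟨0, by omega, Or.inl (by rw [show (0:ℕ) = 1 - 1 by omega]; exact e)⟩
        · have : r = 0 ∨ r = 1 := by omega
          rcases this with rfl | rfl
          · exact ⟨1, by omega, Or.inr e0⟩
          · exact ⟨2, by omega, Or.inr e1⟩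
  · rw [← A0] at e
    exact absurd e (uNe H1 (by omega) (by omega) (by omega))
  · -- u1 1 = u2 (j+1) : containment
    refine sub_false Hm1 H2 hne ?_
    rintro v ⟨r, hr, rfl | rfl⟩
    · have : r = 0 ∨ r = 1 := by omega
      rcases this with rfl | rfl
      · exact ⟨j, by omega, Or.inl A0⟩
      · exact ⟨j + 1, by omega, Or.inl e⟩
    · have : r = 0 ∨ r = 1 := by omega
      rcases this with rfl | rfl
      · exact ⟨j, by omega, Or.inr e0⟩
      · exact ⟨j + 1, by omega, Or.inr e1⟩

/-- h1 = 2, A-configuration with j = 1. -/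
theorem step2twoA1 (hdeg : ∀ v : V, G.degree v ≤ 3)
    (Hm1 : IsMaxHourglass G 2 u1 w1) (Hm2 : IsMaxHourglass G h2 u2 w2)
    (hne : hgSet 2 u1 w1 ≠ hgSet h2 u2 w2) (h23 : 3 ≤ h2)
    (A0 : u1 0 = u2 1) (e0 : w1 0 = w2 0) (e1 : w1 1 = w2 2) : False := by
  have H1 := Hm1.1
  have H2 := Hm2.1
  rcases Nat.lt_or_ge 3 h2 with h24 | h24
  · -- h2 ≥ 4
    have adj : G.Adj (w2 2) (u1 1) := by
      rw [← e1]; exact (rung H1 (by omega)).symm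
    have := nbrW hdeg H2 (i := 2) (by omega) (by omega) adj
    rw [show (2:ℕ) - 1 = 1 by omega, show (2:ℕ) + 1 = 3 by omega] at this
    rcases this with e | e | e
    · rw [← A0] at e
      exact absurd e (uNe H1 (by omega) (by omega) (by omega))
    · have kill : G.Adj (u2 2) (w2 0) := by
        rw [← e, ← e0]
        exact (crossR H1 (i := 0) (by omega)).symm.symm
      have := midUW H2 (i := 2) (by omega) (by omega) (j := 0) (by omega) kill
      omega
    · rcases Nat.lt_or_ge 4 h2 with h25 | h25
      · have kill : G.Adj (u2 3) (w2 0) := by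
          rw [← e, ← e0]
          exact crossR H1 (i := 0) (by omega)
        have := midUW H2 (i := 3) (by omega) (by omega) (j := 0) (by omega) kill
        omega
      · -- h2 = 4 : containment
        refine sub_false Hm1 H2 hne ?_
        rintro v ⟨r, hr, rfl | rfl⟩
        · have : r = 0 ∨ r = 1 := by omega
          rcases this with rfl | rfl
          · exact ⟨1, by omega, Or.inl A0⟩
          · exact ⟨3, by omega, Or.inl e⟩
        · have : r = 0 ∨ r = 1 := by omega
          rcases this with rfl | rfl
          · exact ⟨0, by omega, Or.inr e0⟩
          · exact ⟨2, by omega, Or.inr e1⟩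
  · -- h2 = 3
    by_cases hc1 : u1 1 = u2 0
    · refine sub_false Hm1 H2 hne ?_
      rintro v ⟨r, hr, rfl | rfl⟩
      · have : r = 0 ∨ r = 1 := by omega
        rcases this with rfl | rfl
        · exact ⟨1, by omega, Or.inl A0⟩
        · exact ⟨0, by omega, Or.inl hc1⟩
      · have : r = 0 ∨ r = 1 := by omega
        rcases this with rfl | rfl
        · exact ⟨0, by omega, Or.inr e0⟩
        · exact ⟨2, by omega, Or.inr e1⟩
    · by_cases hc2 : u1 1 = u2 2
      · refine sub_false Hm1 H2 hne ?_
        rintro v ⟨r, hr, rfl | rfl⟩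
        · have : r = 0 ∨ r = 1 := by omega
          rcases this with rfl | rfl
          · exact ⟨1, by omega, Or.inl A0⟩
          · exact ⟨2, by omega, Or.inl hc2⟩
        · have : r = 0 ∨ r = 1 := by omega
          rcases this with rfl | rfl
          · exact ⟨0, by omega, Or.inr e0⟩
          · exact ⟨2, by omega, Or.inr e1⟩
      · -- extension of H1 by (w2 1, u2 0)
        have ha : w2 1 ∉ hgSet 2 u1 w1 := by
          rintro ⟨r, hr, g | g⟩
          · have : r = 0 ∨ r = 1 := by omega
            rcases this with rfl | rfl
            · rw [A0] at g
              exact (uwNe H2 (by omega) (by omega)) g.symm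
            · -- w2 1 = u1 1 : then u1 1 adj w1 0 = w2 0 gives w2 1 adj w2 0
              have kadj : G.Adj (w2 1) (w2 0) := by
                rw [g, ← e0]
                exact crossR H1 (i := 0) (by omega)
              exact (midWW H2 (i := 1) (by omega) (by omega) (j := 0) (by omega)) kadj
          · have : r = 0 ∨ r = 1 := by omega
            rcases this with rfl | rfl
            · rw [e0] at g
              exact (wNe H2 (by omega) (by omega) (by omega)) g.symm
            · rw [e1] at g
              exact (wNe H2 (by omega) (by omega) (by omega)) g.symm
        have hb : u2 0 ∉ hgSet 2 u1 w1 := by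
          rintro ⟨r, hr, g | g⟩
          · have : r = 0 ∨ r = 1 := by omega
            rcases this with rfl | rfl
            · rw [A0] at g
              exact (uNe H2 (by omega) (by omega) (by omega)) g.symm
            · exact hc1 g.symm
          · have : r = 0 ∨ r = 1 := by omega
            rcases this with rfl | rfl
            · rw [e0] at g
              exact (uwNe H2 (by omega) (by omega)) g
            · rw [e1] at g
              exact (uwNe H2 (by omega) (by omega)) g
        refine extend_false hdeg Hm1 (a := w2 1) (b := u2 0)
          (crossL H2 (i := 0) (by omega)).symm ?_ ?_ ha hb
        · rw [e0]; exact rung H2 (by omega)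
        · rw [A0]; exact (rung H2 (by omega)).symm

/-- h1 = 2, A-configuration, general j. -/
theorem step2twoA (hdeg : ∀ v : V, G.degree v ≤ 3)
    (Hm1 : IsMaxHourglass G 2 u1 w1) (Hm2 : IsMaxHourglass G h2 u2 w2)
    (hne : hgSet 2 u1 w1 ≠ hgSet h2 u2 w2)
    {j : ℕ} (hj1 : 1 ≤ j) (hj2 : j + 1 < h2)
    (A0 : u1 0 = u2 j) (e0 : w1 0 = w2 (j - 1)) (e1 : w1 1 = w2 (j + 1)) : False := by
  have H1 := Hm1.1
  have H2 := Hm2.1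
  rcases Nat.lt_or_ge 1 j with hj | hj
  · rcases Nat.lt_or_ge (j + 2) h2 with hk | hk
    · -- both neighbours middle : contradiction
      have adj1 : G.Adj (w2 (j - 1)) (u1 1) := by
        rw [← e0]; exact (crossR H1 (i := 0) (by omega)).symm
      have adj2 : G.Adj (w2 (j + 1)) (u1 1) := by
        rw [← e1]; exact (rung H1 (by omega)).symm
      have t1 := nbrW hdeg H2 (i := j - 1) (by omega) (by omega) adj1
      have t2 := nbrW hdeg H2 (i := j + 1) (by omega) (by omega) adj2
      rw [show j - 1 - 1 = j - 2 by omega, show j - 1 + 1 = j by omega] at t1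
      rw [show j + 1 - 1 = j by omega, show j + 1 + 1 = j + 2 by omega] at t2
      have hne1 : u1 1 ≠ u2 j := by
        rw [← A0]; exact uNe H1 (by omega) (by omega) (by omega)
      rcases t1 with g1 | g1 | g1 <;> rcases t2 with g2 | g2 | g2 <;>
        first
          | exact hne1 g1
          | exact hne1 g2
          | (rw [g1] at g2; exact absurd g2 (uNe H2 (by omega) (by omega) (by omega)))
          | (rw [g2] at g1; exact absurd g1 (uNe H2 (by omega) (by omega) (by omega)))
    · -- j = h2 - 2 ≥ 2 : reverse H2, repair H1
      refine step2twoA1 hdeg (repair_max Hm1) (rev_max Hm2)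
        (by rw [repair_hgSet, rev_hgSet]; exact hne) (by omega) ?_ ?_ ?_
      · show u1 0 = u2 (h2 - 1 - 1)
        rw [show h2 - 1 - 1 = j by omega]; exact A0
      · show w1 (1 - 0) = w2 (h2 - 1 - 0)
        rw [show h2 - 1 - 0 = j + 1 by omega]; exact e1
      · show w1 (1 - 1) = w2 (h2 - 1 - 2)
        rw [show h2 - 1 - 2 = j - 1 by omega]; exact e0
  · have hjeq : j = 1 := by omega
    subst hjeq
    rw [show (1:ℕ) - 1 = 0 by omega] at e0
    exact step2twoA1 hdeg Hm1 Hm2 hne (by omega) A0 e0 e1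

/-- h1 = 2 case : corner of a height-2 hourglass equals a middle vertex of H2. -/
theorem step2two (hdeg : ∀ v : V, G.degree v ≤ 3)
    (Hm1 : IsMaxHourglass G 2 u1 w1) (Hm2 : IsMaxHourglass G h2 u2 w2)
    (hne : hgSet 2 u1 w1 ≠ hgSet h2 u2 w2)
    {j : ℕ} (hj1 : 1 ≤ j) (hj2 : j + 1 < h2)
    (A0 : u1 0 = u2 j) : False := by
  have H1 := Hm1.1
  have H2 := Hm2.1
  have hneP : hgSet 2 u1 (fun t => w1 (1 - t)) ≠ hgSet h2 u2 w2 := by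
    rw [repair_hgSet]; exact hne
  have hneR : hgSet 2 u1 w1 ≠ hgSet h2 (fun t => u2 (h2 - 1 - t)) (fun t => w2 (h2 - 1 - t)) := by
    rw [rev_hgSet]; exact hne
  have hnePR : hgSet 2 u1 (fun t => w1 (1 - t)) ≠
      hgSet h2 (fun t => u2 (h2 - 1 - t)) (fun t => w2 (h2 - 1 - t)) := by
    rw [repair_hgSet, rev_hgSet]; exact hne
  have adj0 : G.Adj (u2 j) (w1 0) := by
    rw [← A0]; exact rung H1 (by omega)
  have adj1 : G.Adj (u2 j) (w1 1) := by
    rw [← A0]; exact crossL H1 (by omega)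
  have t0 := nbrU hdeg H2 hj1 hj2 adj0
  have t1 := nbrU hdeg H2 hj1 hj2 adj1
  have hww : w1 0 ≠ w1 1 := wNe H1 (by omega) (by omega) (by omega)
  rcases t0 with e0 | e0 | e0 <;> rcases t1 with e1 | e1 | e1
  · rw [← e1] at e0; exact hww e0
  · -- (j-1, j) : C on repaired H1 + reversed H2
    refine step2twoC hdeg (repair_max Hm1) (rev_max Hm2) hnePR (j := h2 - 1 - j)
      (by omega) (by omega) ?_ ?_ ?_
    · show u1 0 = u2 (h2 - 1 - (h2 - 1 - j))
      rw [show h2 - 1 - (h2 - 1 - j) = j by omega]; exact A0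
    · show w1 (1 - 0) = w2 (h2 - 1 - (h2 - 1 - j))
      rw [show h2 - 1 - (h2 - 1 - j) = j by omega]; exact e1
    · show w1 (1 - 1) = w2 (h2 - 1 - (h2 - 1 - j + 1))
      rw [show h2 - 1 - (h2 - 1 - j + 1) = j - 1 by omega]; exact e0
  · -- (j-1, j+1) : A direct
    exact step2twoA hdeg Hm1 Hm2 hne hj1 hj2 A0 e0 e1
  · -- (j, j-1) : C on reversed H2
    refine step2twoC hdeg Hm1 (rev_max Hm2) hneR (j := h2 - 1 - j)
      (by omega) (by omega) ?_ ?_ ?_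
    · show u1 0 = u2 (h2 - 1 - (h2 - 1 - j))
      rw [show h2 - 1 - (h2 - 1 - j) = j by omega]; exact A0
    · show w1 0 = w2 (h2 - 1 - (h2 - 1 - j))
      rw [show h2 - 1 - (h2 - 1 - j) = j by omega]; exact e0
    · show w1 1 = w2 (h2 - 1 - (h2 - 1 - j + 1))
      rw [show h2 - 1 - (h2 - 1 - j + 1) = j - 1 by omega]; exact e1
  · rw [← e1] at e0; exact hww e0
  · -- (j, j+1) : C direct
    exact step2twoC hdeg Hm1 Hm2 hne hj1 hj2 A0 e0 e1
  · -- (j+1, j-1) : A on repaired H1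
    refine step2twoA hdeg (repair_max Hm1) Hm2 hneP hj1 hj2 A0 ?_ ?_
    · show w1 (1 - 0) = w2 (j - 1)
      exact e1
    · show w1 (1 - 1) = w2 (j + 1)
      exact e0
  · -- (j+1, j) : C on repaired H1
    refine step2twoC hdeg (repair_max Hm1) Hm2 hneP hj1 hj2 A0 ?_ ?_
    · show w1 (1 - 0) = w2 j
      exact e1
    · show w1 (1 - 1) = w2 (j + 1)
      exact e0
  · rw [← e1] at e0; exact hww e0

/-- A middle vertex of `H2` lying in `H1` yields `False`. -/
theorem hitmid (hdeg : ∀ v : V, G.degree v ≤ 3)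
    (Hm1 : IsMaxHourglass G h1 u1 w1) (Hm2 : IsMaxHourglass G h2 u2 w2)
    (hne : hgSet h1 u1 w1 ≠ hgSet h2 u2 w2) (bad : ¬(h1 = h2 ∧ h2 ≤ 3))
    {k : ℕ} (hk1 : 1 ≤ k) (hk2 : k + 1 < h2) (hy : u2 k ∈ hgSet h1 u1 w1) : False := by
  have H1 := Hm1.1
  have H2 := Hm2.1
  have h12 := hg2 H1
  have hnes1 : hgSet h1 w1 u1 ≠ hgSet h2 u2 w2 := by
    rw [show hgSet h1 w1 u1 = hgSet h1 u1 w1 from swap_hgSet]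
    exact hne
  rcases Nat.lt_or_ge 2 h1 with h13 | h13
  · -- h1 ≥ 3
    obtain ⟨i, hi, e | e⟩ := hy
    · by_cases hmid : 1 ≤ i ∧ i + 1 < h1
      · exact step3 hdeg Hm1 Hm2 hne bad hmid.1 hmid.2 hk1 hk2 e.symm
      · have : i = 0 ∨ i = h1 - 1 := by omega
        rcases this with rfl | rfl
        · exact s2core hdeg Hm1 Hm2 hne bad (by omega) hk1 hk2 e.symm
        · refine s2core hdeg (rev_max Hm1) Hm2 (by rw [rev_hgSet]; exact hne) bad
            (by omega) hk1 hk2 ?_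
          show u1 (h1 - 1 - 0) = u2 k
          exact e.symm
    · by_cases hmid : 1 ≤ i ∧ i + 1 < h1
      · exact step3 hdeg (swap_max Hm1) Hm2 hnes1 bad hmid.1 hmid.2 hk1 hk2 e.symm
      · have : i = 0 ∨ i = h1 - 1 := by omega
        rcases this with rfl | rfl
        · exact s2core hdeg (swap_max Hm1) Hm2 hnes1 bad (by omega) hk1 hk2 e.symm
        · refine s2core hdeg (rev_max (swap_max Hm1)) Hm2
            (by rw [rev_hgSet]; exact hnes1) bad (by omega) hk1 hk2 ?_
          show w1 (h1 - 1 - 0) = u2 k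
          exact e.symm
  · -- h1 = 2
    have h1eq : h1 = 2 := by omega
    subst h1eq
    obtain ⟨i, hi, e | e⟩ := hy
    · have : i = 0 ∨ i = 1 := by omega
      rcases this with rfl | rfl
      · exact step2two hdeg Hm1 Hm2 hne hk1 hk2 e.symm
      · refine step2two hdeg (rev_max Hm1) Hm2 (by rw [rev_hgSet]; exact hne) hk1 hk2 ?_
        show u1 (2 - 1 - 0) = u2 k
        exact e.symm
    · have : i = 0 ∨ i = 1 := by omega
      rcases this with rfl | rfl
      · exact step2two hdeg (swap_max Hm1) Hm2 hnes1 hk1 hk2 e.symm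
      · refine step2two hdeg (rev_max (swap_max Hm1)) Hm2
          (by rw [rev_hgSet]; exact hnes1) hk1 hk2 ?_
        show w1 (2 - 1 - 0) = u2 k
        exact e.symm

/-- Corner-corner contact `u1 0 = u2 0` with both second rows of `H2` outside `H1`. -/
theorem caseAcore (hdeg : ∀ v : V, G.degree v ≤ 3)
    (Hm1 : IsMaxHourglass G h1 u1 w1) (Hm2 : IsMaxHourglass G h2 u2 w2)
    (hne : hgSet h1 u1 w1 ≠ hgSet h2 u2 w2) (h23 : 3 ≤ h2)
    (hb1 : u2 1 ∉ hgSet h1 u1 w1) (hb2 : w2 1 ∉ hgSet h1 u1 w1)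
    (E : u1 0 = u2 0) : False := by
  have H1 := Hm1.1
  have H2 := Hm2.1
  have h12 := hg2 H1
  have trip := three_nbrs hdeg (v := u1 0) (a := w1 0) (b := w1 1) (c := w2 1)
    (wNe H1 (by omega) (by omega) (by omega))
    (fun q => hb2 ⟨0, by omega, Or.inr q.symm⟩)
    (fun q => hb2 ⟨1, by omega, Or.inr q.symm⟩)
    (rung H1 (by omega)) (crossL H1 (by omega))
    (by rw [E]; exact crossL H2 (by omega))
    (x := w2 0) (by rw [E]; exact rung H2 (by omega))
  rcases trip with g | g | g
  · -- w2 0 = w1 0 : extension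
    refine extend_false hdeg Hm1 (a := w2 1) (b := u2 1)
      (rung H2 (by omega)).symm ?_ ?_ hb2 hb1
    · rw [← g]; exact crossR H2 (by omega)
    · rw [E]; exact (crossL H2 (by omega)).symm
  · -- w2 0 = w1 1
    rcases Nat.lt_or_ge 2 h1 with h13 | h13
    · have adj : G.Adj (w1 1) (u2 1) := by
        rw [← g]; exact (crossR H2 (i := 0) (by omega)).symm
      rcases nbrW hdeg H1 (i := 1) (by omega) (by omega) adj with q | q | q
      · refine hb1 ⟨0, by omega, Or.inl ?_⟩
        rw [show (1:ℕ) - 1 = 0 by omega] at q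
        exact q
      · exact hb1 ⟨1, by omega, Or.inl q⟩
      · refine hb1 ⟨2, by omega, Or.inl ?_⟩
        rw [show (1:ℕ) + 1 = 2 by omega] at q
        exact q
    · -- h1 = 2 : extension of the re-paired hourglass
      have h1eq : h1 = 2 := by omega
      subst h1eq
      refine extend_false hdeg (repair_max Hm1) (a := w2 1) (b := u2 1)
        (rung H2 (by omega)).symm ?_ ?_ ?_ ?_
      · show G.Adj (u2 1) (w1 (1 - 0))
        have : G.Adj (u2 1) (w1 1) := by
          rw [← g]; exact crossR H2 (by omega)
        exact this
      · show G.Adj (w2 1) (u1 0)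
        rw [E]; exact (crossL H2 (by omega)).symm
      · show w2 1 ∉ hgSet 2 u1 fun t => w1 (1 - t)
        rw [repair_hgSet]; exact hb2
      · show u2 1 ∉ hgSet 2 u1 fun t => w1 (1 - t)
        rw [repair_hgSet]; exact hb1
  · exact absurd g (wNe H2 (by omega) (by omega) (by omega))

/-- A corner of `H2` lying in `H1` yields `False`. -/
theorem caseA (hdeg : ∀ v : V, G.degree v ≤ 3)
    (Hm1 : IsMaxHourglass G h1 u1 w1) (Hm2 : IsMaxHourglass G h2 u2 w2)
    (hne : hgSet h1 u1 w1 ≠ hgSet h2 u2 w2) (bad : ¬(h1 = h2 ∧ h2 ≤ 3))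
    (h23 : 3 ≤ h2) (hx : u2 0 ∈ hgSet h1 u1 w1) : False := by
  have H1 := Hm1.1
  have H2 := Hm2.1
  have h12 := hg2 H1
  by_cases hb1 : u2 1 ∈ hgSet h1 u1 w1
  · exact hitmid hdeg Hm1 Hm2 hne bad (by omega) (by omega) hb1
  · by_cases hb2 : w2 1 ∈ hgSet h1 u1 w1
    · refine hitmid hdeg Hm1 (swap_max Hm2)
        (by rw [show hgSet h2 w2 u2 = hgSet h2 u2 w2 from swap_hgSet]; exact hne)
        (fun q => bad q) (k := 1) (by omega) (by omega) hb2
    · obtain ⟨i, hi, e | e⟩ := hx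
      · by_cases hmid : 1 ≤ i ∧ i + 1 < h1
        · have adj : G.Adj (u1 i) (w2 1) := by
            rw [← e]; exact crossL H2 (by omega)
          rcases nbrU hdeg H1 hmid.1 hmid.2 adj with q | q | q
          · exact hb2 ⟨i - 1, by omega, Or.inr q⟩
          · exact hb2 ⟨i, by omega, Or.inr q⟩
          · exact hb2 ⟨i + 1, by omega, Or.inr q⟩
        · have : i = 0 ∨ i = h1 - 1 := by omega
          rcases this with rfl | rfl
          · exact caseAcore hdeg Hm1 Hm2 hne h23 hb1 hb2 e.symm
          · refine caseAcore hdeg (rev_max Hm1) Hm2 (by rw [rev_hgSet]; exact hne) h23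
              (by rw [rev_hgSet]; exact hb1) (by rw [rev_hgSet]; exact hb2) ?_
            show u1 (h1 - 1 - 0) = u2 0
            exact e.symm
      · by_cases hmid : 1 ≤ i ∧ i + 1 < h1
        · have adj : G.Adj (w1 i) (w2 1) := by
            rw [← e]; exact crossL H2 (by omega)
          rcases nbrW hdeg H1 hmid.1 hmid.2 adj with q | q | q
          · exact hb2 ⟨i - 1, by omega, Or.inl q⟩
          · exact hb2 ⟨i, by omega, Or.inl q⟩
          · exact hb2 ⟨i + 1, by omega, Or.inl q⟩
        · have hnes1 : hgSet h1 w1 u1 ≠ hgSet h2 u2 w2 := by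
            rw [show hgSet h1 w1 u1 = hgSet h1 u1 w1 from swap_hgSet]
            exact hne
          have hb1' : u2 1 ∉ hgSet h1 w1 u1 := by
            rw [show hgSet h1 w1 u1 = hgSet h1 u1 w1 from swap_hgSet]
            exact hb1
          have hb2' : w2 1 ∉ hgSet h1 w1 u1 := by
            rw [show hgSet h1 w1 u1 = hgSet h1 u1 w1 from swap_hgSet]
            exact hb2
          have : i = 0 ∨ i = h1 - 1 := by omega
          rcases this with rfl | rfl
          · exact caseAcore hdeg (swap_max Hm1) Hm2 hnes1 h23 hb1' hb2' e.symm
          · refine caseAcore hdeg (rev_max (swap_max Hm1)) Hm2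
              (by rw [rev_hgSet]; exact hnes1) h23
              (by rw [rev_hgSet]; exact hb1') (by rw [rev_hgSet]; exact hb2') ?_
            show w1 (h1 - 1 - 0) = u2 0
            exact e.symm

/-- Main lemma. -/
theorem mainlem (hdeg : ∀ v : V, G.degree v ≤ 3)
    (Hm1 : IsMaxHourglass G h1 u1 w1) (Hm2 : IsMaxHourglass G h2 u2 w2)
    (hne : hgSet h1 u1 w1 ≠ hgSet h2 u2 w2) (bad : ¬(h1 = h2 ∧ h2 ≤ 3))
    (h23 : 3 ≤ h2)
    (hInter : (hgSet h1 u1 w1 ∩ hgSet h2 u2 w2).Nonempty) : False := by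
  obtain ⟨x, hx1, hx2⟩ := hInter
  have hnes2 : hgSet h1 u1 w1 ≠ hgSet h2 w2 u2 := by
    rw [show hgSet h2 w2 u2 = hgSet h2 u2 w2 from swap_hgSet]
    exact hne
  obtain ⟨j, hj, e | e⟩ := hx2
  · rw [e] at hx1
    by_cases hmid : 1 ≤ j ∧ j + 1 < h2
    · exact hitmid hdeg Hm1 Hm2 hne bad hmid.1 hmid.2 hx1
    · have : j = 0 ∨ j = h2 - 1 := by omega
      rcases this with rfl | rfl
      · exact caseA hdeg Hm1 Hm2 hne bad h23 hx1
      · refine caseA hdeg Hm1 (rev_max Hm2) (by rw [rev_hgSet]; exact hne) bad h23 ?_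
        show u2 (h2 - 1 - 0) ∈ hgSet h1 u1 w1
        exact hx1
  · rw [e] at hx1
    by_cases hmid : 1 ≤ j ∧ j + 1 < h2
    · exact hitmid hdeg Hm1 (swap_max Hm2) hnes2 bad hmid.1 hmid.2 hx1
    · have : j = 0 ∨ j = h2 - 1 := by omega
      rcases this with rfl | rfl
      · exact caseA hdeg Hm1 (swap_max Hm2) hnes2 bad h23 hx1
      · refine caseA hdeg Hm1 (rev_max (swap_max Hm2)) (by rw [rev_hgSet]; exact hnes2)
          bad h23 ?_
        show w2 (h2 - 1 - 0) ∈ hgSet h1 u1 w1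
        exact hx1


end HGaux

open HGaux in
/-- overlapping distinct maximal hourglasses in a graph of maximum
degree three have equal height, which is two or three. -/
theorem stmt_13 {V : Type*} [Fintype V] (G : SimpleGraph V) [DecidableRel G.Adj]
    (hdeg : ∀ v : V, G.degree v ≤ 3)
    (h₁ h₂ : ℕ) (u₁ w₁ u₂ w₂ : ℕ → V)
    (hH₁ : IsMaxHourglass G h₁ u₁ w₁) (hH₂ : IsMaxHourglass G h₂ u₂ w₂)
    (hne : hgSet h₁ u₁ w₁ ≠ hgSet h₂ u₂ w₂)
    (hInter : (hgSet h₁ u₁ w₁ ∩ hgSet h₂ u₂ w₂).Nonempty) :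
    (h₁ = 2 ∧ h₂ = 2) ∨ (h₁ = 3 ∧ h₂ = 3) := by
  by_contra hcon
  have g1 := hg2 hH₁.1
  have g2 := hg2 hH₂.1
  have bad : ¬(h₁ = h₂ ∧ h₂ ≤ 3) := by
    rintro ⟨e, le⟩
    rcases Nat.lt_or_ge h₂ 3 with hh | hh
    · exact hcon (Or.inl ⟨by omega, by omega⟩)
    · exact hcon (Or.inr ⟨by omega, by omega⟩)
  rcases Nat.lt_or_ge h₂ 3 with hh | hh
  · -- h₂ = 2, so h₁ ≥ 3 : swap the roles
    have bad' : ¬(h₂ = h₁ ∧ h₁ ≤ 3) := by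
      rintro ⟨e, le⟩
      exact bad ⟨e.symm, by omega⟩
    have h13 : 3 ≤ h₁ := by
      rcases Nat.lt_or_ge h₁ 3 with hl | hl
      · exact absurd ⟨by omega, by omega⟩ bad
      · exact hl
    refine mainlem hdeg hH₂ hH₁ hne.symm bad' h13 ?_
    obtain ⟨x, hx1, hx2⟩ := hInter
    exact ⟨x, hx2, hx1⟩
  · exact mainlem hdeg hH₁ hH₂ hne bad hh hInter
end
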